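/- arXiv:2407.10306 — 7 statements merged into one kernel-verified Lean document; each statement's English description precedes it below -/
import Mathlib

section
/- Let x_1,...,x_N : [0,∞) → ℝ^d be a solution of the first-order cooperative system with communication failures (fixed scaling). Then the function γ_max(t) := max_{i ∈ {1,...,N}} |x_i(t)| is non-increasing on [0,∞). -/
/-!
Project the positions onto a direction `v`: the scalars `⟪v, x i t⟫` solve a cooperative system
with the same nonnegative weights. An agent whose projection is largest at time `τ` is pulled
only towards agents that are not ahead of it, so, the weights being locally bounded and the
positions continuous, its projected velocity is at most `o(1)` just after `τ`. Hence the largest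
projection has nonpositive upper right Dini derivative and does not increase. Taking `v = x i t`
turns this into `‖x i t‖ ≤ maxⱼ ‖x j s‖` for `s ≤ t`.
-/

open MeasureTheory Set Filter Topology
open scoped RealInnerProductSpace

theorem antitoneOn_Ici_of_eventually_le_add_mul {f : ℝ → ℝ} {t₀ : ℝ}
    (hf : ContinuousOn f (Ici t₀))
    (h : ∀ τ ≥ t₀, ∀ r > 0, ∀ᶠ z in 𝓝[>] τ, f z ≤ f τ + r * (z - τ)) :
    AntitoneOn f (Ici t₀) := by
  intro s hs t _ hst
  refine image_le_of_liminf_slope_right_le_deriv_boundary (B := fun _ => f s) (B' := 0)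
    (hf.mono fun u hu => hs.trans hu.1) le_rfl continuousOn_const
    (fun _ _ => hasDerivWithinAt_const _ _ _)
    (fun τ hτ r (hr : 0 < r) => ?_) ⟨hst, le_rfl⟩
  refine Eventually.frequently ?_
  filter_upwards [h τ (hs.trans hτ.1) (r / 2) (half_pos hr), self_mem_nhdsWithin]
    with z hz hτz
  rw [slope_def_field, div_lt_iff₀ (sub_pos.2 hτz)]
  nlinarith [sub_pos.2 (mem_Ioi.1 hτz)]

section Cooperative

variable {ι E F : Type*} [Fintype ι] [NormedAddCommGroup E] [NormedSpace ℝ E]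
  [NormedAddCommGroup F] [InnerProductSpace ℝ F] [CompleteSpace F]

def cooperativeField (a : ι → ι → ℝ → ℝ) (x : ι → ℝ → E) (i : ι) (t : ℝ) : E :=
  ∑ j, a i j t • (x j t - x i t)

structure IsCooperativeSolution (a : ι → ι → ℝ → ℝ) (x : ι → ℝ → E) : Prop where
  continuousOn : ∀ i, ContinuousOn (x i) (Ici 0)
  weight_nonneg : ∀ i j t, 0 ≤ t → 0 ≤ a i j t
  weight_bddAbove : ∀ i j T, ∃ A, ∀ t ∈ Icc 0 T, a i j t ≤ A
  weight_intervalIntegrable : ∀ i j T, 0 ≤ T → IntervalIntegrable (a i j) volume 0 T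
  eq_add_integral : ∀ i t, 0 ≤ t → x i t = x i 0 + ∫ s in (0)..t, cooperativeField a x i s

namespace IsCooperativeSolution

variable {a : ι → ι → ℝ → ℝ}

theorem intervalIntegrable_field {x : ι → ℝ → E} (hx : IsCooperativeSolution a x) (i : ι)
    {t₁ t₂ : ℝ} (h₁ : 0 ≤ t₁) (h₂ : 0 ≤ t₂) :
    IntervalIntegrable (cooperativeField a x i) volume t₁ t₂ := by
  have h₀ : ∀ T, 0 ≤ T → IntervalIntegrable (cooperativeField a x i) volume 0 T := by
    intro T hT
    have hsub : uIcc 0 T ⊆ Ici 0 := by rw [uIcc_of_le hT]; exact Icc_subset_Ici_self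
    rw [show cooperativeField a x i = ∑ j, fun t => a i j t • (x j t - x i t) from
      funext fun t => by simp [cooperativeField]]
    exact IntervalIntegrable.sum Finset.univ fun j _ =>
      (hx.weight_intervalIntegrable i j T hT).smul_continuousOn
        (((hx.continuousOn j).sub (hx.continuousOn i)).mono hsub)
  exact (h₀ t₁ h₁).symm.trans (h₀ t₂ h₂)

theorem sub_eq_integral {x : ι → ℝ → E} (hx : IsCooperativeSolution a x) (i : ι)
    {t₁ t₂ : ℝ} (h₁ : 0 ≤ t₁) (h₂ : 0 ≤ t₂) :
    x i t₂ - x i t₁ = ∫ s in t₁..t₂, cooperativeField a x i s := by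
  rw [hx.eq_add_integral i t₂ h₂, hx.eq_add_integral i t₁ h₁, add_sub_add_left_eq_sub,
    intervalIntegral.integral_interval_sub_left (hx.intervalIntegrable_field i le_rfl h₂)
      (hx.intervalIntegrable_field i le_rfl h₁)]

theorem eventually_le_add_mul_of_forall_le {y : ι → ℝ → ℝ} (hy : IsCooperativeSolution a y)
    {τ : ℝ} (hτ : 0 ≤ τ) {i : ι} (hi : ∀ j, y j τ ≤ y i τ) {r : ℝ} (hr : 0 < r) :
    ∀ᶠ z in 𝓝[>] τ, y i z ≤ y i τ + r * (z - τ) := by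
  choose A hA using fun j => hy.weight_bddAbove i j (τ + 1)
  set bound : ℝ → ℝ := fun u => ∑ j, A j * max (y j u - y i u) 0
  have hbound_cont : ContinuousOn bound (Ici 0) := by
    have := hy.continuousOn
    fun_prop
  have hbound_τ : bound τ = 0 :=
    Finset.sum_eq_zero fun j _ => by simp [max_eq_right (sub_nonpos.2 (hi j))]
  have hfield_le : ∀ u ∈ Icc τ (τ + 1), cooperativeField a y i u ≤ bound u := fun u hu =>
    Finset.sum_le_sum fun j _ => calc
      a i j u • (y j u - y i u) ≤ a i j u * max (y j u - y i u) 0 :=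
        mul_le_mul_of_nonneg_left (le_max_left _ _) (hy.weight_nonneg i j u (hτ.trans hu.1))
      _ ≤ A j * max (y j u - y i u) 0 :=
        mul_le_mul_of_nonneg_right (hA j u ⟨hτ.trans hu.1, hu.2⟩) (le_max_right _ _)
  have hsmall : ∀ᶠ u in 𝓝[≥] τ, u ≤ τ + 1 ∧ bound u < r := by
    refine ((eventually_le_nhds (lt_add_one τ)).filter_mono nhdsWithin_le_nhds).and ?_
    have := ((hbound_cont τ hτ).mono (Ici_subset_Ici.2 hτ)).tendsto
    rw [hbound_τ] at this
    exact this.eventually_lt_const hr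
  obtain ⟨b, hτb, hb⟩ := mem_nhdsGE_iff_exists_Ico_subset.1 hsmall
  filter_upwards [Ioo_mem_nhdsGT hτb] with z hz
  have hz₀ : 0 ≤ z := hτ.trans hz.1.le
  calc y i z = y i τ + ∫ u in τ..z, cooperativeField a y i u := by
        rw [← hy.sub_eq_integral i hτ hz₀]; ring
    _ ≤ y i τ + ∫ _ in τ..z, r := by
        gcongr
        refine intervalIntegral.integral_mono_on hz.1.le (hy.intervalIntegrable_field i hτ hz₀)
          intervalIntegrable_const fun u hu => ?_
        obtain ⟨hu₁, hu₂⟩ := hb ⟨hu.1, hu.2.trans_lt hz.2⟩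
        exact (hfield_le u ⟨hu.1, hu₁⟩).trans hu₂.le
    _ = y i τ + r * (z - τ) := by simp [mul_comm]

theorem antitoneOn_iSup [Nonempty ι] {y : ι → ℝ → ℝ} (hy : IsCooperativeSolution a y) :
    AntitoneOn (fun t => ⨆ i, y i t) (Ici 0) := by
  have hle : ∀ t i, y i t ≤ ⨆ j, y j t := fun t i =>
    le_ciSup (f := fun j => y j t) (Finite.bddAbove_range _) i
  refine antitoneOn_Ici_of_eventually_le_add_mul ?_ fun τ hτ r hr => ?_
  · simp_rw [← Finset.sup'_univ_eq_ciSup]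
    exact ContinuousOn.finset_sup'_apply _ fun i _ => hy.continuousOn i
  have hi : ∀ i, ∀ᶠ z in 𝓝[>] τ, y i z ≤ (⨆ j, y j τ) + r * (z - τ) := by
    intro i
    rcases (hle τ i).lt_or_eq with hlt | heq
    · have hcont : ContinuousWithinAt (y i) (Ioi τ) τ :=
        (hy.continuousOn i τ hτ).mono fun z hz => hτ.trans (le_of_lt hz)
      filter_upwards [hcont.tendsto.eventually_lt_const hlt, self_mem_nhdsWithin] with z hz hτz
      nlinarith [sub_pos.2 (mem_Ioi.1 hτz)]
    · rw [← heq]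
      exact hy.eventually_le_add_mul_of_forall_le hτ (fun j => heq ▸ hle τ j) hr
  filter_upwards [eventually_all.2 hi] with z hz using ciSup_le hz

theorem inner {x : ι → ℝ → F} (hx : IsCooperativeSolution a x) (v : F) :
    IsCooperativeSolution a fun i t => ⟪v, x i t⟫ where
  continuousOn i := continuousOn_const.inner (hx.continuousOn i)
  weight_nonneg := hx.weight_nonneg
  weight_bddAbove := hx.weight_bddAbove
  weight_intervalIntegrable := hx.weight_intervalIntegrable
  eq_add_integral i t ht := by
    have hfield : ∀ s, cooperativeField a (fun i t => ⟪v, x i t⟫) i s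
        = innerSL ℝ v (cooperativeField a x i s) := fun s => by
      simp [cooperativeField, inner_sub_right]
    simp_rw [hfield, (innerSL ℝ v).intervalIntegral_comp_comm
      (hx.intervalIntegrable_field i le_rfl ht), innerSL_apply_apply,
      ← inner_add_right, ← hx.eq_add_integral i t ht]

theorem antitoneOn_iSup_norm {x : ι → ℝ → F} (hx : IsCooperativeSolution a x) :
    AntitoneOn (fun t => ⨆ i, ‖x i t‖) (Ici 0) := by
  intro s hs t ht hst
  set γ := ⨆ j, ‖x j s‖
  have hγ : 0 ≤ γ := Real.iSup_nonneg fun j => norm_nonneg (x j s)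
  refine Real.iSup_le (fun i => ?_) hγ
  have : Nonempty ι := ⟨i⟩
  have hsq : ‖x i t‖ ^ 2 ≤ ‖x i t‖ * γ := calc
    ‖x i t‖ ^ 2 = ⟪x i t, x i t⟫ := (real_inner_self_eq_norm_sq _).symm
    _ ≤ ⨆ j, ⟪x i t, x j t⟫ :=
        le_ciSup (f := fun j => ⟪x i t, x j t⟫) (Finite.bddAbove_range _) i
    _ ≤ ⨆ j, ⟪x i t, x j s⟫ := (hx.inner (x i t)).antitoneOn_iSup hs ht hst
    _ ≤ ‖x i t‖ * γ := ciSup_le fun j => (real_inner_le_norm _ _).trans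
        (mul_le_mul_of_nonneg_left
          (le_ciSup (f := fun j => ‖x j s‖) (Finite.bddAbove_range _) j) (norm_nonneg _))
  nlinarith [norm_nonneg (x i t)]

end IsCooperativeSolution

end Cooperative

theorem exists_bound_mul_of_continuousOn {m c : ℝ → ℝ} (hm : ∀ t, 0 ≤ t → |m t| ≤ 1)
    (hc : ContinuousOn c (Ici 0)) (T : ℝ) : ∃ A, ∀ t ∈ Icc 0 T, m t * c t ≤ A := by
  obtain ⟨C, hC⟩ := isCompact_Icc.exists_bound_of_continuousOn (hc.mono Icc_subset_Ici_self)
  refine ⟨C, fun t ht => ?_⟩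
  calc m t * c t ≤ |m t| * |c t| := (le_abs_self _).trans (abs_mul _ _).le
    _ ≤ 1 * C := mul_le_mul (hm t ht.1) (hC t ht) (abs_nonneg _) zero_le_one
    _ = C := one_mul C

theorem intervalIntegrable_mul_of_continuousOn {m c : ℝ → ℝ} (hm_meas : Measurable m)
    (hm : ∀ t, 0 ≤ t → |m t| ≤ 1) (hc : ContinuousOn c (Ici 0)) {T : ℝ} (hT : 0 ≤ T) :
    IntervalIntegrable (fun t => m t * c t) volume 0 T := by
  have hm_int : IntervalIntegrable m volume 0 T := by
    rw [intervalIntegrable_iff_integrableOn_Icc_of_le hT]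
    refine Measure.integrableOn_of_bounded measure_Icc_lt_top.ne hm_meas.aestronglyMeasurable
      ((ae_restrict_iff' measurableSet_Icc).2 (Eventually.of_forall fun t ht => hm t ht.1))
  exact hm_int.mul_continuousOn (hc.mono (by rw [uIcc_of_le hT]; exact Icc_subset_Ici_self))

theorem gammaMax_antitone_general
    (d N : ℕ)
    (φ : ℝ → ℝ)
    (hφ_lip : ∃ K : NNReal, LipschitzOnWith K φ (Ici 0))
    (hφ_pos : ∀ r : ℝ, 0 ≤ r → 0 < φ r)
    (M : Fin N → Fin N → ℝ → ℝ)
    (hM_meas : ∀ i j, Measurable (M i j))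
    (hM_range : ∀ i j, ∀ t : ℝ, 0 ≤ t → M i j t ∈ Icc (0:ℝ) 1)
    (x : Fin N → ℝ → EuclideanSpace ℝ (Fin d))
    (hx_cont : ∀ i, ContinuousOn (x i) (Ici 0))
    (hx_sol : ∀ i, ∀ t : ℝ, 0 ≤ t → x i t = x i 0 +
      ∫ s in (0:ℝ)..t,
        (N : ℝ)⁻¹ • ∑ j, (M i j s * φ ‖x i s - x j s‖) • (x j s - x i s)) :
    AntitoneOn (fun t : ℝ => ⨆ i, ‖x i t‖) (Ici 0) := by
  obtain ⟨K, hK⟩ := hφ_lip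
  have hM_abs : ∀ i j t, 0 ≤ t → |M i j t| ≤ 1 := fun i j t ht =>
    abs_le.2 ⟨by linarith [(hM_range i j t ht).1], (hM_range i j t ht).2⟩
  have hrate : ∀ i j, ContinuousOn (fun t => φ ‖x i t - x j t‖) (Ici 0) := fun i j =>
    hK.continuousOn.comp ((hx_cont i).sub (hx_cont j)).norm fun _ _ => norm_nonneg _
  have hN_inv : (0 : ℝ) ≤ (N : ℝ)⁻¹ := inv_nonneg.2 N.cast_nonneg
  refine IsCooperativeSolution.antitoneOn_iSup_norm
    (a := fun i j t => (N : ℝ)⁻¹ * (M i j t * φ ‖x i t - x j t‖)) ⟨hx_cont, ?_, ?_, ?_, ?_⟩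
  · exact fun i j t ht => mul_nonneg hN_inv
      (mul_nonneg (hM_range i j t ht).1 (hφ_pos _ (norm_nonneg _)).le)
  · intro i j T
    obtain ⟨A, hA⟩ := exists_bound_mul_of_continuousOn (hM_abs i j) (hrate i j) T
    exact ⟨(N : ℝ)⁻¹ * A, fun t ht => mul_le_mul_of_nonneg_left (hA t ht) hN_inv⟩
  · exact fun i j T hT => (intervalIntegrable_mul_of_continuousOn (hM_meas i j) (hM_abs i j)
      (hrate i j) hT).const_mul _
  · intro i t ht
    simpa only [cooperativeField, Finset.smul_sum, smul_smul] using hx_sol i t ht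

/-- Along a solution of the first-order cooperative system
with communication failures (fixed scaling), the function
`γ_max(t) = max_i ‖x i t‖` is non-increasing on `[0, ∞)`. -/
theorem gammaMax_antitone
    (d N : ℕ) (hN : 2 ≤ N)
    (φ : ℝ → ℝ)
    (hφ_lip : ∃ K : NNReal, LipschitzOnWith K φ (Ici 0))
    (hφ_pos : ∀ r : ℝ, 0 ≤ r → 0 < φ r)
    (M : Fin N → Fin N → ℝ → ℝ)
    (hM_meas : ∀ i j, Measurable (M i j))
    (hM_range : ∀ i j, ∀ t : ℝ, 0 ≤ t → M i j t ∈ Icc (0:ℝ) 1)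
    (x : Fin N → ℝ → EuclideanSpace ℝ (Fin d))
    (hx_cont : ∀ i, ContinuousOn (x i) (Ici 0))
    (hx_sol : ∀ i, ∀ t : ℝ, 0 ≤ t → x i t = x i 0 +
      ∫ s in (0:ℝ)..t,
        (N : ℝ)⁻¹ • ∑ j, (M i j s * φ ‖x i s - x j s‖) • (x j s - x i s)) :
    AntitoneOn (fun t : ℝ => ⨆ i, ‖x i t‖) (Ici 0) :=
  gammaMax_antitone_general d N φ hφ_lip hφ_pos M hM_meas hM_range x hx_cont hx_sol
end

section
/- Let x_1,...,x_N : [0,∞) → ℝ^d be a solution of the first-order cooperative system with communication failures (fixed scaling). Then the diameter D(t) := max_{i,j ∈ {1,...,N}} |x_i(t) − x_j(t)| is non-increasing on [0,∞). -/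
/-!
Fix a direction `ℓ`. The projections `gᵢ = ⟪ℓ, xᵢ⟫` solve the scalar consensus system
`gᵢ' = Σⱼ wᵢⱼ (gⱼ - gᵢ)` with weights `0 ≤ wᵢⱼ ≤ C` on compact time intervals. While an agent
is above the initial maximum `A`, its velocity is at most `C` times the total excess
`V = Σᵢ (gᵢ - A)⁺`, so `V(t) ≤ C |ι| ∫ V` and `V ≡ 0` by Grönwall: every half-space containing
the configuration at time `s` still contains it later. Testing with `ℓ = xᵢ(t) - xⱼ(t)` then
bounds `‖xᵢ(t) - xⱼ(t)‖` by a distance between two agents at time `s`.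
-/

open MeasureTheory Set Filter Topology intervalIntegral

open scoped RealInnerProductSpace

theorem ContinuousOn.hasDerivWithinAt_integral_Ici {f : ℝ → ℝ} {a b x : ℝ}
    (hf : ContinuousOn f (Icc a b)) (hx : x ∈ Ico a b) :
    HasDerivWithinAt (fun u => ∫ v in a..u, f v) (f x) (Ici x) x := by
  have hmem : Icc a b ∈ 𝓝[>] x :=
    mem_of_superset (Ioo_mem_nhdsGT hx.2) (Ioo_subset_Icc_self.trans (Icc_subset_Icc_left hx.1))
  exact integral_hasDerivWithinAt_right (t := Ioi x)
    ((hf.mono (Icc_subset_Icc_right hx.2.le)).intervalIntegrable_of_Icc hx.1)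
    ⟨_, hmem, hf.aestronglyMeasurable measurableSet_Icc⟩
    ((hf x (Ico_subset_Icc_self hx)).mono_of_mem_nhdsWithin hmem)

theorem eq_zero_of_le_mul_integral {f : ℝ → ℝ} {K a b : ℝ} (hf : ContinuousOn f (Icc a b))
    (hf0 : ∀ t ∈ Icc a b, 0 ≤ f t) (hle : ∀ t ∈ Icc a b, f t ≤ K * ∫ u in a..t, f u) :
    ∀ t ∈ Icc a b, f t = 0 := by
  intro t ht
  have hab : a ≤ b := ht.1.trans ht.2
  have hF0 : ∀ u ∈ Icc a b, 0 ≤ ∫ v in a..u, f v := fun u hu =>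
    integral_nonneg hu.1 fun v hv => hf0 v ⟨hv.1, hv.2.trans hu.2⟩
  have hF : ∀ u ∈ Icc a b, ∫ v in a..u, f v = 0 := by
    refine eq_zero_of_abs_deriv_le_mul_abs_self_of_eq_zero_right (f' := f) (K := K) ?_
      (fun u hu => hf.hasDerivWithinAt_integral_Ici hu) integral_same fun u hu => ?_
    · exact (continuousOn_primitive_interval' (hf.intervalIntegrable_of_Icc hab)
        left_mem_uIcc).mono Icc_subset_uIcc
    · have hu' := Ico_subset_Icc_self hu
      rw [Real.norm_eq_abs, Real.norm_eq_abs, abs_of_nonneg (hf0 u hu'), abs_of_nonneg (hF0 u hu')]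
      exact hle u hu'
  exact le_antisymm (by simpa [hF t ht] using hle t ht) (hf0 t ht)

theorem IntervalIntegrable.continuousOn_Icc_of_eq_add_integral {g h : ℝ → ℝ} {s t : ℝ}
    (hh : IntervalIntegrable h volume s t) (hg : ∀ u ∈ Icc s t, g u = g s + ∫ σ in s..u, h σ) :
    ContinuousOn g (Icc s t) :=
  (continuousOn_const.add ((continuousOn_primitive_interval' hh left_mem_uIcc).mono
    Icc_subset_uIcc)).congr hg

theorem sub_le_integral_of_le_on_gt {g h k : ℝ → ℝ} {s t A : ℝ} (hst : s ≤ t)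
    (hh : IntervalIntegrable h volume s t) (hk : IntervalIntegrable k volume s t)
    (hk0 : ∀ σ ∈ Icc s t, 0 ≤ k σ) (hg : ∀ u ∈ Icc s t, g u = g s + ∫ σ in s..u, h σ)
    (hgs : g s ≤ A) (hhk : ∀ σ ∈ Icc s t, A < g σ → h σ ≤ k σ) :
    g t - A ≤ ∫ σ in s..t, k σ := by
  -- `t₀` is the last time in `[s, t]` at which `g ≤ A`.
  set S := Icc s t ∩ g ⁻¹' Iic A
  have hS : IsClosed S :=
    (hh.continuousOn_Icc_of_eq_add_integral hg).preimage_isClosed_of_isClosed isClosed_Icc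
      isClosed_Iic
  have hSbdd : BddAbove S := ⟨t, fun σ hσ => hσ.1.2⟩
  obtain ⟨⟨hst₀, ht₀t⟩, hgt₀⟩ : sSup S ∈ S := hS.csSup_mem ⟨s, ⟨le_rfl, hst⟩, hgs⟩ hSbdd
  set t₀ := sSup S
  have habove : ∀ σ ∈ Ioo t₀ t, A < g σ := fun σ hσ => by
    by_contra! hle
    exact hσ.1.not_ge (le_csSup hSbdd ⟨⟨hst₀.trans hσ.1.le, hσ.2.le⟩, hle⟩)
  have ht₀ : t₀ ∈ uIcc s t := Icc_subset_uIcc ⟨hst₀, ht₀t⟩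
  have hsub : uIcc t₀ t ⊆ uIcc s t := uIcc_subset_uIcc ht₀ right_mem_uIcc
  calc g t - A ≤ g t - g t₀ := by linarith [show g t₀ ≤ A from hgt₀]
    _ = ∫ σ in t₀..t, h σ := by
      rw [hg t ⟨hst, le_rfl⟩, hg t₀ ⟨hst₀, ht₀t⟩,
        ← integral_interval_sub_left hh (hh.mono_set (uIcc_subset_uIcc left_mem_uIcc ht₀))]
      ring
    _ ≤ ∫ σ in t₀..t, k σ := integral_mono_on_of_le_Ioo ht₀t (hh.mono_set hsub)
      (hk.mono_set hsub) fun σ hσ => hhk σ ⟨hst₀.trans hσ.1.le, hσ.2.le⟩ (habove σ hσ)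
    _ ≤ ∫ σ in s..t, k σ := integral_mono_interval hst₀ ht₀t le_rfl
      ((ae_restrict_iff' measurableSet_Ioc).2
        (ae_of_all _ fun σ hσ => hk0 σ (Ioc_subset_Icc_self hσ))) hk

theorem sum_mul_sub_le_mul_sum_posPart {ι : Type*} [Fintype ι] {w y : ι → ℝ} {C A b : ℝ}
    (hw0 : ∀ j, 0 ≤ w j) (hwC : ∀ j, w j ≤ C) (hA : A ≤ b) :
    ∑ j, w j * (y j - b) ≤ C * ∑ j, (y j - A)⁺ := by
  rw [Finset.mul_sum]
  refine Finset.sum_le_sum fun j _ => ?_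
  calc w j * (y j - b) ≤ w j * (y j - A)⁺ :=
        mul_le_mul_of_nonneg_left ((sub_le_sub_left hA _).trans (le_posPart _)) (hw0 j)
    _ ≤ C * (y j - A)⁺ := mul_le_mul_of_nonneg_right (hwC j) (posPart_nonneg _)

theorem consensus_le_of_initial_le {ι : Type*} [Fintype ι] {g : ι → ℝ → ℝ} {w : ι → ι → ℝ → ℝ}
    {s t A C : ℝ} (hst : s ≤ t) (hw0 : ∀ i j, ∀ σ ∈ Icc s t, 0 ≤ w i j σ)
    (hwC : ∀ i j, ∀ σ ∈ Icc s t, w i j σ ≤ C)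
    (hint : ∀ i, IntervalIntegrable (fun σ => ∑ j, w i j σ * (g j σ - g i σ)) volume s t)
    (hg : ∀ i, ∀ u ∈ Icc s t, g i u = g i s + ∫ σ in s..u, ∑ j, w i j σ * (g j σ - g i σ))
    (hgs : ∀ i, g i s ≤ A) (i : ι) : g i t ≤ A := by
  have hC : 0 ≤ C := (hw0 i i s ⟨le_rfl, hst⟩).trans (hwC i i s ⟨le_rfl, hst⟩)
  set V : ℝ → ℝ := fun u => ∑ k, (g k u - A)⁺
  have hV0 : ∀ u, 0 ≤ V u := fun u => Finset.sum_nonneg fun k _ => posPart_nonneg _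
  have hVcont : ContinuousOn V (Icc s t) := continuousOn_finsetSum _ fun k _ =>
    continuous_posPart.comp_continuousOn
      (((hint k).continuousOn_Icc_of_eq_add_integral (hg k)).sub continuousOn_const)
  have hVle : ∀ u ∈ Icc s t, V u ≤ Fintype.card ι * C * ∫ σ in s..u, V σ := by
    intro u hu
    have hsub : Icc s u ⊆ Icc s t := Icc_subset_Icc_right hu.2
    have hVint : IntervalIntegrable V volume s u :=
      (hVcont.mono hsub).intervalIntegrable_of_Icc hu.1
    have hexcess : ∀ k, (g k u - A)⁺ ≤ C * ∫ σ in s..u, V σ := by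
      intro k
      rw [← intervalIntegral.integral_const_mul]
      refine sup_le (sub_le_integral_of_le_on_gt hu.1
        ((hint k).mono_set (uIcc_subset_uIcc_left (Icc_subset_uIcc hu)))
        (hVint.const_mul C) (fun σ _ => mul_nonneg hC (hV0 σ))
        (fun v hv => hg k v (hsub hv)) (hgs k) fun σ hσ hAσ => ?_) ?_
      · exact sum_mul_sub_le_mul_sum_posPart (fun j => hw0 k j σ (hsub hσ))
          (fun j => hwC k j σ (hsub hσ)) hAσ.le
      · exact integral_nonneg hu.1 fun σ _ => mul_nonneg hC (hV0 σ)
    calc V u ≤ ∑ _k : ι, C * ∫ σ in s..u, V σ := Finset.sum_le_sum fun k _ => hexcess k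
      _ = Fintype.card ι * C * ∫ σ in s..u, V σ := by
        rw [Finset.sum_const, Finset.card_univ, nsmul_eq_mul, mul_assoc]
  have hVt := eq_zero_of_le_mul_integral hVcont (fun u _ => hV0 u) hVle t ⟨hst, le_rfl⟩
  have hexcess_t : (g i t - A)⁺ ≤ V t :=
    Finset.single_le_sum (f := fun k => (g k t - A)⁺) (fun k _ => posPart_nonneg _)
      (Finset.mem_univ i)
  linarith [le_posPart (g i t - A)]

section Geometry

variable {ι E : Type*} [Finite ι] [NormedAddCommGroup E] [InnerProductSpace ℝ E]

theorem exists_norm_sub_le_of_forall_inner_le {y z : ι → E}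
    (h : ∀ (ℓ : E) (A : ℝ), (∀ k, ⟪ℓ, z k⟫ ≤ A) → ∀ i, ⟪ℓ, y i⟫ ≤ A) (i j : ι) :
    ∃ a b, ‖y i - y j‖ ≤ ‖z a - z b‖ := by
  have : Nonempty ι := ⟨i⟩
  set v := y i - y j
  obtain ⟨a, ha⟩ := Finite.exists_max fun k => ⟪v, z k⟫
  obtain ⟨b, hb⟩ := Finite.exists_min fun k => ⟪v, z k⟫
  have hi : ⟪v, y i⟫ ≤ ⟪v, z a⟫ := h v _ ha i
  have hj : ⟪-v, y j⟫ ≤ -⟪v, z b⟫ := h (-v) _ (fun k => by simpa [inner_neg_left] using hb k) j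
  refine ⟨a, b, ?_⟩
  have hsq : ‖v‖ * ‖v‖ ≤ ‖v‖ * ‖z a - z b‖ := calc
    ‖v‖ * ‖v‖ = ⟪v, y i⟫ - ⟪v, y j⟫ := by
      rw [← inner_sub_right, real_inner_self_eq_norm_mul_norm]
    _ ≤ ⟪v, z a - z b⟫ := by rw [inner_sub_right]; rw [inner_neg_left] at hj; linarith
    _ ≤ ‖v‖ * ‖z a - z b‖ := real_inner_le_norm _ _
  rcases (norm_nonneg v).eq_or_lt with hv | hv
  · rw [← hv]; exact norm_nonneg _
  · exact le_of_mul_le_mul_left hsq hv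

theorem iSup_norm_sub_le_of_forall_inner_le {y z : ι → E}
    (h : ∀ (ℓ : E) (A : ℝ), (∀ k, ⟪ℓ, z k⟫ ≤ A) → ∀ i, ⟪ℓ, y i⟫ ≤ A) :
    ⨆ i, ⨆ j, ‖y i - y j‖ ≤ ⨆ i, ⨆ j, ‖z i - z j‖ := by
  have hnonneg : 0 ≤ ⨆ i, ⨆ j, ‖z i - z j‖ :=
    Real.iSup_nonneg fun i => Real.iSup_nonneg fun j => norm_nonneg _
  refine Real.iSup_le (fun i => Real.iSup_le (fun j => ?_) hnonneg) hnonneg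
  obtain ⟨a, b, hab⟩ := exists_norm_sub_le_of_forall_inner_le h i j
  exact hab.trans ((le_ciSup (Finite.bddAbove_range _) b).trans
    (le_ciSup (Finite.bddAbove_range (fun a => ⨆ b, ‖z a - z b‖)) a))

end Geometry

theorem inner_smul_sum_smul_sub {ι E : Type*} [Fintype ι] [NormedAddCommGroup E]
    [InnerProductSpace ℝ E] (ℓ y : E) (z : ι → E) (r : ℝ) (c : ι → ℝ) :
    ⟪ℓ, r • ∑ j, c j • (z j - y)⟫ = ∑ j, r * c j * (⟪ℓ, z j⟫ - ⟪ℓ, y⟫) := by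
  simp only [real_inner_smul_right, inner_sum, inner_sub_right, Finset.mul_sum, mul_assoc]

section CooperativeSystem

variable {d N : ℕ} {φ : ℝ → ℝ} {M : Fin N → Fin N → ℝ → ℝ}
  {x : Fin N → ℝ → EuclideanSpace ℝ (Fin d)}

theorem intervalIntegrable_cooperativeField (hφ : ContinuousOn φ (Ici 0))
    (hM_meas : ∀ i j, Measurable (M i j))
    (hM_range : ∀ i j, ∀ t : ℝ, 0 ≤ t → M i j t ∈ Icc (0:ℝ) 1)
    (hx_cont : ∀ i, ContinuousOn (x i) (Ici 0)) (i : Fin N) {a b : ℝ}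
    (ha : 0 ≤ a) (hb : 0 ≤ b) :
    IntervalIntegrable
      (fun s => (N : ℝ)⁻¹ • ∑ j, (M i j s * φ ‖x i s - x j s‖) • (x j s - x i s)) volume a b := by
  have hIcc : uIcc a b ⊆ Ici 0 := fun σ hσ => (le_min ha hb).trans hσ.1
  have hterm : ∀ j, IntervalIntegrable
      (fun s => (M i j s * φ ‖x i s - x j s‖) • (x j s - x i s)) volume a b := by
    intro j
    have hM : IntervalIntegrable (M i j) volume a b :=
      (intervalIntegrable_const (c := (1 : ℝ))).mono_fun' (hM_meas i j).aestronglyMeasurable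
        ((ae_restrict_iff' measurableSet_uIoc).2 (ae_of_all _ fun σ hσ => by
          obtain ⟨h0, h1⟩ := hM_range i j σ (hIcc (uIoc_subset_uIcc hσ))
          show ‖M i j σ‖ ≤ 1
          rwa [Real.norm_eq_abs, abs_of_nonneg h0]))
    have hφij : ContinuousOn (fun σ => φ ‖x i σ - x j σ‖) (uIcc a b) :=
      hφ.comp (((hx_cont i).sub (hx_cont j)).mono hIcc).norm fun σ _ => norm_nonneg _
    exact (hM.mul_continuousOn hφij).smul_continuousOn
      (((hx_cont j).sub (hx_cont i)).mono hIcc)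
  have hsum := IntervalIntegrable.sum Finset.univ fun j _ => hterm j
  rw [Finset.sum_fn] at hsum
  exact hsum.smul ((N : ℝ)⁻¹)

theorem inner_le_of_forall_inner_le (hφ : ContinuousOn φ (Ici 0))
    (hφ_pos : ∀ r : ℝ, 0 ≤ r → 0 < φ r)
    (hM_meas : ∀ i j, Measurable (M i j))
    (hM_range : ∀ i j, ∀ t : ℝ, 0 ≤ t → M i j t ∈ Icc (0:ℝ) 1)
    (hx_cont : ∀ i, ContinuousOn (x i) (Ici 0))
    (hx_sol : ∀ i, ∀ t : ℝ, 0 ≤ t → x i t = x i 0 +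
      ∫ s in (0:ℝ)..t,
        (N : ℝ)⁻¹ • ∑ j, (M i j s * φ ‖x i s - x j s‖) • (x j s - x i s))
    (ℓ : EuclideanSpace ℝ (Fin d)) {s t A : ℝ} (hs : 0 ≤ s) (hst : s ≤ t)
    (hA : ∀ k, ⟪ℓ, x k s⟫ ≤ A) (i : Fin N) : ⟪ℓ, x i t⟫ ≤ A := by
  have hIcc : Icc s t ⊆ Ici 0 := fun σ hσ => hs.trans hσ.1
  have hF := fun k {a b : ℝ} (ha : 0 ≤ a) (hb : 0 ≤ b) =>
    intervalIntegrable_cooperativeField hφ hM_meas hM_range hx_cont k ha hb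
  obtain ⟨B, hB⟩ : ∃ B : Fin N → Fin N → ℝ,
      ∀ k j, ∀ σ ∈ Icc s t, φ ‖x k σ - x j σ‖ ≤ B k j := by
    choose B hB using fun k j => isCompact_Icc.bddAbove_image
      (hφ.comp (((hx_cont k).sub (hx_cont j)).mono hIcc).norm fun σ _ => norm_nonneg _)
    exact ⟨B, fun k j σ hσ => hB k j (mem_image_of_mem _ hσ)⟩
  refine consensus_le_of_initial_le (g := fun k u => ⟪ℓ, x k u⟫)
    (w := fun k j σ => (N : ℝ)⁻¹ * (M k j σ * φ ‖x k σ - x j σ‖))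
    (C := (N : ℝ)⁻¹ * ⨆ p : Fin N × Fin N, B p.1 p.2) hst
    (fun k j σ hσ => ?_) (fun k j σ hσ => ?_) (fun k => ?_) (fun k u hu => ?_) hA i
  · obtain ⟨hM0, -⟩ := hM_range k j σ (hIcc hσ)
    have := hφ_pos _ (norm_nonneg (x k σ - x j σ))
    positivity
  · obtain ⟨hM0, hM1⟩ := hM_range k j σ (hIcc hσ)
    have hφ0 := (hφ_pos _ (norm_nonneg (x k σ - x j σ))).le
    refine mul_le_mul_of_nonneg_left ?_ (by positivity)
    calc M k j σ * φ ‖x k σ - x j σ‖ ≤ 1 * B k j :=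
          mul_le_mul hM1 (hB k j σ hσ) hφ0 zero_le_one
      _ ≤ ⨆ p : Fin N × Fin N, B p.1 p.2 := by
        rw [one_mul]
        exact le_ciSup (f := fun p : Fin N × Fin N => B p.1 p.2) (Finite.bddAbove_range _) (k, j)
  · have hFk := hF k hs (hs.trans hst)
    simp_rw [← inner_smul_sum_smul_sub]
    exact ⟨hFk.1.const_inner ℓ, hFk.2.const_inner ℓ⟩
  · have hu0 : 0 ≤ u := hs.trans hu.1
    have hincr : x k u - x k s = ∫ σ in s..u,
        (N : ℝ)⁻¹ • ∑ j, (M k j σ * φ ‖x k σ - x j σ‖) • (x j σ - x k σ) := by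
      rw [hx_sol k u hu0, hx_sol k s hs,
        ← integral_interval_sub_left (hF k le_rfl hu0) (hF k le_rfl hs)]
      abel
    simp_rw [← inner_smul_sum_smul_sub]
    have hcomm := (innerSL ℝ ℓ).intervalIntegral_comp_comm (hF k hs hu0)
    simp only [innerSL_apply_apply] at hcomm
    rw [hcomm, ← hincr, inner_sub_right]
    ring

end CooperativeSystem

theorem diameter_antitone_general
    (d N : ℕ)
    (φ : ℝ → ℝ)
    (hφ_lip : ∃ K : NNReal, LipschitzOnWith K φ (Ici 0))
    (hφ_pos : ∀ r : ℝ, 0 ≤ r → 0 < φ r)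
    (M : Fin N → Fin N → ℝ → ℝ)
    (hM_meas : ∀ i j, Measurable (M i j))
    (hM_range : ∀ i j, ∀ t : ℝ, 0 ≤ t → M i j t ∈ Icc (0:ℝ) 1)
    (x : Fin N → ℝ → EuclideanSpace ℝ (Fin d))
    (hx_cont : ∀ i, ContinuousOn (x i) (Ici 0))
    (hx_sol : ∀ i, ∀ t : ℝ, 0 ≤ t → x i t = x i 0 +
      ∫ s in (0:ℝ)..t,
        (N : ℝ)⁻¹ • ∑ j, (M i j s * φ ‖x i s - x j s‖) • (x j s - x i s)) :
    AntitoneOn (fun t : ℝ => ⨆ i, ⨆ j, ‖x i t - x j t‖) (Ici 0) := by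
  obtain ⟨K, hK⟩ := hφ_lip
  intro s hs t _ hst
  exact iSup_norm_sub_le_of_forall_inner_le fun ℓ A hA =>
    inner_le_of_forall_inner_le hK.continuousOn hφ_pos hM_meas hM_range hx_cont hx_sol ℓ hs hst
      hA

/-- Along a solution of the first-order cooperative system
with communication failures (fixed scaling), the function
`D(t) = max_{i,j} ‖x i t - x j t‖` (the diameter) is non-increasing on `[0, ∞)`. -/
theorem diameter_antitone
    (d N : ℕ) (hN : 2 ≤ N)
    (φ : ℝ → ℝ)
    (hφ_lip : ∃ K : NNReal, LipschitzOnWith K φ (Ici 0))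
    (hφ_pos : ∀ r : ℝ, 0 ≤ r → 0 < φ r)
    (M : Fin N → Fin N → ℝ → ℝ)
    (hM_meas : ∀ i j, Measurable (M i j))
    (hM_range : ∀ i j, ∀ t : ℝ, 0 ≤ t → M i j t ∈ Icc (0:ℝ) 1)
    (x : Fin N → ℝ → EuclideanSpace ℝ (Fin d))
    (hx_cont : ∀ i, ContinuousOn (x i) (Ici 0))
    (hx_sol : ∀ i, ∀ t : ℝ, 0 ≤ t → x i t = x i 0 +
      ∫ s in (0:ℝ)..t,
        (N : ℝ)⁻¹ • ∑ j, (M i j s * φ ‖x i s - x j s‖) • (x j s - x i s)) :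
    AntitoneOn (fun t : ℝ => ⨆ i, ⨆ j, ‖x i t - x j t‖) (Ici 0) :=
  diameter_antitone_general d N φ hφ_lip hφ_pos M hM_meas hM_range x hx_cont hx_sol
end

section
/- Let x_1,...,x_N : [0,∞) → ℝ be a solution of the first-order cooperative system with communication failures (fixed scaling) on the real line (d = 1). Then the function γ_min(t) := min_{i ∈ {1,...,N}} x_i(t) is non-decreasing on [0,∞), and the function γ̂_max(t) := max_{i ∈ {1,...,N}} x_i(t) is non-increasing on [0,∞). -/
open MeasureTheory Set Filter Topology

/-!
Write `g t = maxᵢ xᵢ t`. Since `Mᵢⱼ ∈ [0, 1]`, the velocity of agent `i` is bounded above by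
`N⁻¹ ∑ⱼ (φ |xᵢ - xⱼ| (xⱼ - xᵢ))⁺`, a continuous function of time that vanishes whenever `xᵢ` is
a largest position, because then every term `xⱼ - xᵢ` is nonpositive. Hence, just after any time
`t`, an agent that realises the maximum at `t` moves up with arbitrarily small speed, while any
other agent stays below `g t` by continuity: the right lower Dini derivative of `g` is
nonpositive, and a continuous function with this property is antitone. The interaction is odd,
so `-x` is again a solution, and the statement about the minimum is the one about the maximum
of `-x`.
-/

theorem antitoneOn_of_eventually_lt_add_mul {f : ℝ → ℝ} {a : ℝ} (hf : ContinuousOn f (Ici a))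
    (h : ∀ t ∈ Ici a, ∀ r > 0, ∀ᶠ z in 𝓝[>] t, f z < f t + r * (z - t)) :
    AntitoneOn f (Ici a) := by
  intro s hs u _ hsu
  refine image_le_of_liminf_slope_right_le_deriv_boundary
    (hf.mono (Icc_subset_Ici_iff hsu |>.2 hs)) le_rfl continuousOn_const (B := fun _ => f s)
    (B' := fun _ => 0) (fun _ _ => hasDerivWithinAt_const _ _ _)
    (fun t ht r hr => Eventually.frequently ?_) ⟨hsu, le_rfl⟩
  filter_upwards [h t (le_trans hs ht.1) r hr, self_mem_nhdsWithin] with z hz hzt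
  rw [slope_def_field, div_lt_iff₀ (sub_pos.2 hzt)]
  linarith

theorem eventually_integral_le_mul_sub {w : ℝ → ℝ} {t c : ℝ}
    (hw_int : ∀ᶠ z in 𝓝[>] t, IntervalIntegrable w volume t z)
    (hw : ∀ᶠ s in 𝓝[>] t, w s ≤ c) :
    ∀ᶠ z in 𝓝[>] t, ∫ s in t..z, w s ≤ c * (z - t) := by
  obtain ⟨δ, hδ, hwδ⟩ := (nhdsGT_basis t).eventually_iff.1 hw
  filter_upwards [hw_int, Ioo_mem_nhdsGT hδ] with z hz_int hz
  calc ∫ s in t..z, w s ≤ ∫ _ in t..z, c :=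
        intervalIntegral.integral_mono_on_of_le_Ioo hz.1.le hz_int intervalIntegrable_const
          fun s hs => hwδ ⟨hs.1, hs.2.trans hz.2⟩
    _ = c * (z - t) := by simp [mul_comm]

theorem MeasureTheory.LocallyIntegrableOn.intervalIntegrable_of_ordConnected {w : ℝ → ℝ} {S : Set ℝ}
    (hw : LocallyIntegrableOn w S) (hS : S.OrdConnected) {t z : ℝ} (ht : t ∈ S) (hz : z ∈ S) :
    IntervalIntegrable w volume t z :=
  (hw.integrableOn_compact_subset (hS.uIcc_subset ht hz) isCompact_uIcc).intervalIntegrable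

theorem eventually_lt_add_mul_of_le_bound {y w ψ : ℝ → ℝ} {a t c r : ℝ}
    (hw : LocallyIntegrableOn w (Ici a)) (hy : ∀ t ∈ Ici a, y t = y a + ∫ s in a..t, w s)
    (hwψ : ∀ s ∈ Ici a, w s ≤ ψ s) (hψ : ContinuousOn ψ (Ici a)) (ht : t ∈ Ici a)
    (hψt : ψ t ≤ 0) (hyt : y t ≤ c) (hr : 0 < r) :
    ∀ᶠ z in 𝓝[>] t, y z < c + r * (z - t) := by
  have hIoi : Ioi t ⊆ Ici a := Ioi_subset_Ici ht
  have hint : ∀ {u v}, u ∈ Ici a → v ∈ Ici a → IntervalIntegrable w volume u v :=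
    hw.intervalIntegrable_of_ordConnected ordConnected_Ici
  have hw_small : ∀ᶠ s in 𝓝[>] t, w s ≤ r / 2 := by
    filter_upwards [((hψ t ht).mono hIoi).eventually (gt_mem_nhds (hψt.trans_lt (half_pos hr))),
      self_mem_nhdsWithin] with s hs hst
    exact (hwψ s (hIoi hst)).trans hs.le
  filter_upwards [eventually_integral_le_mul_sub
      (eventually_nhdsWithin_of_forall fun z hz => hint ht (hIoi hz)) hw_small,
    self_mem_nhdsWithin] with z hz hzt
  have hincr : y z - y t = ∫ s in t..z, w s := by
    rw [hy z (hIoi hzt), hy t ht, add_sub_add_left_eq_sub,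
      intervalIntegral.integral_interval_sub_left (hint self_mem_Ici (hIoi hzt))
        (hint self_mem_Ici ht)]
  rw [← hincr] at hz
  nlinarith [mul_pos hr (sub_pos.2 hzt)]

theorem antitoneOn_iSup_of_le_bound_nonpos_at_max {ι : Type*} [Fintype ι] [Nonempty ι]
    {x v Ψ : ι → ℝ → ℝ} {a : ℝ}
    (hx : ∀ i, ContinuousOn (x i) (Ici a))
    (hv : ∀ i, LocallyIntegrableOn (v i) (Ici a))
    (hxv : ∀ i, ∀ t ∈ Ici a, x i t = x i a + ∫ s in a..t, v i s)
    (hΨ : ∀ i, ContinuousOn (Ψ i) (Ici a))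
    (hvΨ : ∀ i, ∀ s ∈ Ici a, v i s ≤ Ψ i s)
    (hΨ_max : ∀ i, ∀ t ∈ Ici a, (∀ j, x j t ≤ x i t) → Ψ i t ≤ 0) :
    AntitoneOn (fun t => ⨆ i, x i t) (Ici a) := by
  have hsup : ∀ t, ⨆ i, x i t = Finset.univ.sup' Finset.univ_nonempty (x · t) :=
    fun t => (Finset.sup'_univ_eq_ciSup _).symm
  have hle_sup : ∀ t i, x i t ≤ ⨆ j, x j t := fun t => le_ciSup (Finite.bddAbove_range (x · t))
  refine antitoneOn_of_eventually_lt_add_mul ?_ fun t ht r hr => ?_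
  · simp_rw [hsup]
    exact ContinuousOn.finset_sup'_apply _ fun i _ => hx i
  have key : ∀ i, ∀ᶠ z in 𝓝[>] t, x i z < (⨆ j, x j t) + r * (z - t) := by
    intro i
    rcases (hle_sup t i).lt_or_eq with hlt | heq
    · have hlim : Tendsto (fun z => (⨆ j, x j t) + r * (z - t)) (𝓝[>] t)
          (𝓝 (⨆ j, x j t)) := by
        have : Continuous fun z => (⨆ j, x j t) + r * (z - t) := by fun_prop
        simpa using (this.tendsto t).mono_left nhdsWithin_le_nhds
      exact (((hx i) t ht).mono (Ioi_subset_Ici ht)).eventually_lt hlim hlt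
    · exact eventually_lt_add_mul_of_le_bound (hv i) (hxv i) (hvΨ i) (hΨ i) ht
        (hΨ_max i t ht fun j => heq ▸ hle_sup t j) (hle_sup t i) hr
  filter_upwards [eventually_all.2 key] with z hz
  rw [hsup z]
  exact (Finset.sup'_lt_iff _).2 fun i _ => hz i

theorem mul_le_max_zero_of_mem_Icc {m c : ℝ} (hm : m ∈ Icc (0 : ℝ) 1) : m * c ≤ max c 0 := by
  rcases le_total 0 c with hc | hc
  · exact (mul_le_of_le_one_left hc hm.2).trans (le_max_left c 0)
  · exact (mul_nonpos_of_nonneg_of_nonpos hm.1 hc).trans (le_max_right c 0)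

namespace CooperativeSystem

variable {N : ℕ} {φ : ℝ → ℝ} {M : Fin N → Fin N → ℝ → ℝ} {x : Fin N → ℝ → ℝ}

noncomputable def velocity (φ : ℝ → ℝ) (M : Fin N → Fin N → ℝ → ℝ) (x : Fin N → ℝ → ℝ)
    (i : Fin N) (s : ℝ) : ℝ :=
  (N : ℝ)⁻¹ * ∑ j, M i j s * φ |x i s - x j s| * (x j s - x i s)

def IsSolution (φ : ℝ → ℝ) (M : Fin N → Fin N → ℝ → ℝ) (x : Fin N → ℝ → ℝ) : Prop :=
  ∀ i, ∀ t : ℝ, 0 ≤ t → x i t = x i 0 + ∫ s in (0 : ℝ)..t, velocity φ M x i s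

theorem velocity_neg (i : Fin N) (s : ℝ) : velocity φ M (-x) i s = -velocity φ M x i s := by
  simp only [velocity, Pi.neg_apply]
  rw [← mul_neg, ← Finset.sum_neg_distrib]
  congr 1
  refine Finset.sum_congr rfl fun j _ => ?_
  rw [neg_sub_neg, neg_sub_neg, abs_sub_comm]
  ring

theorem IsSolution.neg (h : IsSolution φ M x) : IsSolution φ M (-x) := by
  intro i t ht
  simp only [velocity_neg, intervalIntegral.integral_neg, Pi.neg_apply, h i t ht]
  ring

theorem continuousOn_comp_abs_sub (hφ : ContinuousOn φ (Ici 0))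
    (hx : ∀ i, ContinuousOn (x i) (Ici 0)) (i j : Fin N) :
    ContinuousOn (fun s => φ |x i s - x j s|) (Ici 0) :=
  hφ.comp ((hx i).sub (hx j)).abs fun _ _ => mem_Ici.2 (abs_nonneg _)

theorem locallyIntegrableOn_velocity (hφ : ContinuousOn φ (Ici 0))
    (hM_meas : ∀ i j, Measurable (M i j)) (hM : ∀ i j, ∀ s : ℝ, 0 ≤ s → M i j s ∈ Icc (0 : ℝ) 1)
    (hx : ∀ i, ContinuousOn (x i) (Ici 0)) (i : Fin N) :
    LocallyIntegrableOn (velocity φ M x i) (Ici 0) := by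
  refine (locallyIntegrableOn_iff isClosed_Ici.isLocallyClosed).2 fun K hK hKc => ?_
  refine (integrable_finsetSum _ fun j _ => ?_).const_mul _
  have hMK : IntegrableOn (M i j) K :=
    Measure.integrableOn_of_bounded hKc.measure_lt_top.ne (hM_meas i j).aestronglyMeasurable
      (M := 1) <| (ae_restrict_iff' hKc.measurableSet).2 <| ae_of_all _ fun s hs => by
        have := hM i j s (hK hs)
        rw [Real.norm_eq_abs, abs_le]
        constructor <;> linarith [this.1, this.2]
  exact (hMK.mul_continuousOn ((continuousOn_comp_abs_sub hφ hx i j).mono hK) hKc).mul_continuousOn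
    (((hx j).sub (hx i)).mono hK) hKc

noncomputable def velocityUpperBound (φ : ℝ → ℝ) (x : Fin N → ℝ → ℝ) (i : Fin N) (s : ℝ) : ℝ :=
  (N : ℝ)⁻¹ * ∑ j, max (φ |x i s - x j s| * (x j s - x i s)) 0

theorem velocity_le_velocityUpperBound (hM : ∀ i j, ∀ s : ℝ, 0 ≤ s → M i j s ∈ Icc (0 : ℝ) 1)
    (i : Fin N) {s : ℝ} (hs : 0 ≤ s) : velocity φ M x i s ≤ velocityUpperBound φ x i s := by
  refine mul_le_mul_of_nonneg_left (Finset.sum_le_sum fun j _ => ?_) (by positivity)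
  rw [mul_assoc]
  exact mul_le_max_zero_of_mem_Icc (hM i j s hs)

theorem velocityUpperBound_eq_zero_of_forall_le (hφ : ∀ r : ℝ, 0 ≤ r → 0 ≤ φ r) {i : Fin N}
    {s : ℝ} (hi : ∀ j, x j s ≤ x i s) : velocityUpperBound φ x i s = 0 :=
  mul_eq_zero_of_right _ <| Finset.sum_eq_zero fun j _ => max_eq_right <|
    mul_nonpos_of_nonneg_of_nonpos (hφ _ (abs_nonneg _)) (sub_nonpos.2 (hi j))

theorem continuousOn_velocityUpperBound (hφ : ContinuousOn φ (Ici 0))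
    (hx : ∀ i, ContinuousOn (x i) (Ici 0)) (i : Fin N) :
    ContinuousOn (velocityUpperBound φ x i) (Ici 0) :=
  continuousOn_const.mul <| continuousOn_finsetSum _ fun j _ =>
    ContinuousOn.sup ((continuousOn_comp_abs_sub hφ hx i j).mul ((hx j).sub (hx i)))
      continuousOn_const

theorem antitoneOn_iSup [NeZero N] (hφ : ContinuousOn φ (Ici 0))
    (hφ_nonneg : ∀ r : ℝ, 0 ≤ r → 0 ≤ φ r) (hM_meas : ∀ i j, Measurable (M i j))
    (hM : ∀ i j, ∀ s : ℝ, 0 ≤ s → M i j s ∈ Icc (0 : ℝ) 1)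
    (hx : ∀ i, ContinuousOn (x i) (Ici 0)) (hsol : IsSolution φ M x) :
    AntitoneOn (fun t => ⨆ i, x i t) (Ici 0) :=
  antitoneOn_iSup_of_le_bound_nonpos_at_max hx (locallyIntegrableOn_velocity hφ hM_meas hM hx)
    hsol (continuousOn_velocityUpperBound hφ hx)
    (fun i _ hs => velocity_le_velocityUpperBound hM i hs)
    fun _ _ _ hi => (velocityUpperBound_eq_zero_of_forall_le hφ_nonneg hi).le

end CooperativeSystem

/-- Along a solution of the first-order cooperative system
with communication failures (fixed scaling) on the real line, the function
`γ_min(t) = min_i x i t` is non-decreasing and the function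
`γ̂_max(t) = max_i x i t` is non-increasing on `[0, ∞)`. -/
theorem min_monotone_max_antitone_real_line
    (N : ℕ) (hN : 2 ≤ N)
    (φ : ℝ → ℝ)
    (hφ_lip : ∃ K : NNReal, LipschitzOnWith K φ (Ici 0))
    (hφ_pos : ∀ r : ℝ, 0 ≤ r → 0 < φ r)
    (M : Fin N → Fin N → ℝ → ℝ)
    (hM_meas : ∀ i j, Measurable (M i j))
    (hM_range : ∀ i j, ∀ t : ℝ, 0 ≤ t → M i j t ∈ Icc (0:ℝ) 1)
    (x : Fin N → ℝ → ℝ)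
    (hx_cont : ∀ i, ContinuousOn (x i) (Ici 0))
    (hx_sol : ∀ i, ∀ t : ℝ, 0 ≤ t → x i t = x i 0 +
      ∫ s in (0:ℝ)..t,
        (N : ℝ)⁻¹ * ∑ j, M i j s * φ |x i s - x j s| * (x j s - x i s)) :
    MonotoneOn (fun t : ℝ => ⨅ i, x i t) (Ici 0) ∧
    AntitoneOn (fun t : ℝ => ⨆ i, x i t) (Ici 0) := by
  have : NeZero N := ⟨by omega⟩
  obtain ⟨K, hK⟩ := hφ_lip
  have hφ_nonneg : ∀ r : ℝ, 0 ≤ r → 0 ≤ φ r := fun r hr => (hφ_pos r hr).le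
  have hsol : CooperativeSystem.IsSolution φ M x := hx_sol
  have hmax := CooperativeSystem.antitoneOn_iSup hK.continuousOn hφ_nonneg hM_meas hM_range
    hx_cont hsol
  have hmin := CooperativeSystem.antitoneOn_iSup hK.continuousOn hφ_nonneg hM_meas hM_range
    (fun i => (hx_cont i).neg) hsol.neg
  refine ⟨fun s hs t ht hst => ?_, hmax⟩
  have hneg : ∀ u, -⨅ i, x i u = ⨆ i, -x i u := fun u => by
    simpa using Real.iInf_mul_of_nonpos (by norm_num : (-1 : ℝ) ≤ 0) (x · u)
  rw [← neg_le_neg_iff, hneg, hneg]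
  simpa only [Pi.neg_apply] using hmin hs ht hst
end

section
/- Let x_1,...,x_N : [0,∞) → ℝ be a solution of the first-order cooperative system with communication failures (fixed scaling) on the real line. Let D(0) := max_{i,j} |x_i(0) − x_j(0)|, let φ_max be the maximum of φ on [0, D(0)] and set K_max := φ_max. For α, z ∈ ℝ and τ ≥ 0 define ψ_L(α, z, τ) := α + e^{−K_max τ}(z − α). Let T > 0, θ ≥ 0 and suppose x_j(θ) ≥ α for all j ∈ {1,...,N}. If there exist an index i and τ* ∈ [0, T] such that x_i(θ + τ*) ≥ ψ_L(α, z, τ*), then x_i(θ + τ) ≥ ψ_L(α, z, τ) for all τ ∈ [τ*, T]. -/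
/-!
The velocities are only measurable in time, so the comparison arguments work with right Dini
derivatives of primitives instead of derivatives. The largest position is nonincreasing and the
smallest nondecreasing, because an extreme agent is only pulled inward. Hence after time `θ` all
agents stay above `α`, and the spread stays below `D(0)`, so that `φ ≤ K_max` along the motion.
Then `x_i' ≥ -K_max (x_i - α)`, and Gronwall's inequality from time `θ + τ*` gives
`x_i(θ + τ) - α ≥ e^{-K_max (τ - τ*)} (x_i(θ + τ*) - α) ≥ e^{-K_max τ} (z - α)`.
-/

open MeasureTheory Set Filter Topology

def IsPrimitiveFrom (u v : ℝ → ℝ) (a : ℝ) : Prop :=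
  ∀ ⦃t z⦄, a ≤ t → t ≤ z → IntervalIntegrable v volume t z ∧ u z - u t = ∫ s in t..z, v s

namespace IsPrimitiveFrom

variable {u v : ℝ → ℝ} {a : ℝ}

lemma mono (h : IsPrimitiveFrom u v a) {b : ℝ} (hab : a ≤ b) : IsPrimitiveFrom u v b :=
  fun _ _ ht htz => h (hab.trans ht) htz

lemma neg (h : IsPrimitiveFrom u v a) : IsPrimitiveFrom (-u) (-v) a := fun _ _ ht htz => by
  obtain ⟨hint, heq⟩ := h ht htz
  refine ⟨hint.neg, ?_⟩
  simp only [Pi.neg_apply, intervalIntegral.integral_neg, ← heq]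
  ring

lemma sub_const (h : IsPrimitiveFrom u v a) (c : ℝ) : IsPrimitiveFrom (fun s => u s - c) v a :=
  fun _ _ ht htz => by
    obtain ⟨hint, heq⟩ := h ht htz
    exact ⟨hint, by rw [← heq]; ring⟩

lemma of_eq_add_integral (hint : ∀ ⦃t z⦄, a ≤ t → t ≤ z → IntervalIntegrable v volume t z)
    (h : ∀ t, a ≤ t → u t = u a + ∫ s in a..t, v s) : IsPrimitiveFrom u v a :=
  fun t z ht htz => ⟨hint ht htz, by
    rw [h z (ht.trans htz), h t ht,
      ← intervalIntegral.integral_add_adjacent_intervals (hint le_rfl ht) (hint ht htz)]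
    ring⟩

lemma eventually_slope_lt (h : IsPrimitiveFrom u v a) {w : ℝ → ℝ} {t r : ℝ} (ht : a ≤ t)
    (hvw : ∀ s, t ≤ s → v s ≤ w s) (hw : ContinuousWithinAt w (Ici t) t) (hr : w t < r) :
    ∀ᶠ z in 𝓝[>] t, slope u t z < r := by
  obtain ⟨r', hwr', hr'⟩ := exists_between hr
  obtain ⟨b, htb, hb⟩ := mem_nhdsGE_iff_exists_Ico_subset.1 (hw (Iio_mem_nhds hwr'))
  filter_upwards [Ioo_mem_nhdsGT htb] with z ⟨htz, hzb⟩
  obtain ⟨hint, heq⟩ := h ht htz.le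
  have hv : ∀ s ∈ Icc t z, v s ≤ r' := fun s hs =>
    (hvw s hs.1).trans (hb ⟨hs.1, hs.2.trans_lt hzb⟩ : w s < r').le
  have hinc : u z - u t ≤ (z - t) * r' := by
    simpa [heq] using intervalIntegral.integral_mono_on htz.le hint intervalIntegrable_const hv
  rw [slope_def_field, div_lt_iff₀ (sub_pos.2 htz)]
  nlinarith

lemma mul_exp_le (h : IsPrimitiveFrom u v a) (hu : ContinuousOn u (Ici a)) {K : ℝ}
    (hv : ∀ s, a ≤ s → -(K * u s) ≤ v s) {s : ℝ} (hs : a ≤ s) :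
    u a * Real.exp (-(K * (s - a))) ≤ u s := by
  have hneg := le_gronwallBound_of_liminf_deriv_right_le (f := -u) (f' := fun t => K * u t)
    (δ := -u a) (K := -K) (ε := 0) (hu.neg.mono Icc_subset_Ici_self)
    (fun t ht r hr => (h.neg.eventually_slope_lt ht.1
      (fun s hs => by simpa using neg_le.1 (hv s (ht.1.trans hs)))
      ((continuousWithinAt_const.mul (hu t ht.1)).mono (Ici_subset_Ici.2 ht.1)) hr).frequently)
    le_rfl (fun t _ => by simp) s ⟨hs, le_rfl⟩
  rw [gronwallBound_ε0, neg_mul, neg_mul] at hneg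
  simpa using hneg

end IsPrimitiveFrom

lemma eventually_slope_sup'_lt {ι : Type*} [Fintype ι] [Nonempty ι] {g : ι → ℝ → ℝ} {t r : ℝ}
    (hr : 0 ≤ r) (hg : ∀ k, ContinuousWithinAt (g k) (Ici t) t)
    (hmax : ∀ k, g k t = Finset.univ.sup' Finset.univ_nonempty (g · t) →
      ∀ᶠ z in 𝓝[>] t, slope (g k) t z < r) :
    ∀ᶠ z in 𝓝[>] t,
      slope (fun z => Finset.univ.sup' Finset.univ_nonempty (g · z)) t z < r := by
  set f := fun z => Finset.univ.sup' Finset.univ_nonempty (g · z)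
  have hk : ∀ k, ∀ᶠ z in 𝓝[>] t, g k z - f t < r * (z - t) := by
    intro k
    rcases (Finset.le_sup' (g · t) (Finset.mem_univ k)).eq_or_lt with hkt | hkt
    · filter_upwards [hmax k hkt, self_mem_nhdsWithin] with z hz (htz : t < z)
      rwa [slope_def_field, div_lt_iff₀ (sub_pos.2 htz), hkt] at hz
    · filter_upwards [((hg k).mono Ioi_subset_Ici_self).eventually (gt_mem_nhds hkt),
        self_mem_nhdsWithin] with z hz (htz : t < z)
      nlinarith
  filter_upwards [eventually_all.2 hk, self_mem_nhdsWithin] with z hz (htz : t < z)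
  obtain ⟨k, -, hfk⟩ := Finset.exists_mem_eq_sup' Finset.univ_nonempty (g · z)
  rw [slope_def_field, div_lt_iff₀ (sub_pos.2 htz)]
  exact (show f z = g k z from hfk) ▸ hz k

section CooperativeSystem

variable {N : ℕ} {φ : ℝ → ℝ} {M : Fin N → Fin N → ℝ → ℝ} {x : Fin N → ℝ → ℝ}

noncomputable def velocity (φ : ℝ → ℝ) (M : Fin N → Fin N → ℝ → ℝ) (x : Fin N → ℝ → ℝ)
    (i : Fin N) (s : ℝ) : ℝ :=
  (N : ℝ)⁻¹ * ∑ j, M i j s * φ |x i s - x j s| * (x j s - x i s)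

lemma velocity_neg (i : Fin N) (s : ℝ) : velocity φ M (-x) i s = -velocity φ M x i s := by
  simp only [velocity, Pi.neg_apply, neg_sub_neg, ← mul_neg, ← Finset.sum_neg_distrib, neg_sub]
  congr 1
  exact Finset.sum_congr rfl fun j _ => by rw [abs_sub_comm]

lemma velocity_le {i : Fin N} {s K c : ℝ} (hφ : ∀ r, 0 ≤ r → 0 ≤ φ r)
    (hM : ∀ j, M i j s ∈ Icc (0 : ℝ) 1) (hK : ∀ j, φ |x i s - x j s| ≤ K)
    (hc : ∀ j, x j s ≤ c) : velocity φ M x i s ≤ K * (c - x i s) := by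
  have hN : (0 : ℝ) < N := Nat.cast_pos.2 i.pos
  have hterm : ∀ j, M i j s * φ |x i s - x j s| * (x j s - x i s) ≤ K * (c - x i s) := by
    intro j
    have hφj := hφ _ (abs_nonneg (x i s - x j s))
    have hci := sub_nonneg.2 (hc i)
    rcases le_or_gt (x j s - x i s) 0 with hd | hd
    · exact (mul_nonpos_of_nonneg_of_nonpos (mul_nonneg (hM j).1 hφj) hd).trans
        (mul_nonneg (hφj.trans (hK j)) hci)
    · calc M i j s * φ |x i s - x j s| * (x j s - x i s)
          ≤ 1 * K * (c - x i s) :=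
            mul_le_mul (mul_le_mul (hM j).2 (hK j) hφj zero_le_one) (sub_le_sub_right (hc j) _)
              hd.le (by linarith [hK j])
        _ = K * (c - x i s) := by ring
  calc velocity φ M x i s ≤ (N : ℝ)⁻¹ * (N * (K * (c - x i s))) := by
        unfold velocity
        gcongr
        simpa using Finset.sum_le_card_nsmul Finset.univ _ _ fun j _ => hterm j
    _ = K * (c - x i s) := by field_simp

lemma neg_mul_le_velocity {i : Fin N} {s K c : ℝ} (hφ : ∀ r, 0 ≤ r → 0 ≤ φ r)
    (hM : ∀ j, M i j s ∈ Icc (0 : ℝ) 1) (hK : ∀ j, φ |x i s - x j s| ≤ K)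
    (hc : ∀ j, c ≤ x j s) : -(K * (x i s - c)) ≤ velocity φ M x i s := by
  have := velocity_le (x := -x) (K := K) (c := -c) hφ hM
    (fun j => by simp only [Pi.neg_apply, neg_sub_neg]; rw [abs_sub_comm]; exact hK j)
    (fun j => neg_le_neg (hc j))
  rw [velocity_neg] at this
  simp only [Pi.neg_apply, sub_neg_eq_add] at this
  linarith

lemma intervalIntegrable_velocity (hφ : ContinuousOn φ (Ici 0))
    (hM_meas : ∀ i j, Measurable (M i j)) (hM : ∀ i j, ∀ t : ℝ, 0 ≤ t → M i j t ∈ Icc (0:ℝ) 1)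
    (hx : ∀ i, ContinuousOn (x i) (Ici 0)) (i : Fin N) {a b : ℝ} (ha : 0 ≤ a) (hab : a ≤ b) :
    IntervalIntegrable (velocity φ M x i) volume a b := by
  have hsub : Icc a b ⊆ Ici 0 := fun s hs => ha.trans hs.1
  rw [intervalIntegrable_iff_integrableOn_Icc_of_le hab]
  refine (integrable_finsetSum _ fun j _ => ?_).const_mul _
  simp_rw [mul_assoc]
  refine Integrable.bdd_mul (c := 1) ?_ (hM_meas i j).aestronglyMeasurable ?_
  · refine ContinuousOn.integrableOn_compact isCompact_Icc (ContinuousOn.mono ?_ hsub)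
    exact (hφ.comp ((hx i).sub (hx j)).abs fun s _ => mem_Ici.2 (abs_nonneg _)).mul
      ((hx j).sub (hx i))
  · filter_upwards [ae_restrict_mem measurableSet_Icc] with s hs
    obtain ⟨h0, h1⟩ := hM i j s (hsub hs)
    rwa [Real.norm_of_nonneg h0]

structure IsCooperativeSolution_s9 (φ : ℝ → ℝ) (M : Fin N → Fin N → ℝ → ℝ) (x : Fin N → ℝ → ℝ) :
    Prop where
  continuousOn_φ : ContinuousOn φ (Ici 0)
  φ_nonneg : ∀ r, 0 ≤ r → 0 ≤ φ r
  M_mem_Icc : ∀ i j, ∀ t : ℝ, 0 ≤ t → M i j t ∈ Icc (0:ℝ) 1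
  continuousOn : ∀ i, ContinuousOn (x i) (Ici 0)
  isPrimitiveFrom : ∀ i, IsPrimitiveFrom (x i) (velocity φ M x i) 0

namespace IsCooperativeSolution_s9

lemma neg (hx : IsCooperativeSolution_s9 φ M x) : IsCooperativeSolution_s9 φ M (-x) where
  continuousOn_φ := hx.continuousOn_φ
  φ_nonneg := hx.φ_nonneg
  M_mem_Icc := hx.M_mem_Icc
  continuousOn i := (hx.continuousOn i).neg
  isPrimitiveFrom i := by
    rw [show velocity φ M (-x) i = -velocity φ M x i from funext (velocity_neg i)]
    exact (hx.isPrimitiveFrom i).neg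

/-- An agent realising the maximum has velocity at most `(∑ l, φ |x k - x l|) * (max - x k) = 0`. -/
lemma le_of_forall_le (hx : IsCooperativeSolution_s9 φ M x) {θ β t : ℝ} (hθ : 0 ≤ θ)
    (hβ : ∀ j, x j θ ≤ β) (ht : θ ≤ t) (j : Fin N) : x j t ≤ β := by
  have : Nonempty (Fin N) := ⟨j⟩
  set f := fun s => Finset.univ.sup' Finset.univ_nonempty (x · s)
  suffices f t ≤ β from (Finset.le_sup' (x · t) (Finset.mem_univ j)).trans this
  refine image_le_of_liminf_slope_right_le_deriv_boundary (B := fun _ => β) (B' := fun _ => 0)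
    ((ContinuousOn.finset_sup'_apply _ fun k _ => hx.continuousOn k).mono
      fun s hs => hθ.trans hs.1)
    (Finset.sup'_le _ _ fun k _ => hβ k) continuousOn_const
    (fun s _ => hasDerivWithinAt_const _ _ _) (fun s hs r hr => ?_) ⟨ht, le_rfl⟩
  have hs : 0 ≤ s := hθ.trans hs.1
  have hcont {g : ℝ → ℝ} (hg : ContinuousOn g (Ici 0)) : ContinuousWithinAt g (Ici s) s :=
    (hg s hs).mono (Ici_subset_Ici.2 hs)
  refine (eventually_slope_sup'_lt hr.le (fun k => hcont (hx.continuousOn k))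
    fun k hk => ?_).frequently
  refine (hx.isPrimitiveFrom k).eventually_slope_lt hs
    (w := fun s => (∑ l, φ |x k s - x l s|) * (f s - x k s)) (fun s' hs' => ?_) (hcont ?_)
    (by rwa [show f s = x k s from hk.symm, sub_self, mul_zero])
  · exact velocity_le hx.φ_nonneg (fun l => hx.M_mem_Icc k l s' (hs.trans hs'))
      (fun l => Finset.single_le_sum (f := fun l => φ |x k s' - x l s'|)
        (fun l _ => hx.φ_nonneg _ (abs_nonneg _)) (Finset.mem_univ l))
      (fun l => Finset.le_sup' (x · s') (Finset.mem_univ l))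
  · refine (continuousOn_finsetSum _ fun l _ => ?_).mul
      ((ContinuousOn.finset_sup'_apply _ fun k _ => hx.continuousOn k).sub (hx.continuousOn k))
    exact hx.continuousOn_φ.comp ((hx.continuousOn k).sub (hx.continuousOn l)).abs
      fun s _ => mem_Ici.2 (abs_nonneg _)

lemma le_of_forall_ge (hx : IsCooperativeSolution_s9 φ M x) {θ α t : ℝ} (hθ : 0 ≤ θ)
    (hα : ∀ j, α ≤ x j θ) (ht : θ ≤ t) (j : Fin N) : α ≤ x j t :=
  neg_le_neg_iff.1 (hx.neg.le_of_forall_le hθ (fun j => neg_le_neg (hα j)) ht j)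

lemma abs_sub_le_of_forall_abs_sub_le (hx : IsCooperativeSolution_s9 φ M x) {θ D t : ℝ}
    (hθ : 0 ≤ θ) (hD : ∀ k l, |x k θ - x l θ| ≤ D) (ht : θ ≤ t) (k l : Fin N) :
    |x k t - x l t| ≤ D := by
  have : Nonempty (Fin N) := ⟨k⟩
  obtain ⟨kmax, hkmax⟩ := Finite.exists_max (x · θ)
  obtain ⟨kmin, hkmin⟩ := Finite.exists_min (x · θ)
  have hup := hx.le_of_forall_le hθ hkmax ht
  have hlo := hx.le_of_forall_ge hθ hkmin ht
  have hspread := (le_abs_self _).trans (hD kmax kmin)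
  rw [abs_sub_le_iff]
  constructor <;> linarith [hup k, hup l, hlo k, hlo l]

end IsCooperativeSolution_s9

end CooperativeSystem

theorem left_barrier_general
    (N : ℕ)
    (φ : ℝ → ℝ)
    (hφ_lip : ∃ K : NNReal, LipschitzOnWith K φ (Ici 0))
    (hφ_pos : ∀ r : ℝ, 0 ≤ r → 0 < φ r)
    (M : Fin N → Fin N → ℝ → ℝ)
    (hM_meas : ∀ i j, Measurable (M i j))
    (hM_range : ∀ i j, ∀ t : ℝ, 0 ≤ t → M i j t ∈ Icc (0:ℝ) 1)
    (x : Fin N → ℝ → ℝ)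
    (hx_cont : ∀ i, ContinuousOn (x i) (Ici 0))
    (hx_sol : ∀ i, ∀ t : ℝ, 0 ≤ t → x i t = x i 0 +
      ∫ s in (0:ℝ)..t,
        (N : ℝ)⁻¹ * ∑ j, M i j s * φ |x i s - x j s| * (x j s - x i s))
    (D₀ : ℝ) (hD₀ : D₀ = ⨆ i, ⨆ j, |x i 0 - x j 0|)
    (Kmax : ℝ) (hKmax : Kmax = sSup (φ '' Icc 0 D₀))
    (ψL : ℝ → ℝ → ℝ → ℝ)
    (hψL : ∀ α z τ, ψL α z τ = α + Real.exp (-(Kmax * τ)) * (z - α))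
    (α z : ℝ) (T : ℝ) (θ : ℝ) (hθ : 0 ≤ θ)
    (hbelow : ∀ j, α ≤ x j θ)
    (i : Fin N) (τstar : ℝ) (hτstar : τstar ∈ Icc 0 T)
    (hcross : ψL α z τstar ≤ x i (θ + τstar)) :
    ∀ τ ∈ Icc τstar T, ψL α z τ ≤ x i (θ + τ) := by
  obtain ⟨K, hK⟩ := hφ_lip
  have hx : IsCooperativeSolution_s9 φ M x :=
    ⟨hK.continuousOn, fun r hr => (hφ_pos r hr).le, hM_range, hx_cont, fun i =>
      .of_eq_add_integral
        (fun _ _ => intervalIntegrable_velocity hK.continuousOn hM_meas hM_range hx_cont i)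
        (hx_sol i)⟩
  have hD : ∀ k l, |x k 0 - x l 0| ≤ D₀ := fun k l => hD₀ ▸
    le_ciSup_of_le (Finite.bddAbove_range _) k
      (le_ciSup (Finite.bddAbove_range fun j => |x k 0 - x j 0|) l)
  have hφK : ∀ s, 0 ≤ s → ∀ j, φ |x i s - x j s| ≤ Kmax := fun s hs j => hKmax ▸
    le_csSup (isCompact_Icc.bddAbove_image (hK.continuousOn.mono Icc_subset_Ici_self))
      ⟨_, ⟨abs_nonneg _, hx.abs_sub_le_of_forall_abs_sub_le le_rfl hD hs i j⟩, rfl⟩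
  intro τ hτ
  have hθτ : θ ≤ θ + τstar := le_add_of_nonneg_right hτstar.1
  have hdecay := (((hx.isPrimitiveFrom i).mono (hθ.trans hθτ)).sub_const α).mul_exp_le
    (((hx_cont i).sub continuousOn_const).mono (Ici_subset_Ici.2 (hθ.trans hθτ)))
    (K := Kmax) (fun s hs => neg_mul_le_velocity hx.φ_nonneg
      (fun j => hM_range i j s (hθ.trans (hθτ.trans hs))) (hφK s (hθ.trans (hθτ.trans hs)))
      (fun j => hx.le_of_forall_ge hθ hbelow (hθτ.trans hs) j))
    ((add_le_add_iff_left θ).2 hτ.1)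
  rw [add_sub_add_left_eq_sub] at hdecay
  rw [hψL] at hcross ⊢
  calc α + Real.exp (-(Kmax * τ)) * (z - α)
      = α + Real.exp (-(Kmax * τstar)) * (z - α) * Real.exp (-(Kmax * (τ - τstar))) := by
        rw [mul_right_comm, ← Real.exp_add]; ring_nf
    _ ≤ α + (x i (θ + τstar) - α) * Real.exp (-(Kmax * (τ - τstar))) := by
        gcongr; linarith
    _ ≤ x i (θ + τ) := by linarith

/-- Left barrier lemma on the real line: if all agents start
(at time `θ`) above `α` and agent `i` crosses the barrier
`ψ_L(α, z, τ) = α + e^{-K_max τ}(z - α)` at some time `τ* ∈ [0, T]`, then it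
stays above the barrier on `[τ*, T]`. -/
theorem left_barrier
    (N : ℕ) (hN : 2 ≤ N)
    (φ : ℝ → ℝ)
    (hφ_lip : ∃ K : NNReal, LipschitzOnWith K φ (Ici 0))
    (hφ_pos : ∀ r : ℝ, 0 ≤ r → 0 < φ r)
    (M : Fin N → Fin N → ℝ → ℝ)
    (hM_meas : ∀ i j, Measurable (M i j))
    (hM_range : ∀ i j, ∀ t : ℝ, 0 ≤ t → M i j t ∈ Icc (0:ℝ) 1)
    (x : Fin N → ℝ → ℝ)
    (hx_cont : ∀ i, ContinuousOn (x i) (Ici 0))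
    (hx_sol : ∀ i, ∀ t : ℝ, 0 ≤ t → x i t = x i 0 +
      ∫ s in (0:ℝ)..t,
        (N : ℝ)⁻¹ * ∑ j, M i j s * φ |x i s - x j s| * (x j s - x i s))
    (D₀ : ℝ) (hD₀ : D₀ = ⨆ i, ⨆ j, |x i 0 - x j 0|)
    (Kmax : ℝ) (hKmax : Kmax = sSup (φ '' Icc 0 D₀))
    (ψL : ℝ → ℝ → ℝ → ℝ)
    (hψL : ∀ α z τ, ψL α z τ = α + Real.exp (-(Kmax * τ)) * (z - α))
    (α z : ℝ) (T : ℝ) (hT : 0 < T) (θ : ℝ) (hθ : 0 ≤ θ)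
    (hbelow : ∀ j, α ≤ x j θ)
    (i : Fin N) (τstar : ℝ) (hτstar : τstar ∈ Icc 0 T)
    (hcross : ψL α z τstar ≤ x i (θ + τstar)) :
    ∀ τ ∈ Icc τstar T, ψL α z τ ≤ x i (θ + τ) :=
  left_barrier_general N φ hφ_lip hφ_pos M hM_meas hM_range x hx_cont hx_sol D₀ hD₀ Kmax hKmax ψL
    hψL α z T θ hθ hbelow i τstar hτstar hcross
end

section
/- Let x_1,...,x_N : [0,∞) → ℝ be a solution of the first-order cooperative system with communication failures (fixed scaling) on the real line. Let D(0) := max_{i,j} |x_i(0) − x_j(0)|, let φ_max be the maximum of φ on [0, D(0)] and set K_max := φ_max. For β, z ∈ ℝ and τ ≥ 0 define ψ_R(β, z, τ) := β − e^{−K_max τ}(β − z). Let T > 0, θ ≥ 0 and suppose x_j(θ) ≤ β for all j ∈ {1,...,N}. If there exist an index i and τ* ∈ [0, T] such that x_i(θ + τ*) ≤ ψ_R(β, z, τ*), then x_i(θ + τ) ≤ ψ_R(β, z, τ) for all τ ∈ [τ*, T]. -/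
open MeasureTheory Set Filter

open scoped Topology

set_option maxHeartbeats 1000000

/-- Elementary bound for a single interaction term. -/
lemma term_bd {m p d : ℝ} (h0 : 0 ≤ m) (h1 : m ≤ 1) (hp : 0 ≤ p) :
    m * p * d ≤ p * max d 0 := by
  rcases le_total 0 d with hd | hd
  · rw [max_eq_left hd]
    nlinarith [mul_nonneg (mul_nonneg (sub_nonneg.2 h1) hp) hd]
  · rw [max_eq_right hd]
    nlinarith [mul_nonneg (mul_nonneg h0 hp) (neg_nonneg.2 hd)]

/-- If `f z - f t ≤ ∫_t^z g` for `z ∈ (t, b]` and `g` is continuous near `t`,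
then eventually to the right of `t` the increment of `f` is below `r • (z - t)`
for any `r > g t`. -/
lemma ev_slope {f g : ℝ → ℝ} {t b r : ℝ} (htb : t < b)
    (hg : ContinuousOn g (Icc t b))
    (hint : ∀ z, t < z → z ≤ b → f z - f t ≤ ∫ s in t..z, g s)
    (hr : g t < r) :
    ∀ᶠ z in 𝓝[>] t, z ≤ b → f z - f t < r * (z - t) := by
  set r' : ℝ := (g t + r) / 2 with hr'
  have hr1 : g t < r' := by simp only [hr']; linarith
  have hr2 : r' < r := by simp only [hr']; linarith
  have hct : ContinuousWithinAt g (Icc t b) t := hg t (left_mem_Icc.2 htb.le)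
  have hev : g ⁻¹' (Iio r') ∈ 𝓝[Icc t b] t := hct (Iio_mem_nhds hr1)
  rw [Metric.mem_nhdsWithin_iff] at hev
  obtain ⟨δ, hδ, hsub⟩ := hev
  filter_upwards [Ioo_mem_nhdsGT_of_mem (left_mem_Ico.2 (lt_add_of_pos_right t hδ))]
    with z hz hzb
  have htz : t < z := hz.1
  have hlt : ∀ s ∈ Icc t z, g s < r' := by
    intro s hs
    apply hsub
    constructor
    · rw [Metric.mem_ball, Real.dist_eq, abs_of_nonneg (sub_nonneg.2 hs.1)]
      have : s - t ≤ z - t := by linarith [hs.2]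
      have : z - t < δ := by have := hz.2; linarith
      linarith [hs.2]
    · exact ⟨hs.1, hs.2.trans hzb⟩
  have hgint : IntervalIntegrable g volume t z := by
    have : ContinuousOn g (uIcc t z) := by
      rw [uIcc_of_le htz.le]
      exact hg.mono (Icc_subset_Icc_right hzb)
    exact this.intervalIntegrable
  have h1 : (∫ s in t..z, g s) ≤ ∫ _s in t..z, r' := by
    apply intervalIntegral.integral_mono_on htz.le hgint intervalIntegrable_const
    exact fun s hs => (hlt s hs).le
  have h2 : (∫ _s in t..z, r') = (z - t) * r' := by
    rw [intervalIntegral.integral_const, smul_eq_mul]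
  have h3 := hint z htz hzb
  have h4 : (z - t) * r' < r * (z - t) := by
    rw [mul_comm r (z - t)]
    exact mul_lt_mul_of_pos_left hr2 (by linarith)
  calc f z - f t ≤ ∫ s in t..z, g s := h3
    _ ≤ (z - t) * r' := by rw [← h2]; exact h1
    _ < r * (z - t) := h4

/-- A maximum principle: if each `x j` increases no faster than `∫ g j`, and
`g j t ≤ 0` whenever `j` is a maximal agent at time `t`, then all agents stay
below any bound valid at the initial time `a`. -/
lemma maxdec {n : ℕ} (hn : 0 < n) (x g : Fin n → ℝ → ℝ) {a b : ℝ} (hab : a ≤ b)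
    (hx : ∀ j, ContinuousOn (x j) (Icc a b))
    (hg : ∀ j, ContinuousOn (g j) (Icc a b))
    (hineq : ∀ j t z, a ≤ t → t < z → z ≤ b → x j z - x j t ≤ ∫ s in t..z, g j s)
    (hg0 : ∀ j t, t ∈ Icc a b → (∀ k, x k t ≤ x j t) → g j t ≤ 0)
    (β : ℝ) (hβ : ∀ k, x k a ≤ β) :
    ∀ t ∈ Icc a b, ∀ j, x j t ≤ β := by
  haveI : Nonempty (Fin n) := ⟨⟨0, hn⟩⟩
  have hne : (Finset.univ : Finset (Fin n)).Nonempty := Finset.univ_nonempty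
  set m : ℝ → ℝ := fun t => Finset.univ.sup' hne (fun k => x k t) with hm
  have hmc : ContinuousOn m (Icc a b) := by
    rw [hm]
    exact ContinuousOn.finset_sup'_apply hne (fun k _ => hx k)
  have hle : ∀ t j, x j t ≤ m t := by
    intro t j
    rw [hm]
    exact Finset.le_sup' (fun k => x k t) (Finset.mem_univ j)
  have hma : m a ≤ β := by
    rw [hm]
    exact Finset.sup'_le hne _ fun k _ => hβ k
  have bound : ∀ t ∈ Ico a b, ∀ r, (0:ℝ) < r → ∃ᶠ z in 𝓝[>] t, slope m t z < r := by
    intro t ht r hr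
    have htb : t < b := ht.2
    set F' : Filter ℝ := 𝓝[>] t ⊓ 𝓟 (Iic b) with hF'
    have hF'eq : F' = 𝓝[Ioc t b] t := by
      rw [hF', ← Ioi_inter_Iic, nhdsWithin_inter']
    have hF'ne : F'.NeBot := by
      rw [hF'eq]
      exact mem_closure_iff_nhdsWithin_neBot.1
        (by rw [closure_Ioc htb.ne]; exact ⟨le_rfl, htb.le⟩)
    have hF'le : F' ≤ 𝓝[>] t := inf_le_left
    have hE : ∀ j, ∀ᶠ z in F', x j z < m t ∨ x j z - x j t < r * (z - t) := by
      intro j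
      by_cases hj : ∀ k, x k t ≤ x j t
      · have hgj : g j t < r := lt_of_le_of_lt (hg0 j t (Ico_subset_Icc_self ht) hj) hr
        have hev := ev_slope htb ((hg j).mono (Icc_subset_Icc_left ht.1))
          (fun z h1 h2 => hineq j t z ht.1 h1 h2) hgj
        have h1 : ∀ᶠ z in F', z ≤ b → x j z - x j t < r * (z - t) :=
          hev.filter_mono hF'le
        have h2 : ∀ᶠ z in F', z ≤ b := (inf_le_right : F' ≤ 𝓟 (Iic b)) (mem_principal_self _)
        filter_upwards [h1, h2] with z hz1 hz2
        exact Or.inr (hz1 hz2)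
      · push_neg at hj
        obtain ⟨k, hk⟩ := hj
        have hjt : x j t < m t := lt_of_lt_of_le hk (hle t k)
        have hcont : ContinuousWithinAt (x j) (Icc a b) t := (hx j) t (Ico_subset_Icc_self ht)
        have hev : ∀ᶠ z in 𝓝[Icc a b] t, x j z < m t := hcont (Iio_mem_nhds hjt)
        have hmono : F' ≤ 𝓝[Icc a b] t := by
          rw [hF'eq]
          exact nhdsWithin_mono t (fun z hz => ⟨ht.1.trans hz.1.le, hz.2⟩)
        exact (hev.filter_mono hmono).mono fun z hz => Or.inl hz
    have hall : ∀ᶠ z in F', ∀ j, x j z < m t ∨ x j z - x j t < r * (z - t) :=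
      eventually_all.2 hE
    have hgt : ∀ᶠ z in F', t < z := hF'le self_mem_nhdsWithin
    have hfin : ∀ᶠ z in F', slope m t z < r := by
      filter_upwards [hall, hgt] with z hz hzt
      obtain ⟨k, -, hk⟩ := Finset.exists_mem_eq_sup' hne (fun k => x k z)
      have hmz : m z = x k z := by rw [hm]; exact hk
      have hpos : (0:ℝ) < z - t := sub_pos.2 hzt
      rw [slope_def_field]
      rcases hz k with h | h
      · have : m z - m t < 0 := by rw [hmz]; linarith
        have := div_neg_of_neg_of_pos this hpos
        linarith
      · have hxk : x k t ≤ m t := hle t k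
        rw [div_lt_iff₀ hpos]
        rw [hmz]
        have : x k z - x k t < r * (z - t) := h
        linarith
    exact (hfin.frequently).filter_mono hF'le
  have key : ∀ t ∈ Icc a b, m t ≤ β := by
    intro t ht
    exact image_le_of_liminf_slope_right_le_deriv_boundary (B := fun _ => β)
      (B' := fun _ => (0:ℝ)) hmc hma continuousOn_const
      (fun s _ => hasDerivWithinAt_const s _ β) bound ht
  intro t ht j
  exact (hle t j).trans (key t ht)

/-- The drift field of the cooperative system. -/
noncomputable def Fvec (N : ℕ) (φ : ℝ → ℝ) (M : Fin N → Fin N → ℝ → ℝ)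
    (x : Fin N → ℝ → ℝ) (j : Fin N) (s : ℝ) : ℝ :=
  (N : ℝ)⁻¹ * ∑ k, M j k s * φ |x j s - x k s| * (x k s - x j s)

/-- Right barrier lemma on the real line: if all agents start
(at time `θ`) below `β` and agent `i` crosses the barrier
`ψ_R(β, z, τ) = β - e^{-K_max τ}(β - z)` at some time `τ* ∈ [0, T]`, then it
stays below the barrier on `[τ*, T]`. -/
theorem right_barrier
    (N : ℕ) (hN : 2 ≤ N)
    (φ : ℝ → ℝ)
    (hφ_lip : ∃ K : NNReal, LipschitzOnWith K φ (Ici 0))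
    (hφ_pos : ∀ r : ℝ, 0 ≤ r → 0 < φ r)
    (M : Fin N → Fin N → ℝ → ℝ)
    (hM_meas : ∀ i j, Measurable (M i j))
    (hM_range : ∀ i j, ∀ t : ℝ, 0 ≤ t → M i j t ∈ Icc (0:ℝ) 1)
    (x : Fin N → ℝ → ℝ)
    (hx_cont : ∀ i, ContinuousOn (x i) (Ici 0))
    (hx_sol : ∀ i, ∀ t : ℝ, 0 ≤ t → x i t = x i 0 +
      ∫ s in (0:ℝ)..t,
        (N : ℝ)⁻¹ * ∑ j, M i j s * φ |x i s - x j s| * (x j s - x i s))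
    (D₀ : ℝ) (hD₀ : D₀ = ⨆ i, ⨆ j, |x i 0 - x j 0|)
    (Kmax : ℝ) (hKmax : Kmax = sSup (φ '' Icc 0 D₀))
    (ψR : ℝ → ℝ → ℝ → ℝ)
    (hψR : ∀ β z τ, ψR β z τ = β - Real.exp (-(Kmax * τ)) * (β - z))
    (β z : ℝ) (T : ℝ) (hT : 0 < T) (θ : ℝ) (hθ : 0 ≤ θ)
    (habove : ∀ j, x j θ ≤ β)
    (i : Fin N) (τstar : ℝ) (hτstar : τstar ∈ Icc 0 T)
    (hcross : x i (θ + τstar) ≤ ψR β z τstar) :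
    ∀ τ ∈ Icc τstar T, x i (θ + τ) ≤ ψR β z τ := by
  have hNpos : 0 < N := lt_of_lt_of_le (by norm_num) hN
  have hNR : (0:ℝ) < (N:ℝ) := by exact_mod_cast hNpos
  obtain ⟨K, hK⟩ := hφ_lip
  have hφc : ContinuousOn φ (Ici 0) := hK.continuousOn
  set b : ℝ := θ + T with hbdef
  have hθb : θ ≤ b := by simp only [hbdef]; linarith
  have hb0 : (0:ℝ) ≤ b := hθ.trans hθb
  -- continuity of the coefficient functions
  have hxc2 : ∀ j k : Fin N, ContinuousOn (fun s => φ |x j s - x k s|) (Ici 0) := by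
    intro j k
    have h1 : ContinuousOn (fun s => |x j s - x k s|) (Ici 0) :=
      ((hx_cont j).sub (hx_cont k)).abs
    exact hφc.comp h1 (fun s _ => mem_Ici.2 (abs_nonneg _))
  -- interval integrability of the drift
  have hFint : ∀ (j : Fin N) (t z : ℝ), 0 ≤ t → t ≤ z →
      IntervalIntegrable (Fvec N φ M x j) volume t z := by
    intro j t z ht htz
    have h1 : ∀ k : Fin N, IntervalIntegrable
        (fun s => M j k s * (φ |x j s - x k s| * (x k s - x j s))) volume t z := by
      intro k
      have hcc : ContinuousOn (fun s => φ |x j s - x k s| * (x k s - x j s)) (Icc t z) :=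
        ((hxc2 j k).mul ((hx_cont k).sub (hx_cont j))).mono (fun s hs => ht.trans hs.1)
      obtain ⟨C, hC⟩ := (isCompact_Icc (a := t) (b := z)).exists_bound_of_continuousOn hcc
      rw [intervalIntegrable_iff_integrableOn_Ioc_of_le htz]
      have hmeas : AEStronglyMeasurable
          (fun s => M j k s * (φ |x j s - x k s| * (x k s - x j s)))
          (volume.restrict (Ioc t z)) :=
        ((hM_meas j k).aestronglyMeasurable).mul
          ((hcc.mono Ioc_subset_Icc_self).aestronglyMeasurable measurableSet_Ioc)
      apply Integrable.mono' (integrable_const C) hmeas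
      filter_upwards [ae_restrict_mem measurableSet_Ioc] with s hs
      have hs0 : 0 ≤ s := ht.trans hs.1.le
      have hM := hM_range j k s hs0
      have hM1 : |M j k s| ≤ 1 := by rw [abs_of_nonneg hM.1]; exact hM.2
      have hCs := hC s (Ioc_subset_Icc_self hs)
      rw [Real.norm_eq_abs] at hCs ⊢
      rw [abs_mul]
      calc |M j k s| * |φ |x j s - x k s| * (x k s - x j s)|
          ≤ 1 * C := mul_le_mul hM1 hCs (abs_nonneg _) one_pos.le
        _ = C := one_mul C
    have h2 : IntervalIntegrable
        (fun s => ∑ k, M j k s * (φ |x j s - x k s| * (x k s - x j s))) volume t z := by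
      have h2' := IntervalIntegrable.sum
        (f := fun (k : Fin N) s => M j k s * (φ |x j s - x k s| * (x k s - x j s)))
        Finset.univ (fun k _ => h1 k)
      have h3' : (∑ k : Fin N, fun s => M j k s * (φ |x j s - x k s| * (x k s - x j s)))
          = fun s => ∑ k : Fin N, M j k s * (φ |x j s - x k s| * (x k s - x j s)) := by
        funext s
        simp [Finset.sum_apply]
      rwa [h3'] at h2'
    have h3 := h2.const_mul ((N:ℝ)⁻¹)
    have : Fvec N φ M x j = fun s =>
        (N:ℝ)⁻¹ * ∑ k, M j k s * (φ |x j s - x k s| * (x k s - x j s)) := by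
      funext s; simp only [Fvec, mul_assoc]
    rw [this]
    exact h3
  -- the integral form of the dynamics on subintervals
  have hseg : ∀ (j : Fin N) (t z : ℝ), 0 ≤ t → t ≤ z →
      x j z - x j t = ∫ s in t..z, Fvec N φ M x j s := by
    intro j t z ht htz
    have hz0 : (0:ℝ) ≤ z := ht.trans htz
    have h1 : x j z = x j 0 + ∫ s in (0:ℝ)..z, Fvec N φ M x j s := hx_sol j z hz0
    have h2 : x j t = x j 0 + ∫ s in (0:ℝ)..t, Fvec N φ M x j s := hx_sol j t ht
    have h3 := intervalIntegral.integral_interval_sub_left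
      (hFint j 0 z le_rfl hz0) (hFint j 0 t le_rfl ht)
    rw [h1, h2]
    linarith [h3]
  -- pointwise bound of the drift by the positive-part field
  have hFg : ∀ (j : Fin N) (s : ℝ), 0 ≤ s →
      Fvec N φ M x j s ≤ (N:ℝ)⁻¹ * ∑ k, φ |x j s - x k s| * max (x k s - x j s) 0 := by
    intro j s hs
    simp only [Fvec]
    refine mul_le_mul_of_nonneg_left ?_ (by positivity)
    apply Finset.sum_le_sum
    intro k _
    have hM := hM_range j k s hs
    exact term_bd hM.1 hM.2 (hφ_pos _ (abs_nonneg _)).le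
  -- pointwise bound for the reversed system
  have hFg' : ∀ (j : Fin N) (s : ℝ), 0 ≤ s →
      -(Fvec N φ M x j s) ≤ (N:ℝ)⁻¹ * ∑ k, φ |x j s - x k s| * max (x j s - x k s) 0 := by
    intro j s hs
    have hneg : -(Fvec N φ M x j s) =
        (N:ℝ)⁻¹ * ∑ k, M j k s * φ |x j s - x k s| * (x j s - x k s) := by
      simp only [Fvec]
      rw [← mul_neg, ← Finset.sum_neg_distrib]
      congr 1
      apply Finset.sum_congr rfl
      intro k _
      ring
    rw [hneg]
    refine mul_le_mul_of_nonneg_left ?_ (by positivity)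
    apply Finset.sum_le_sum
    intro k _
    have hM := hM_range j k s hs
    exact term_bd hM.1 hM.2 (hφ_pos _ (abs_nonneg _)).le
  -- continuity of the positive-part fields
  have hgc : ∀ (u : Fin N → Fin N → ℝ → ℝ), (∀ j k, ContinuousOn (u j k) (Ici 0)) →
      ∀ j : Fin N, ContinuousOn
        (fun s => (N:ℝ)⁻¹ * ∑ k, φ |x j s - x k s| * max (u j k s) 0) (Ici 0) := by
    intro u hu j
    apply ContinuousOn.mul continuousOn_const
    apply continuousOn_finset_sum
    intro k _
    exact (hxc2 j k).mul ((hu j k).sup continuousOn_const)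
  -- Step A: all agents stay below β on [θ, b]
  have hβall : ∀ t ∈ Icc θ b, ∀ j, x j t ≤ β := by
    apply maxdec hNpos x
      (fun j s => (N:ℝ)⁻¹ * ∑ k, φ |x j s - x k s| * max (x k s - x j s) 0) hθb
    · exact fun j => (hx_cont j).mono (fun s hs => hθ.trans hs.1)
    · exact fun j => (hgc (fun j k s => x k s - x j s)
        (fun j k => (hx_cont k).sub (hx_cont j)) j).mono (fun s hs => hθ.trans hs.1)
    · intro j t z ht htz hzb
      have ht0 : 0 ≤ t := hθ.trans ht
      rw [hseg j t z ht0 htz.le]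
      apply intervalIntegral.integral_mono_on htz.le (hFint j t z ht0 htz.le)
        (by
          apply ContinuousOn.intervalIntegrable
          rw [uIcc_of_le htz.le]
          exact (hgc (fun j k s => x k s - x j s)
            (fun j k => (hx_cont k).sub (hx_cont j)) j).mono (fun s hs => ht0.trans hs.1))
      intro s hs
      exact hFg j s (ht0.trans hs.1)
    · intro j t ht hmax
      have : ∀ k : Fin N, φ |x j t - x k t| * max (x k t - x j t) 0 = 0 := by
        intro k
        rw [max_eq_right (sub_nonpos.2 (hmax k)), mul_zero]
      rw [Finset.sum_congr rfl (fun k _ => this k), Finset.sum_const, smul_zero, mul_zero]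
    · exact habove
  -- Step B: upper bound by initial max on [0, b]
  have hne : (Finset.univ : Finset (Fin N)).Nonempty := ⟨i, Finset.mem_univ i⟩
  set m0 : ℝ := Finset.univ.sup' hne (fun k => x k 0) with hm0
  set m0' : ℝ := Finset.univ.sup' hne (fun k => -(x k 0)) with hm0'
  have hup : ∀ t ∈ Icc 0 b, ∀ j, x j t ≤ m0 := by
    apply maxdec hNpos x
      (fun j s => (N:ℝ)⁻¹ * ∑ k, φ |x j s - x k s| * max (x k s - x j s) 0) hb0
    · exact fun j => (hx_cont j).mono (fun s hs => hs.1)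
    · exact fun j => (hgc (fun j k s => x k s - x j s)
        (fun j k => (hx_cont k).sub (hx_cont j)) j).mono (fun s hs => hs.1)
    · intro j t z ht htz hzb
      rw [hseg j t z ht htz.le]
      apply intervalIntegral.integral_mono_on htz.le (hFint j t z ht htz.le)
        (by
          apply ContinuousOn.intervalIntegrable
          rw [uIcc_of_le htz.le]
          exact (hgc (fun j k s => x k s - x j s)
            (fun j k => (hx_cont k).sub (hx_cont j)) j).mono (fun s hs => ht.trans hs.1))
      intro s hs
      exact hFg j s (ht.trans hs.1)
    · intro j t ht hmax
      have : ∀ k : Fin N, φ |x j t - x k t| * max (x k t - x j t) 0 = 0 := by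
        intro k
        rw [max_eq_right (sub_nonpos.2 (hmax k)), mul_zero]
      rw [Finset.sum_congr rfl (fun k _ => this k), Finset.sum_const, smul_zero, mul_zero]
    · intro k
      rw [hm0]
      exact Finset.le_sup' (fun k' => x k' 0) (Finset.mem_univ k)
  have hdown : ∀ t ∈ Icc 0 b, ∀ j, -(x j t) ≤ m0' := by
    apply maxdec hNpos (fun j s => -(x j s))
      (fun j s => (N:ℝ)⁻¹ * ∑ k, φ |x j s - x k s| * max (x j s - x k s) 0) hb0
    · exact fun j => ((hx_cont j).neg).mono (fun s hs => hs.1)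
    · exact fun j => (hgc (fun j k s => x j s - x k s)
        (fun j k => (hx_cont j).sub (hx_cont k)) j).mono (fun s hs => hs.1)
    · intro j t z ht htz hzb
      have hx' : -(x j z) - -(x j t) = ∫ s in t..z, -(Fvec N φ M x j s) := by
        rw [intervalIntegral.integral_neg, ← hseg j t z ht htz.le]; ring
      show -(x j z) - -(x j t) ≤ _
      rw [hx']
      apply intervalIntegral.integral_mono_on htz.le (hFint j t z ht htz.le).neg
        (by
          apply ContinuousOn.intervalIntegrable
          rw [uIcc_of_le htz.le]
          exact (hgc (fun j k s => x j s - x k s)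
            (fun j k => (hx_cont j).sub (hx_cont k)) j).mono (fun s hs => ht.trans hs.1))
      intro s hs
      exact hFg' j s (ht.trans hs.1)
    · intro j t ht hmax
      have hmax' : ∀ k : Fin N, x j t ≤ x k t := fun k => by
        have := hmax k; simpa using this
      have : ∀ k : Fin N, φ |x j t - x k t| * max (x j t - x k t) 0 = 0 := by
        intro k
        rw [max_eq_right (sub_nonpos.2 (hmax' k)), mul_zero]
      rw [Finset.sum_congr rfl (fun k _ => this k), Finset.sum_const, smul_zero, mul_zero]
    · intro k
      rw [hm0']
      exact Finset.le_sup' (fun k' => -(x k' 0)) (Finset.mem_univ k)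
  -- Step C: diameter bound
  have hbdd0 : ∀ p q : Fin N, |x p 0 - x q 0| ≤ D₀ := by
    intro p q
    rw [hD₀]
    calc |x p 0 - x q 0| ≤ ⨆ q', |x p 0 - x q' 0| :=
          le_ciSup (f := fun q' => |x p 0 - x q' 0|)
            (Set.Finite.bddAbove (Set.finite_range _)) q
      _ ≤ ⨆ p', ⨆ q', |x p' 0 - x q' 0| :=
          le_ciSup (f := fun p' => ⨆ q', |x p' 0 - x q' 0|)
            (Set.Finite.bddAbove (Set.finite_range _)) p
  have hD₀0 : 0 ≤ D₀ := by simpa using hbdd0 i i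
  have hsum0 : m0 + m0' ≤ D₀ := by
    obtain ⟨p, -, hp⟩ := Finset.exists_mem_eq_sup' hne (fun k => x k 0)
    obtain ⟨q, -, hq⟩ := Finset.exists_mem_eq_sup' hne (fun k => -(x k 0))
    rw [hm0, hp, hm0', hq]
    calc x p 0 + -(x q 0) = x p 0 - x q 0 := by ring
      _ ≤ |x p 0 - x q 0| := le_abs_self _
      _ ≤ D₀ := hbdd0 p q
  have hdiam : ∀ s ∈ Icc (0:ℝ) b, ∀ j k : Fin N, |x j s - x k s| ≤ D₀ := by
    intro s hs j k
    have h1 : x j s ≤ m0 := hup s hs j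
    have h2 : -(x k s) ≤ m0' := hdown s hs k
    have h3 : x k s ≤ m0 := hup s hs k
    have h4 : -(x j s) ≤ m0' := hdown s hs j
    rw [abs_sub_le_iff]
    constructor <;> linarith
  -- Step D: φ is bounded by Kmax on [0, D₀]
  have hKb : ∀ r : ℝ, 0 ≤ r → r ≤ D₀ → φ r ≤ Kmax := by
    intro r hr0 hrD
    rw [hKmax]
    have hcomp : IsCompact (φ '' Icc 0 D₀) :=
      (isCompact_Icc).image_of_continuousOn (hφc.mono (fun s hs => hs.1))
    exact le_csSup hcomp.bddAbove ⟨r, ⟨hr0, hrD⟩, rfl⟩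
  have hKm0 : 0 ≤ Kmax := le_trans (hφ_pos 0 le_rfl).le (hKb 0 le_rfl hD₀0)
  -- Step E: barrier drift bound for agent i on [θ, b]
  have hFb : ∀ s ∈ Icc θ b, Fvec N φ M x i s ≤ Kmax * (β - x i s) := by
    intro s hs
    have hs0 : 0 ≤ s := hθ.trans hs.1
    have hs0b : s ∈ Icc (0:ℝ) b := ⟨hs0, hs.2⟩
    have hxiβ : x i s ≤ β := hβall s hs i
    calc Fvec N φ M x i s
        ≤ (N:ℝ)⁻¹ * ∑ k, φ |x i s - x k s| * max (x k s - x i s) 0 := hFg i s hs0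
      _ ≤ (N:ℝ)⁻¹ * ∑ k, Kmax * (β - x i s) := by
          refine mul_le_mul_of_nonneg_left ?_ (by positivity)
          apply Finset.sum_le_sum
          intro k _
          have hφk : φ |x i s - x k s| ≤ Kmax :=
            hKb _ (abs_nonneg _) (hdiam s hs0b i k)
          have hmaxle : max (x k s - x i s) 0 ≤ β - x i s := by
            apply max_le _ (by linarith)
            have : x k s ≤ β := hβall s hs k
            linarith
          have hmax0 : (0:ℝ) ≤ max (x k s - x i s) 0 := le_max_right _ _
          calc φ |x i s - x k s| * max (x k s - x i s) 0
              ≤ Kmax * max (x k s - x i s) 0 :=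
                mul_le_mul_of_nonneg_right hφk hmax0
            _ ≤ Kmax * (β - x i s) := mul_le_mul_of_nonneg_left hmaxle hKm0
      _ = Kmax * (β - x i s) := by
          rw [Finset.sum_const, Finset.card_univ, Fintype.card_fin, nsmul_eq_mul]
          field_simp
  -- Step F: Grönwall comparison with the barrier
  intro τ hτ
  have hτs0 : 0 ≤ τstar := hτstar.1
  set f : ℝ → ℝ := fun u => x i (θ + u) - β with hfdef
  set δ : ℝ := -(Real.exp (-(Kmax * τstar)) * (β - z)) with hδdef
  have hmaps : ∀ u ∈ Icc τstar T, θ + u ∈ Ici (0:ℝ) := by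
    intro u hu
    simp only [mem_Ici]
    linarith [hu.1]
  have hfc : ContinuousOn f (Icc τstar T) := by
    apply ContinuousOn.sub _ continuousOn_const
    exact (hx_cont i).comp (continuous_const.add continuous_id).continuousOn hmaps
  have hf' : ∀ u ∈ Ico τstar T, ∀ r, Kmax * (β - x i (θ + u)) < r →
      ∃ᶠ w in 𝓝[>] u, (w - u)⁻¹ * (f w - f u) < r := by
    intro u hu r hr
    have huT : u < T := hu.2
    have hu0 : 0 ≤ u := hτs0.trans hu.1
    have hg : ContinuousOn (fun w => Kmax * (β - x i (θ + w))) (Icc u T) := by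
      apply ContinuousOn.mul continuousOn_const
      apply ContinuousOn.sub continuousOn_const
      apply (hx_cont i).comp (continuous_const.add continuous_id).continuousOn
      intro w hw
      show θ + w ∈ Ici 0
      exact mem_Ici.2 (by linarith [hw.1])
    have hint : ∀ w, u < w → w ≤ T → f w - f u ≤ ∫ s in u..w, Kmax * (β - x i (θ + s)) := by
      intro w huw hwT
      have h0uw : (0:ℝ) ≤ θ + u := by linarith
      have h1 : f w - f u = x i (θ + w) - x i (θ + u) := by simp only [hfdef]; ring
      have h2 : x i (θ + w) - x i (θ + u) = ∫ s in (θ+u)..(θ+w), Fvec N φ M x i s :=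
        hseg i (θ + u) (θ + w) h0uw (by linarith)
      have hsub : Icc (θ+u) (θ+w) ⊆ Icc θ b := by
        apply Icc_subset_Icc (by linarith)
        simp only [hbdef]; linarith
      have h3 : (∫ s in (θ+u)..(θ+w), Fvec N φ M x i s)
          ≤ ∫ s in (θ+u)..(θ+w), Kmax * (β - x i s) := by
        apply intervalIntegral.integral_mono_on (by linarith)
          (hFint i (θ+u) (θ+w) h0uw (by linarith))
        · apply ContinuousOn.intervalIntegrable
          rw [uIcc_of_le (by linarith : θ + u ≤ θ + w)]
          apply ContinuousOn.mul continuousOn_const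
          apply ContinuousOn.sub continuousOn_const
          apply (hx_cont i).mono
          intro s hs
          simp only [mem_Ici]
          linarith [hs.1]
        · intro s hs
          exact hFb s (hsub hs)
      have h4 : (∫ s in u..w, Kmax * (β - x i (θ + s)))
          = ∫ s in (θ+u)..(θ+w), Kmax * (β - x i s) :=
        intervalIntegral.integral_comp_add_left (fun s => Kmax * (β - x i s)) θ
      rw [h1, h2, h4]
      exact h3
    have hev := ev_slope huT hg hint hr
    have hIoc : ∀ᶠ w in 𝓝[>] u, w ∈ Ioc u T :=
      Ioc_mem_nhdsGT_of_mem ⟨le_rfl, huT⟩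
    have : ∀ᶠ w in 𝓝[>] u, (w - u)⁻¹ * (f w - f u) < r := by
      filter_upwards [hev, hIoc] with w h1 h2
      have hwu : 0 < w - u := sub_pos.2 h2.1
      have := h1 h2.2
      rw [inv_mul_eq_div, div_lt_iff₀ hwu]
      linarith
    exact this.frequently
  have hbound : ∀ u ∈ Ico τstar T,
      Kmax * (β - x i (θ + u)) ≤ (-Kmax) * f u + 0 := by
    intro u _
    apply le_of_eq
    simp only [hfdef]
    ring
  have hfa : f τstar ≤ δ := by
    have := hcross
    rw [hψR] at this
    simp only [hfdef, hδdef]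
    linarith
  have hgron := le_gronwallBound_of_liminf_deriv_right_le
    (f := f) (f' := fun u => Kmax * (β - x i (θ + u))) (δ := δ) (K := -Kmax) (ε := 0)
    hfc hf' hfa hbound τ hτ
  rw [gronwallBound_ε0] at hgron
  have hee : Real.exp (-(Kmax * τstar)) * Real.exp (-Kmax * (τ - τstar))
      = Real.exp (-(Kmax * τ)) := by
    rw [← Real.exp_add]
    congr 1
    ring
  have hexp : δ * Real.exp (-Kmax * (τ - τstar)) = -(Real.exp (-(Kmax * τ)) * (β - z)) := by
    rw [hδdef, ← hee]
    ring
  rw [hexp] at hgron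
  simp only [hfdef] at hgron
  rw [hψR]
  linarith
end

section
/- Let x_1,...,x_N : [0,∞) → ℝ be a solution of the first-order cooperative system with communication failures (fixed scaling) on the real line, and fix T, μ > 0 such that every weight M_ij satisfies the Persistent Excitation condition with parameters μ, T. Let D(t) := max_{i,j} |x_i(t) − x_j(t)|, let φ_min and φ_max be the minimum and maximum of φ on [0, D(0)], and set K_min := φ_min, K_max := φ_max, γ̃ := μ K_min / (N(1 + K_max T) + 2 μ K_min). Then for all n ∈ ℕ, D(nT) ≤ (1 − exp(−K_max T) γ̃)^n · D(0). -/
/-!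
With the weights `a i j = M i j * φ |x i - x j| / N` the system is a linear consensus system
`x i' = ∑ j, a i j * (x j - x i)` with nonnegative weights. For such systems the interval spanned
by the agents at any time stays invariant: the total excess over its upper end satisfies a
Grönwall inequality with zero initial value. Hence all distances stay in `[0, D 0]`, the row
sums of the weights are at most `Kmax`, and by Persistent Excitation `∫ a i j ≥ μ * Kmin / N`
over every window of length `T`. On a window `[t₀, t₀ + T]` take the extreme agents `i`, `j` at
the end. If they are close, we are done. Otherwise a backward Grönwall estimate shows that they
were far apart during the whole window, and their mutual attraction, integrated against the
Persistent Excitation bound, contracts their distance by a definite factor. Iterate over the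
windows.
-/

open MeasureTheory Set Topology

theorem le_mul_exp_of_le_add_integral {u : ℝ → ℝ} {a b c K : ℝ} (hK : 0 ≤ K)
    (hu : ContinuousOn u (Icc a b)) (h : ∀ t ∈ Icc a b, u t ≤ c + K * ∫ s in a..t, u s) :
    ∀ t ∈ Icc a b, u t ≤ c * Real.exp (K * (t - a)) := by
  intro t ht
  set G : ℝ → ℝ := fun t => c + K * ∫ s in a..t, u s
  have hG : ContinuousOn G (Icc a b) := by
    rw [← uIcc_of_le (ht.1.trans ht.2)] at hu ⊢
    exact continuousOn_const.add ((intervalIntegral.continuousOn_primitive_interval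
      (hu.integrableOn_compact isCompact_uIcc)).const_mul K)
  have hG' : ∀ t ∈ Ico a b, HasDerivWithinAt G (K * u t) (Ici t) t := by
    intro t ht
    have hIcc : Icc a b ∈ 𝓝[>] t := Icc_mem_nhdsGT_of_mem ht
    refine ((intervalIntegral.integral_hasDerivWithinAt_right (t := Ioi t)
      ((hu.mono (Icc_subset_Icc_right ht.2.le)).intervalIntegrable_of_Icc ht.1) ?_ ?_).const_mul
        K).const_add c
    · exact (hu.stronglyMeasurableAtFilter_nhdsWithin measurableSet_Icc t).filter_mono
        (nhdsWithin_le_of_mem hIcc)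
    · exact (hu t (Ico_subset_Icc_self ht)).mono_of_mem_nhdsWithin hIcc
  have hGronwall := le_gronwallBound_of_liminf_deriv_right_le (δ := c) (K := K) (ε := 0) hG
    (fun t ht _ hr => (hG' t ht).liminf_right_slope_le hr) (by simp [G])
    (fun t ht => by simpa using mul_le_mul_of_nonneg_left (h t (Ico_subset_Icc_self ht)) hK) t ht
  simpa [gronwallBound_ε0] using (h t ht).trans hGronwall

theorem le_mul_exp_of_le_add_integral_rev {u : ℝ → ℝ} {a b c K : ℝ} (hK : 0 ≤ K)
    (hu : ContinuousOn u (Icc a b)) (h : ∀ t ∈ Icc a b, u t ≤ c + K * ∫ s in t..b, u s) :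
    ∀ t ∈ Icc a b, u t ≤ c * Real.exp (K * (b - t)) := by
  have hneg : ∀ t ∈ Icc (-b) (-a), -t ∈ Icc a b := fun t ht =>
    ⟨by linarith [ht.2], by linarith [ht.1]⟩
  have hreflected := le_mul_exp_of_le_add_integral (u := fun t => u (-t)) hK
    (hu.comp continuousOn_neg hneg) fun t ht => by
      simpa [intervalIntegral.integral_comp_neg] using h (-t) (hneg t ht)
  intro t ht
  simpa [neg_add_eq_sub] using hreflected (-t) ⟨by linarith [ht.2], by linarith [ht.1]⟩

theorem ContinuousOn.exists_le_forall_lt {f : ℝ → ℝ} {a b c : ℝ} (hab : a ≤ b)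
    (hf : ContinuousOn f (Icc a b)) (ha : f a ≤ c) :
    ∃ σ ∈ Icc a b, f σ ≤ c ∧ ∀ s ∈ Ioc σ b, c < f s := by
  set S := Icc a b ∩ f ⁻¹' Iic c
  have hS : IsClosed S := hf.preimage_isClosed_of_isClosed isClosed_Icc isClosed_Iic
  have hSbdd : BddAbove S := bddAbove_Icc.mono inter_subset_left
  obtain ⟨hσ, hfσ⟩ := hS.csSup_mem ⟨a, ⟨le_rfl, hab⟩, ha⟩ hSbdd
  refine ⟨sSup S, hσ, hfσ, fun s hs => lt_of_not_ge fun hfs => ?_⟩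
  exact hs.1.not_ge (le_csSup hSbdd ⟨⟨hσ.1.trans hs.1.le, hs.2⟩, hfs⟩)

theorem sum_mul_sub_le {ι : Type*} [Fintype ι] {w y : ι → ℝ} {m : ℝ} (hw : ∀ k, 0 ≤ w k)
    (hy : ∀ k, y k ≤ m) (c : ℝ) (j : ι) :
    ∑ k, w k * (y k - c) ≤ (∑ k, w k) * (m - c) - w j * (m - y j) := by
  calc ∑ k, w k * (y k - c) = (∑ k, w k) * (m - c) - ∑ k, w k * (m - y k) := by
        rw [Finset.sum_mul, ← Finset.sum_sub_distrib]
        exact Finset.sum_congr rfl fun k _ => by ring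
    _ ≤ (∑ k, w k) * (m - c) - w j * (m - y j) :=
        sub_le_sub_left (Finset.single_le_sum (fun k _ => mul_nonneg (hw k) (sub_nonneg.2 (hy k)))
          (Finset.mem_univ j)) _

section Consensus

variable {ι : Type*} [Fintype ι]

def consensusVelocity (a : ι → ι → ℝ → ℝ) (x : ι → ℝ → ℝ) (i : ι) (s : ℝ) : ℝ :=
  ∑ j, a i j s * (x j s - x i s)

theorem consensusVelocity_neg (a : ι → ι → ℝ → ℝ) (x : ι → ℝ → ℝ) (i : ι) (s : ℝ) :
    consensusVelocity a (fun k t => -x k t) i s = -consensusVelocity a x i s := by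
  simp only [consensusVelocity, ← Finset.sum_neg_distrib]
  exact Finset.sum_congr rfl fun j _ => by ring

theorem intervalIntegrable_consensusVelocity {a : ι → ι → ℝ → ℝ} {x : ι → ℝ → ℝ} {s t : ℝ}
    (ha : ∀ i j, IntervalIntegrable (a i j) volume s t) (hx : ∀ i, ContinuousOn (x i) (uIcc s t))
    (i : ι) : IntervalIntegrable (consensusVelocity a x i) volume s t := by
  have := IntervalIntegrable.sum Finset.univ (f := fun j s => a i j s * (x j s - x i s))
    fun j _ => (ha i j).mul_continuousOn ((hx j).sub (hx i))
  rw [Finset.sum_fn] at this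
  exact this

noncomputable def consensusRate (K T α : ℝ) : ℝ :=
  1 - Real.exp (-(K * T)) * (α / (1 + K * T + 2 * α))

theorem consensusRate_nonneg {K T α : ℝ} (hK : 0 ≤ K) (hT : 0 ≤ T) (hα : 0 ≤ α) :
    0 ≤ consensusRate K T α := by
  have he : Real.exp (-(K * T)) ≤ 1 := Real.exp_le_one_iff.2 (by nlinarith)
  have hγ : α / (1 + K * T + 2 * α) ≤ 1 := div_le_one_of_le₀ (by nlinarith) (by positivity)
  unfold consensusRate
  nlinarith [mul_le_mul he hγ (by positivity) zero_le_one]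

structure IsConsensusSolutionOn (a : ι → ι → ℝ → ℝ) (x : ι → ℝ → ℝ) (t₀ t₁ K : ℝ) : Prop where
  continuousOn : ∀ i, ContinuousOn (x i) (Icc t₀ t₁)
  intervalIntegrable : ∀ i j, IntervalIntegrable (a i j) volume t₀ t₁
  nonneg : ∀ i j, ∀ s ∈ Icc t₀ t₁, 0 ≤ a i j s
  sum_le : ∀ i, ∀ s ∈ Icc t₀ t₁, ∑ j, a i j s ≤ K
  eq_add_integral : ∀ i, ∀ t ∈ Icc t₀ t₁, x i t = x i t₀ + ∫ s in t₀..t, consensusVelocity a x i s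

namespace IsConsensusSolutionOn

variable {a : ι → ι → ℝ → ℝ} {x : ι → ℝ → ℝ} {t₀ t₁ K : ℝ}

theorem bound_nonneg (h : IsConsensusSolutionOn a x t₀ t₁ K) (i : ι) (ht : t₀ ≤ t₁) : 0 ≤ K :=
  (Finset.sum_nonneg fun j _ => h.nonneg i j t₀ ⟨le_rfl, ht⟩).trans (h.sum_le i t₀ ⟨le_rfl, ht⟩)

theorem intervalIntegrable_velocity (h : IsConsensusSolutionOn a x t₀ t₁ K) (i : ι) {s t : ℝ}
    (hs : s ∈ Icc t₀ t₁) (ht : t ∈ Icc t₀ t₁) :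
    IntervalIntegrable (consensusVelocity a x i) volume s t := by
  have hI : uIcc t₀ t₁ = Icc t₀ t₁ := uIcc_of_le (hs.1.trans hs.2)
  refine (intervalIntegrable_consensusVelocity h.intervalIntegrable
    (fun k => hI ▸ h.continuousOn k) i).mono_set ?_
  rw [hI]
  exact uIcc_subset_Icc hs ht

theorem sub_eq_integral (h : IsConsensusSolutionOn a x t₀ t₁ K) (i : ι) {s t : ℝ}
    (hs : s ∈ Icc t₀ t₁) (ht : t ∈ Icc t₀ t₁) :
    x i t - x i s = ∫ r in s..t, consensusVelocity a x i r := by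
  have ht₀ : t₀ ∈ Icc t₀ t₁ := ⟨le_rfl, hs.1.trans hs.2⟩
  rw [h.eq_add_integral i t ht, h.eq_add_integral i s hs,
    ← intervalIntegral.integral_interval_sub_left (h.intervalIntegrable_velocity i ht₀ ht)
      (h.intervalIntegrable_velocity i ht₀ hs)]
  ring

theorem neg (h : IsConsensusSolutionOn a x t₀ t₁ K) :
    IsConsensusSolutionOn a (fun k t => -x k t) t₀ t₁ K where
  continuousOn i := (h.continuousOn i).neg
  intervalIntegrable := h.intervalIntegrable
  nonneg := h.nonneg
  sum_le := h.sum_le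
  eq_add_integral i t ht := by
    simp only [consensusVelocity_neg, intervalIntegral.integral_neg, h.eq_add_integral i t ht]
    ring

theorem velocity_le_excess (h : IsConsensusSolutionOn a x t₀ t₁ K) {A s : ℝ}
    (hs : s ∈ Icc t₀ t₁) {i : ι} (hi : A < x i s) :
    consensusVelocity a x i s ≤ K * ∑ k, max (x k s - A) 0 := by
  have hexcess : 0 ≤ ∑ k, max (x k s - A) 0 := Finset.sum_nonneg fun k _ => le_max_right _ _
  calc consensusVelocity a x i s ≤ ∑ k, a i k s * ∑ l, max (x l s - A) 0 := by
        refine Finset.sum_le_sum fun k _ => mul_le_mul_of_nonneg_left ?_ (h.nonneg i k s hs)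
        exact (by linarith : x k s - x i s ≤ x k s - A).trans ((le_max_left _ _).trans
          (Finset.single_le_sum (f := fun l => max (x l s - A) 0) (fun l _ => le_max_right _ _)
            (Finset.mem_univ k)))
    _ ≤ K * ∑ k, max (x k s - A) 0 := by
        rw [← Finset.sum_mul]
        exact mul_le_mul_of_nonneg_right (h.sum_le i s hs) hexcess

theorem sub_le_integral_excess (h : IsConsensusSolutionOn a x t₀ t₁ K) {A : ℝ}
    (hA : ∀ k, x k t₀ ≤ A) {s : ℝ} (hs : s ∈ Icc t₀ t₁) (i : ι) :
    x i s - A ≤ K * ∫ r in t₀..s, ∑ k, max (x k r - A) 0 := by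
  set u : ℝ → ℝ := fun r => ∑ k, max (x k r - A) 0
  have hK : 0 ≤ K := h.bound_nonneg i (hs.1.trans hs.2)
  have hu_nonneg : ∀ r, 0 ≤ u r := fun r => Finset.sum_nonneg fun k _ => le_max_right _ _
  have hu : ∀ {p q}, p ∈ Icc t₀ t₁ → q ∈ Icc t₀ t₁ → IntervalIntegrable u volume p q :=
    fun hp hq => ((continuousOn_finsetSum _ fun k _ => ContinuousOn.sup ((h.continuousOn k).sub
      continuousOn_const) continuousOn_const).mono (uIcc_subset_Icc hp hq)).intervalIntegrable
  by_cases his : x i s ≤ A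
  · exact (sub_nonpos.2 his).trans (mul_nonneg hK
      (intervalIntegral.integral_nonneg hs.1 fun r _ => hu_nonneg r))
  obtain ⟨σ, hσ, hxσ, hafter⟩ :=
    ((h.continuousOn i).mono (Icc_subset_Icc_right hs.2)).exists_le_forall_lt hs.1 (hA i)
  have hσ' : σ ∈ Icc t₀ t₁ := ⟨hσ.1, hσ.2.trans hs.2⟩
  calc x i s - A ≤ x i s - x i σ := by linarith
    _ = ∫ r in σ..s, consensusVelocity a x i r := h.sub_eq_integral i hσ' hs
    _ ≤ ∫ r in σ..s, K * u r :=
        intervalIntegral.integral_mono_on_of_le_Ioo hσ.2 (h.intervalIntegrable_velocity i hσ' hs)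
          ((hu hσ' hs).const_mul K) fun r hr =>
            h.velocity_le_excess ⟨hσ.1.trans hr.1.le, hr.2.le.trans hs.2⟩ (hafter r ⟨hr.1, hr.2.le⟩)
    _ ≤ K * ∫ r in t₀..s, u r := by
        rw [intervalIntegral.integral_const_mul]
        exact mul_le_mul_of_nonneg_left (intervalIntegral.integral_mono_interval hσ.1 hσ.2 le_rfl
          (ae_of_all _ hu_nonneg) (hu ⟨le_rfl, hs.1.trans hs.2⟩ hs)) hK

theorem le_of_forall_le_start (h : IsConsensusSolutionOn a x t₀ t₁ K) {A : ℝ}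
    (hA : ∀ k, x k t₀ ≤ A) : ∀ t ∈ Icc t₀ t₁, ∀ i, x i t ≤ A := by
  intro t ht i
  have hK : 0 ≤ K := h.bound_nonneg i (ht.1.trans ht.2)
  set u : ℝ → ℝ := fun s => ∑ k, max (x k s - A) 0
  have hu_nonneg : ∀ s, 0 ≤ u s := fun s => Finset.sum_nonneg fun k _ => le_max_right _ _
  have hgronwall : ∀ s ∈ Icc t₀ t₁, u s ≤ 0 + (Fintype.card ι * K) * ∫ r in t₀..s, u r := by
    intro s hs
    calc u s ≤ ∑ _k : ι, K * ∫ r in t₀..s, u r := Finset.sum_le_sum fun k _ =>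
          max_le (h.sub_le_integral_excess hA hs k)
            (mul_nonneg hK (intervalIntegral.integral_nonneg hs.1 fun r _ => hu_nonneg r))
      _ = 0 + (Fintype.card ι * K) * ∫ r in t₀..s, u r := by simp [mul_assoc]
  have hu_zero : u t ≤ 0 := by
    simpa using le_mul_exp_of_le_add_integral (by positivity) (continuousOn_finsetSum _
      fun k _ => ContinuousOn.sup ((h.continuousOn k).sub continuousOn_const) continuousOn_const)
      hgronwall t ht
  have := (Finset.single_le_sum (f := fun k => max (x k t - A) 0) (fun k _ => le_max_right _ _)
    (Finset.mem_univ i)).trans hu_zero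
  exact sub_nonpos.1 (max_le_iff.1 this).1

theorem ge_of_forall_ge_start (h : IsConsensusSolutionOn a x t₀ t₁ K) {B : ℝ}
    (hB : ∀ k, B ≤ x k t₀) : ∀ t ∈ Icc t₀ t₁, ∀ i, B ≤ x i t := fun t ht i =>
  neg_le_neg_iff.1 (h.neg.le_of_forall_le_start (A := -B) (fun k => neg_le_neg (hB k)) t ht i)

theorem velocity_le (h : IsConsensusSolutionOn a x t₀ t₁ K) {A : ℝ} (hA : ∀ k, x k t₀ ≤ A)
    {s : ℝ} (hs : s ∈ Icc t₀ t₁) (i j : ι) :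
    consensusVelocity a x i s ≤ K * (A - x i s) - a i j s * (A - x j s) := by
  have hle : ∀ k, x k s ≤ A := h.le_of_forall_le_start hA s hs
  calc consensusVelocity a x i s ≤ (∑ k, a i k s) * (A - x i s) - a i j s * (A - x j s) :=
        sum_mul_sub_le (fun k => h.nonneg i k s hs) hle _ j
    _ ≤ K * (A - x i s) - a i j s * (A - x j s) :=
        sub_le_sub_right (mul_le_mul_of_nonneg_right (h.sum_le i s hs) (sub_nonneg.2 (hle i))) _

theorem sub_velocity_le (h : IsConsensusSolutionOn a x t₀ t₁ K) {A B : ℝ}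
    (hA : ∀ k, x k t₀ ≤ A) (hB : ∀ k, B ≤ x k t₀) {s : ℝ} (hs : s ∈ Icc t₀ t₁) (i j : ι) :
    consensusVelocity a x i s - consensusVelocity a x j s ≤
      K * ((A - x i s) + (x j s - B)) - (a i j s * (A - x j s) + a j i s * (x i s - B)) := by
  have hi := h.velocity_le hA hs i j
  have hj := h.neg.velocity_le (A := -B) (fun k => neg_le_neg (hB k)) hs j i
  simp only [consensusVelocity_neg] at hj
  linarith

theorem gap_le_mul_exp (h : IsConsensusSolutionOn a x t₀ t₁ K) {A B : ℝ}
    (hA : ∀ k, x k t₀ ≤ A) (hB : ∀ k, B ≤ x k t₀) (i j : ι) {s : ℝ} (hs : s ∈ Icc t₀ t₁) :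
    (A - x i s) + (x j s - B) ≤ ((A - x i t₁) + (x j t₁ - B)) * Real.exp (K * (t₁ - t₀)) := by
  have ht₁ : t₁ ∈ Icc t₀ t₁ := ⟨hs.1.trans hs.2, le_rfl⟩
  have hK : 0 ≤ K := h.bound_nonneg i ht₁.1
  have hgap : ContinuousOn (fun s => (A - x i s) + (x j s - B)) (Icc t₀ t₁) :=
    (continuousOn_const.sub (h.continuousOn i)).add ((h.continuousOn j).sub continuousOn_const)
  have hineq : ∀ s ∈ Icc t₀ t₁,
      (A - x i s) + (x j s - B) ≤ ((A - x i t₁) + (x j t₁ - B)) +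
        K * ∫ r in s..t₁, ((A - x i r) + (x j r - B)) := by
    intro s hs
    have hmono : ∫ r in s..t₁, (consensusVelocity a x i r - consensusVelocity a x j r) ≤
        ∫ r in s..t₁, K * ((A - x i r) + (x j r - B)) := by
      refine intervalIntegral.integral_mono_on hs.2 ((h.intervalIntegrable_velocity i hs ht₁).sub
        (h.intervalIntegrable_velocity j hs ht₁))
        (((hgap.mono (Icc_subset_Icc_left hs.1)).intervalIntegrable_of_Icc hs.2).const_mul K)
        fun r hr => ?_
      have hr' : r ∈ Icc t₀ t₁ := ⟨hs.1.trans hr.1, hr.2⟩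
      nlinarith [h.sub_velocity_le hA hB hr' i j, h.nonneg i j r hr', h.nonneg j i r hr',
        h.le_of_forall_le_start hA r hr' j, h.ge_of_forall_ge_start hB r hr' i]
    rw [intervalIntegral.integral_sub (h.intervalIntegrable_velocity i hs ht₁)
      (h.intervalIntegrable_velocity j hs ht₁), ← h.sub_eq_integral i hs ht₁,
      ← h.sub_eq_integral j hs ht₁, intervalIntegral.integral_const_mul] at hmono
    linarith
  refine (le_mul_exp_of_le_add_integral_rev hK hgap hineq s hs).trans
    (mul_le_mul_of_nonneg_left (Real.exp_le_exp.2 ?_) ?_)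
  · exact mul_le_mul_of_nonneg_left (by linarith [hs.1]) hK
  · linarith [h.le_of_forall_le_start hA t₁ ht₁ i, h.ge_of_forall_ge_start hB t₁ ht₁ j]

theorem sub_le_of_gap_le {T : ℝ} (h : IsConsensusSolutionOn a x t₀ (t₀ + T) K) (hT : 0 ≤ T)
    {α : ℝ} (hPE : ∀ i j, α ≤ ∫ s in t₀..t₀ + T, a i j s) {A B : ℝ} (hA : ∀ k, x k t₀ ≤ A)
    (hB : ∀ k, B ≤ x k t₀) (i j : ι) {δ : ℝ} (hδ : δ ≤ A - B)
    (hgap : ∀ s ∈ Icc t₀ (t₀ + T), (A - x i s) + (x j s - B) ≤ δ) :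
    x i (t₀ + T) - x j (t₀ + T) ≤ (A - B) + K * T * δ - 2 * α * (A - B - δ) := by
  have hI : t₀ ≤ t₀ + T := by linarith
  have ht₀ : t₀ ∈ Icc t₀ (t₀ + T) := ⟨le_rfl, hI⟩
  have ht₁ : t₀ + T ∈ Icc t₀ (t₀ + T) := ⟨hI, le_rfl⟩
  have hK : 0 ≤ K := h.bound_nonneg i hI
  set c := A - B - δ
  have hv : IntervalIntegrable (fun s => consensusVelocity a x i s - consensusVelocity a x j s)
      volume t₀ (t₀ + T) :=
    (h.intervalIntegrable_velocity i ht₀ ht₁).sub (h.intervalIntegrable_velocity j ht₀ ht₁)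
  have haa : IntervalIntegrable (fun s => (a i j s + a j i s) * c) volume t₀ (t₀ + T) :=
    ((h.intervalIntegrable i j).add (h.intervalIntegrable j i)).mul_const c
  have hpointwise : ∀ s ∈ Icc t₀ (t₀ + T),
      consensusVelocity a x i s - consensusVelocity a x j s ≤ K * δ - (a i j s + a j i s) * c := by
    intro s hs
    have hAs := h.le_of_forall_le_start hA s hs
    have hBs := h.ge_of_forall_ge_start hB s hs
    nlinarith [h.sub_velocity_le hA hB hs i j, mul_le_mul_of_nonneg_left (hgap s hs) hK,
      mul_le_mul_of_nonneg_left (show c ≤ A - x j s by linarith [hAs i, hgap s hs])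
        (h.nonneg i j s hs),
      mul_le_mul_of_nonneg_left (show c ≤ x i s - B by linarith [hBs j, hgap s hs])
        (h.nonneg j i s hs)]
  have hintegral := intervalIntegral.integral_mono_on hI hv
    (intervalIntegrable_const.sub haa) hpointwise
  rw [intervalIntegral.integral_sub (h.intervalIntegrable_velocity i ht₀ ht₁)
    (h.intervalIntegrable_velocity j ht₀ ht₁), ← h.sub_eq_integral i ht₀ ht₁,
    ← h.sub_eq_integral j ht₀ ht₁, intervalIntegral.integral_sub intervalIntegrable_const haa,
    intervalIntegral.integral_const, intervalIntegral.integral_mul_const,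
    intervalIntegral.integral_add (h.intervalIntegrable i j) (h.intervalIntegrable j i),
    add_sub_cancel_left, smul_eq_mul] at hintegral
  nlinarith [hA i, hB j, mul_le_mul_of_nonneg_right (add_le_add (hPE i j) (hPE j i))
    (sub_nonneg.2 hδ)]

theorem sub_le_of_persistentExcitation {T : ℝ} (h : IsConsensusSolutionOn a x t₀ (t₀ + T) K)
    (hT : 0 ≤ T) {α : ℝ} (hα : 0 ≤ α) (hPE : ∀ i j, α ≤ ∫ s in t₀..t₀ + T, a i j s) {A B : ℝ}
    (hA : ∀ k, x k t₀ ≤ A) (hB : ∀ k, B ≤ x k t₀) (i j : ι) :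
    x i (t₀ + T) - x j (t₀ + T) ≤ consensusRate K T α * (A - B) := by
  have hK : 0 ≤ K := h.bound_nonneg i (by linarith)
  have hAB : 0 ≤ A - B := by linarith [hA i, hB i]
  unfold consensusRate
  set γ := α / (1 + K * T + 2 * α)
  set e := Real.exp (-(K * T))
  have hγ : γ * (1 + K * T + 2 * α) = α := div_mul_cancel₀ _ (by positivity)
  have hγ0 : 0 ≤ γ := by positivity
  have hγ1 : γ ≤ 1 := div_le_one_of_le₀ (by nlinarith [mul_nonneg hK hT]) (by positivity)
  have he : e * Real.exp (K * T) = 1 := by rw [← Real.exp_add, neg_add_cancel, Real.exp_zero]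
  have he1 : e ≤ 1 := Real.exp_le_one_iff.2 (by nlinarith)
  -- Either the final gap to the extremes is already large, or it was small on the whole window.
  by_cases hq : e * γ * (A - B) ≤ (A - x i (t₀ + T)) + (x j (t₀ + T) - B)
  · linarith
  have hgap : ∀ s ∈ Icc t₀ (t₀ + T), (A - x i s) + (x j s - B) ≤ γ * (A - B) := fun s hs =>
    calc (A - x i s) + (x j s - B)
        ≤ ((A - x i (t₀ + T)) + (x j (t₀ + T) - B)) * Real.exp (K * (t₀ + T - t₀)) :=
          h.gap_le_mul_exp hA hB i j hs
      _ ≤ e * γ * (A - B) * Real.exp (K * T) := by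
          rw [add_sub_cancel_left]
          exact mul_le_mul_of_nonneg_right (not_le.1 hq).le (Real.exp_pos _).le
      _ = γ * (A - B) := by rw [mul_right_comm, mul_right_comm e, he, one_mul]
  have hclose := h.sub_le_of_gap_le hT hPE hA hB i j (by nlinarith) hgap
  nlinarith [mul_nonneg hα hAB, mul_nonneg (mul_nonneg hγ0 (sub_nonneg.2 he1)) hAB]

end IsConsensusSolutionOn

end Consensus

section Diameter

variable {ι : Type*} [Finite ι]

noncomputable def diameter (y : ι → ℝ) : ℝ := ⨆ i, ⨆ j, |y i - y j|

theorem abs_sub_le_diameter (y : ι → ℝ) (i j : ι) : |y i - y j| ≤ diameter y :=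
  (le_ciSup (Finite.bddAbove_range _) j).trans
    (le_ciSup (f := fun i => ⨆ j, |y i - y j|) (Finite.bddAbove_range _) i)

theorem exists_diameter_eq_sub [Nonempty ι] (y : ι → ℝ) :
    ∃ i j, diameter y = y i - y j ∧ ∀ k, y j ≤ y k ∧ y k ≤ y i := by
  obtain ⟨i, hi⟩ := Finite.exists_max y
  obtain ⟨j, hj⟩ := Finite.exists_min y
  refine ⟨i, j, le_antisymm ?_ ((le_abs_self _).trans (abs_sub_le_diameter y i j)),
    fun k => ⟨hj k, hi k⟩⟩
  exact ciSup_le fun k => ciSup_le fun l =>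
    abs_sub_le_iff.2 ⟨by linarith [hi k, hj l], by linarith [hi l, hj k]⟩

end Diameter

section Cooperative

variable {N : ℕ}

noncomputable def cooperativeWeight (φ : ℝ → ℝ) (M : Fin N → Fin N → ℝ → ℝ) (x : Fin N → ℝ → ℝ)
    (i j : Fin N) (s : ℝ) : ℝ :=
  (N : ℝ)⁻¹ * (M i j s * φ |x i s - x j s|)

theorem consensusVelocity_cooperativeWeight (φ : ℝ → ℝ) (M : Fin N → Fin N → ℝ → ℝ)
    (x : Fin N → ℝ → ℝ) (i : Fin N) (s : ℝ) :
    consensusVelocity (cooperativeWeight φ M x) x i s =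
      (N : ℝ)⁻¹ * ∑ j, M i j s * φ |x i s - x j s| * (x j s - x i s) := by
  simp only [consensusVelocity, cooperativeWeight, Finset.mul_sum, mul_assoc]

structure IsCooperativeSolution_s13 (φ : ℝ → ℝ) (M : Fin N → Fin N → ℝ → ℝ) (x : Fin N → ℝ → ℝ) :
    Prop where
  continuousOn_φ : ContinuousOn φ (Ici 0)
  φ_pos : ∀ r : ℝ, 0 ≤ r → 0 < φ r
  measurable_M : ∀ i j, Measurable (M i j)
  M_mem : ∀ i j, ∀ t : ℝ, 0 ≤ t → M i j t ∈ Icc (0 : ℝ) 1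
  continuousOn : ∀ i, ContinuousOn (x i) (Ici 0)
  eq_add_integral : ∀ i, ∀ t : ℝ, 0 ≤ t → x i t = x i 0 +
    ∫ s in (0 : ℝ)..t, (N : ℝ)⁻¹ * ∑ j, M i j s * φ |x i s - x j s| * (x j s - x i s)

namespace IsCooperativeSolution_s13

variable {φ : ℝ → ℝ} {M : Fin N → Fin N → ℝ → ℝ} {x : Fin N → ℝ → ℝ}

theorem continuousOn_φ_abs_sub (hx : IsCooperativeSolution_s13 φ M x) (i j : Fin N) :
    ContinuousOn (fun s => φ |x i s - x j s|) (Ici 0) :=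
  hx.continuousOn_φ.comp ((hx.continuousOn i).sub (hx.continuousOn j)).abs
    fun _ _ => mem_Ici.2 (abs_nonneg _)

theorem intervalIntegrable_M (hx : IsCooperativeSolution_s13 φ M x) (i j : Fin N) {t : ℝ}
    (ht : 0 ≤ t) : IntervalIntegrable (M i j) volume 0 t := by
  refine (intervalIntegrable_iff_integrableOn_Icc_of_le ht).2 <| IntegrableOn.of_bound
    measure_Icc_lt_top (hx.measurable_M i j).aestronglyMeasurable 1 <|
      ae_restrict_of_forall_mem measurableSet_Icc fun s hs => ?_
  have := hx.M_mem i j s hs.1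
  rw [Real.norm_eq_abs, abs_le]
  constructor <;> linarith [this.1, this.2]

theorem intervalIntegrable_cooperativeWeight (hx : IsCooperativeSolution_s13 φ M x) (i j : Fin N)
    {t : ℝ} (ht : 0 ≤ t) : IntervalIntegrable (cooperativeWeight φ M x i j) volume 0 t :=
  ((hx.intervalIntegrable_M i j ht).mul_continuousOn ((hx.continuousOn_φ_abs_sub i j).mono
    (uIcc_of_le ht ▸ Icc_subset_Ici_self))).const_mul _

theorem exists_bound (hx : IsCooperativeSolution_s13 φ M x) (t₁ : ℝ) :
    ∃ C, ∀ s ∈ Icc 0 t₁, ∀ i j, φ |x i s - x j s| ≤ C := by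
  have hcont : ContinuousOn (fun s (p : Fin N × Fin N) => φ |x p.1 s - x p.2 s|) (Icc 0 t₁) :=
    continuousOn_pi.2 fun p => (hx.continuousOn_φ_abs_sub p.1 p.2).mono Icc_subset_Ici_self
  obtain ⟨C, hC⟩ := isCompact_Icc.exists_bound_of_continuousOn hcont
  refine ⟨C, fun s hs i j => ?_⟩
  calc φ |x i s - x j s| ≤ ‖φ |x i s - x j s|‖ := Real.le_norm_self _
    _ ≤ _ := norm_le_pi_norm (fun p : Fin N × Fin N => φ |x p.1 s - x p.2 s|) (i, j)
    _ ≤ C := hC s hs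

theorem isConsensusSolutionOn [NeZero N] (hx : IsCooperativeSolution_s13 φ M x) {t₀ t₁ C : ℝ}
    (ht₀ : 0 ≤ t₀) (ht : t₀ ≤ t₁) (hC : ∀ s ∈ Icc t₀ t₁, ∀ i j, φ |x i s - x j s| ≤ C) :
    IsConsensusSolutionOn (cooperativeWeight φ M x) x t₀ t₁ C where
  continuousOn i := (hx.continuousOn i).mono fun _ hs => ht₀.trans hs.1
  intervalIntegrable i j := (hx.intervalIntegrable_cooperativeWeight i j (ht₀.trans ht)).mono_set
    (by rw [uIcc_of_le ht, uIcc_of_le (ht₀.trans ht)]; exact Icc_subset_Icc_left ht₀)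
  nonneg i j s hs := by
    exact mul_nonneg (by positivity) (mul_nonneg (hx.M_mem i j s (ht₀.trans hs.1)).1
      (hx.φ_pos _ (abs_nonneg _)).le)
  sum_le i s hs := by
    calc ∑ j, cooperativeWeight φ M x i j s ≤ ∑ _j : Fin N, (N : ℝ)⁻¹ * C := by
          refine Finset.sum_le_sum fun j _ => mul_le_mul_of_nonneg_left ?_ (by positivity)
          have hM := hx.M_mem i j s (ht₀.trans hs.1)
          calc M i j s * φ |x i s - x j s| ≤ 1 * C := mul_le_mul hM.2 (hC s hs i j)
                (hx.φ_pos _ (abs_nonneg _)).le zero_le_one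
            _ = C := one_mul C
      _ = C := by
          rw [Finset.sum_const, Finset.card_univ, Fintype.card_fin, nsmul_eq_mul,
            mul_inv_cancel_left₀ (Nat.cast_ne_zero.2 (NeZero.ne N))]
  eq_add_integral i t ht := by
    have hv : ∀ {t}, 0 ≤ t → IntervalIntegrable (consensusVelocity (cooperativeWeight φ M x) x i)
        volume 0 t := fun ht => intervalIntegrable_consensusVelocity
      (fun i j => hx.intervalIntegrable_cooperativeWeight i j ht)
      (fun k => (hx.continuousOn k).mono (uIcc_of_le ht ▸ Icc_subset_Ici_self)) i
    have hsol : ∀ t, 0 ≤ t → x i t = x i 0 +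
        ∫ s in (0 : ℝ)..t, consensusVelocity (cooperativeWeight φ M x) x i s := by
      simpa only [consensusVelocity_cooperativeWeight] using hx.eq_add_integral i
    rw [hsol t (ht₀.trans ht.1), hsol t₀ ht₀, ← intervalIntegral.integral_interval_sub_left
      (hv (ht₀.trans ht.1)) (hv ht₀)]
    ring

theorem abs_sub_le_diameter_zero [NeZero N] (hx : IsCooperativeSolution_s13 φ M x) {t : ℝ}
    (ht : 0 ≤ t) (i j : Fin N) : |x i t - x j t| ≤ diameter (fun k => x k 0) := by
  obtain ⟨i₀, j₀, hD, hbounds⟩ := exists_diameter_eq_sub (fun k => x k 0)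
  obtain ⟨C, hC⟩ := hx.exists_bound t
  have hlin := hx.isConsensusSolutionOn le_rfl ht hC
  have hup := hlin.le_of_forall_le_start (fun k => (hbounds k).2) t ⟨ht, le_rfl⟩
  have hlo := hlin.ge_of_forall_ge_start (fun k => (hbounds k).1) t ⟨ht, le_rfl⟩
  rw [hD, abs_sub_le_iff]
  constructor <;> linarith [hup i, hlo j, hup j, hlo i]

theorem φ_abs_sub_mem_Icc [NeZero N] (hx : IsCooperativeSolution_s13 φ M x) {t : ℝ} (ht : 0 ≤ t)
    (i j : Fin N) :
    φ |x i t - x j t| ∈ Icc (sInf (φ '' Icc 0 (diameter fun k => x k 0)))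
      (sSup (φ '' Icc 0 (diameter fun k => x k 0))) := by
  have hr : |x i t - x j t| ∈ Icc 0 (diameter fun k => x k 0) :=
    ⟨abs_nonneg _, hx.abs_sub_le_diameter_zero ht i j⟩
  have hcompact : IsCompact (φ '' Icc 0 (diameter fun k => x k 0)) :=
    isCompact_Icc.image_of_continuousOn (hx.continuousOn_φ.mono Icc_subset_Ici_self)
  exact ⟨csInf_le hcompact.bddBelow (mem_image_of_mem φ hr),
    le_csSup hcompact.bddAbove (mem_image_of_mem φ hr)⟩

theorem le_integral_cooperativeWeight (hx : IsCooperativeSolution_s13 φ M x) {t₀ T μ Kmin : ℝ}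
    (ht₀ : 0 ≤ t₀) (hT : 0 ≤ T) (hKmin : 0 ≤ Kmin)
    (hφ : ∀ s ∈ Icc t₀ (t₀ + T), ∀ i j, Kmin ≤ φ |x i s - x j s|) {i j : Fin N}
    (hPE : μ ≤ ∫ s in t₀..t₀ + T, M i j s) :
    μ * Kmin / N ≤ ∫ s in t₀..t₀ + T, cooperativeWeight φ M x i j s := by
  have hsub : uIcc t₀ (t₀ + T) ⊆ uIcc 0 (t₀ + T) := by
    rw [uIcc_of_le (by linarith), uIcc_of_le (by linarith)]; exact Icc_subset_Icc_left ht₀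
  have hmono := intervalIntegral.integral_mono_on (by linarith : t₀ ≤ t₀ + T)
    (((hx.intervalIntegrable_M i j (by linarith)).mono_set hsub).const_mul ((N : ℝ)⁻¹ * Kmin))
    ((hx.intervalIntegrable_cooperativeWeight i j (by linarith)).mono_set hsub) fun s hs => by
      have := hx.M_mem i j s (ht₀.trans hs.1)
      unfold cooperativeWeight
      rw [mul_assoc, mul_comm Kmin]
      exact mul_le_mul_of_nonneg_left (mul_le_mul_of_nonneg_left (hφ s hs i j) this.1)
        (by positivity)
  rw [intervalIntegral.integral_const_mul] at hmono
  calc μ * Kmin / N = (N : ℝ)⁻¹ * Kmin * μ := by ring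
    _ ≤ _ := (mul_le_mul_of_nonneg_left hPE (by positivity)).trans hmono

theorem diameter_le_mul [NeZero N] (hx : IsCooperativeSolution_s13 φ M x) {t₀ T μ Kmin Kmax : ℝ}
    (ht₀ : 0 ≤ t₀) (hT : 0 ≤ T) (hμ : 0 ≤ μ) (hKmin : 0 ≤ Kmin)
    (hφ : ∀ t, 0 ≤ t → ∀ i j, φ |x i t - x j t| ∈ Icc Kmin Kmax)
    (hPE : ∀ i j, μ ≤ ∫ s in t₀..t₀ + T, M i j s) :
    diameter (fun k => x k (t₀ + T)) ≤
      consensusRate Kmax T (μ * Kmin / N) * diameter (fun k => x k t₀) := by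
  have hlin := hx.isConsensusSolutionOn (t₁ := t₀ + T) ht₀ (by linarith) fun s hs i j =>
    (hφ s (ht₀.trans hs.1) i j).2
  obtain ⟨i₀, j₀, hD₀, hbounds⟩ := exists_diameter_eq_sub (fun k => x k t₀)
  obtain ⟨i, j, hD, -⟩ := exists_diameter_eq_sub (fun k => x k (t₀ + T))
  rw [hD, hD₀]
  exact hlin.sub_le_of_persistentExcitation hT (by positivity)
    (fun i j => hx.le_integral_cooperativeWeight ht₀ hT hKmin
      (fun s hs i j => (hφ s (ht₀.trans hs.1) i j).1) (hPE i j))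
    (fun k => (hbounds k).2) (fun k => (hbounds k).1) i j

end IsCooperativeSolution_s13

end Cooperative

/-- Explicit exponential decay of the diameter for a
solution of the first-order cooperative system with communication failures
(fixed scaling) on the real line, under the Persistent Excitation condition
on every weight. -/
theorem diameter_decay_PE
    (N : ℕ) (hN : 2 ≤ N)
    (φ : ℝ → ℝ)
    (hφ_lip : ∃ K : NNReal, LipschitzOnWith K φ (Ici 0))
    (hφ_pos : ∀ r : ℝ, 0 ≤ r → 0 < φ r)
    (M : Fin N → Fin N → ℝ → ℝ)
    (hM_meas : ∀ i j, Measurable (M i j))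
    (hM_range : ∀ i j, ∀ t : ℝ, 0 ≤ t → M i j t ∈ Icc (0:ℝ) 1)
    (x : Fin N → ℝ → ℝ)
    (hx_cont : ∀ i, ContinuousOn (x i) (Ici 0))
    (hx_sol : ∀ i, ∀ t : ℝ, 0 ≤ t → x i t = x i 0 +
      ∫ s in (0:ℝ)..t,
        (N : ℝ)⁻¹ * ∑ j, M i j s * φ |x i s - x j s| * (x j s - x i s))
    (T μ : ℝ) (hT : 0 < T) (hμ : 0 < μ)
    (hPE : ∀ i j, ∀ t : ℝ, 0 ≤ t → μ ≤ ∫ s in t..(t + T), M i j s)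
    (D : ℝ → ℝ) (hD : ∀ t, D t = ⨆ i, ⨆ j, |x i t - x j t|)
    (φmin φmax : ℝ)
    (hφmin : φmin = sInf (φ '' Icc 0 (D 0)))
    (hφmax : φmax = sSup (φ '' Icc 0 (D 0)))
    (Kmin Kmax : ℝ) (hKmin : Kmin = φmin) (hKmax : Kmax = φmax)
    (γtilde : ℝ)
    (hγtilde : γtilde = μ * Kmin / ((N : ℝ) * (1 + Kmax * T) + 2 * μ * Kmin)) :
    ∀ n : ℕ, D ((n : ℝ) * T) ≤ (1 - Real.exp (-(Kmax * T)) * γtilde) ^ n * D 0 := by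
  have : NeZero N := ⟨by omega⟩
  obtain ⟨Kφ, hlip⟩ := hφ_lip
  have hx : IsCooperativeSolution_s13 φ M x :=
    ⟨hlip.continuousOn, hφ_pos, hM_meas, hM_range, hx_cont, hx_sol⟩
  have hD' : ∀ t, D t = diameter (fun k => x k t) := hD
  have hφ_range : ∀ t, 0 ≤ t → ∀ i j, φ |x i t - x j t| ∈ Icc Kmin Kmax := by
    rw [hKmin, hKmax, hφmin, hφmax, hD' 0]
    exact fun t ht i j => hx.φ_abs_sub_mem_Icc ht i j
  have hKmin0 : 0 ≤ Kmin := hKmin ▸ hφmin ▸ Real.sInf_nonneg (by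
    rintro _ ⟨r, hr, rfl⟩; exact (hφ_pos r hr.1).le)
  have hKmax0 : 0 ≤ Kmax := hKmin0.trans ((hφ_range 0 le_rfl 0 0).1.trans (hφ_range 0 le_rfl 0 0).2)
  have hrate : 1 - Real.exp (-(Kmax * T)) * γtilde = consensusRate Kmax T (μ * Kmin / N) := by
    rw [consensusRate, hγtilde]
    field_simp
  intro n
  induction n with
  | zero => simp
  | succ n ih =>
    simp only [hrate, hD'] at ih ⊢
    rw [Nat.cast_succ, add_one_mul, pow_succ', mul_assoc]
    exact (hx.diameter_le_mul (by positivity) hT.le hμ.le hKmin0 hφ_range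
      fun i j => hPE i j _ (by positivity)).trans (mul_le_mul_of_nonneg_left ih
        (consensusRate_nonneg hKmax0 hT.le (by positivity)))
end

section
/- Let x_1,...,x_N : [0,∞) → ℝ be a solution of the first-order cooperative system with communication failures (fixed scaling) on the real line, and fix T, μ > 0 such that the family {M_ij} satisfies the Integral Scrambling Coefficient condition with parameters μ, T. Let D(t) := max_{i,j} |x_i(t) − x_j(t)|, let φ_min and φ_max be the minimum and maximum of φ on [0, D(0)], and set K_min := φ_min, K_max := φ_max, γ̃ := μ K_min / (2(N(1 + K_max T) + μ K_min)). Then for all n ∈ ℕ, D(nT) ≤ (1 − exp(−2 K_max T) γ̃)^n · D(0). -/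
/-!
An agent at the current maximum has velocity at most `C · (max - xᵢ) = 0`, so a Dini-derivative
argument shows that the maximum never increases and, by the symmetry `x ↦ -x`, the minimum never
decreases. Hence all distances stay in `[0, D 0]` and every interaction weight lies in
`[Kmin, Kmax]`. Velocities are then at least `Kmax · (min - xᵢ)`, and Grönwall's inequality shows
that the height of an agent above the old minimum decays at most like `exp (-Kmax t)`.

Over a period `[t₀, t₀ + T]`, let `i` and `j` realise the maximum and the minimum at its end and
let `k` be their common neighbour from the ISC condition. Up to the symmetry `x ↦ -x`, which swaps
`i` and `j`, `k` starts in the upper half of the range, so it stays at height at least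
`A = exp (-Kmax T) D(t₀) / 2` above the old minimum. Either `j` reaches height `θ = γ A` at some
moment, or it is pulled up by `k` at rate `Kmin (A - θ) / N` against a drift of at most `Kmax θ`
during the whole period; for `γ = μ Kmin / (N (1 + Kmax T) + μ Kmin)` both cases leave `j` at
height at least `exp (-Kmax T) θ = exp (-2 Kmax T) γ̃ D(t₀)` at `t₀ + T`, so the diameter
contracts by `1 - exp (-2 Kmax T) γ̃` over every period.
-/

open MeasureTheory Set Filter Topology Real

theorem ciSup_ciSup_abs_sub_eq {ι : Type*} [Finite ι] [Nonempty ι] (a : ι → ℝ) :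
    ⨆ i, ⨆ j, |a i - a j| = (⨆ i, a i) - ⨅ i, a i := by
  have le_sup (b : ι → ℝ) (i : ι) : b i ≤ ⨆ j, b j := le_ciSup (Finite.bddAbove_range b) i
  have inf_le (i : ι) : ⨅ j, a j ≤ a i := ciInf_le (Finite.bddBelow_range a) i
  refine le_antisymm (ciSup_le fun i => ciSup_le fun j => abs_sub_le_iff.2
    ⟨sub_le_sub (le_sup a i) (inf_le j), sub_le_sub (le_sup a j) (inf_le i)⟩) ?_
  obtain ⟨i, hi⟩ := exists_eq_ciSup_of_finite (f := a)
  obtain ⟨j, hj⟩ := exists_eq_ciInf_of_finite (f := a)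
  rw [← hi, ← hj]
  exact (le_abs_self _).trans ((le_sup _ j).trans (le_sup (fun i => ⨆ j, |a i - a j|) i))

theorem continuousOn_ciSup_apply {ι : Type*} [Fintype ι] [Nonempty ι] {f : ι → ℝ → ℝ}
    {s : Set ℝ} (hf : ∀ i, ContinuousOn (f i) s) : ContinuousOn (fun t => ⨆ i, f i t) s := by
  simp only [← Finset.sup'_univ_eq_ciSup]
  exact ContinuousOn.finset_sup'_apply _ fun i _ => hf i

theorem eventually_intervalIntegral_lt_mul_sub {G : ℝ → ℝ} {w c r : ℝ} (hwc : w < c)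
    (hG : ContinuousOn G (Icc w c)) (hGw : G w < r) :
    ∀ᶠ z in 𝓝[>] w, ∫ u in w..z, G u < r * (z - w) := by
  obtain ⟨r', hGr', hr'⟩ := exists_between hGw
  have hnear : ∀ᶠ u in 𝓝[≥] w, G u < r' := by
    have hcont := hG w ⟨le_rfl, hwc.le⟩
    rw [ContinuousWithinAt, nhdsWithin_Icc_eq_nhdsGE hwc] at hcont
    exact hcont (Iio_mem_nhds hGr')
  obtain ⟨b, hwb, hb⟩ := nhdsGE_basis_Icc.eventually_iff.1 hnear
  filter_upwards [Ioo_mem_nhdsGT (lt_min hwb hwc)] with z ⟨hwz, hzbc⟩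
  have hGint : IntervalIntegrable G volume w z :=
    (hG.mono (Icc_subset_Icc_right (hzbc.le.trans (min_le_right _ _)))).intervalIntegrable_of_Icc
      hwz.le
  calc ∫ u in w..z, G u ≤ ∫ _ in w..z, r' :=
        intervalIntegral.integral_mono_on hwz.le hGint intervalIntegrable_const
          fun u hu => (hb ⟨hu.1, hu.2.trans (hzbc.le.trans (min_le_left _ _))⟩).le
    _ = r' * (z - w) := by rw [intervalIntegral.integral_const, smul_eq_mul, mul_comm]
    _ < r * (z - w) := mul_lt_mul_of_pos_right hr' (sub_pos.2 hwz)

theorem eventually_slope_lt_of_sub_le_integral {f G : ℝ → ℝ} {w c r : ℝ} (hwc : w < c)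
    (hG : ContinuousOn G (Icc w c)) (hGw : G w < r)
    (hinc : ∀ z ∈ Ioo w c, f z - f w ≤ ∫ u in w..z, G u) :
    ∀ᶠ z in 𝓝[>] w, slope f w z < r := by
  filter_upwards [eventually_intervalIntegral_lt_mul_sub hwc hG hGw, Ioo_mem_nhdsGT hwc]
    with z hz hzc
  rw [slope_def_field, div_lt_iff₀ (sub_pos.2 hzc.1)]
  exact (hinc z hzc).trans_lt hz

theorem le_exp_mul_of_sub_le_integral {f : ℝ → ℝ} {K a b : ℝ} (hab : a ≤ b)
    (hf : ContinuousOn f (Icc a b))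
    (hinc : ∀ w z, a ≤ w → w ≤ z → z ≤ b → f z - f w ≤ ∫ u in w..z, K * f u) :
    f b ≤ exp (K * (b - a)) * f a := by
  -- the barrier `exp (K (t - a)) f a + ε exp ((K + 1) (t - a))` is a strict supersolution
  have hbarrier : ∀ ε > 0, f b ≤ exp (K * (b - a)) * f a + ε * exp ((K + 1) * (b - a)) := by
    intro ε hε
    have hB : ∀ t, HasDerivAt (fun t => exp (K * (t - a)) * f a + ε * exp ((K + 1) * (t - a)))
        (K * exp (K * (t - a)) * f a + ε * ((K + 1) * exp ((K + 1) * (t - a)))) t := by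
      intro t
      have h1 := ((((hasDerivAt_id t).sub_const a).const_mul K).exp).mul_const (f a)
      have h2 := (((((hasDerivAt_id t).sub_const a).const_mul (K + 1)).exp).const_mul ε)
      exact (h1.add h2).congr_deriv (by simp only [id]; ring)
    refine image_le_of_liminf_slope_right_lt_deriv_boundary (f' := fun t => K * f t) hf
      (fun w hw r hr => (eventually_slope_lt_of_sub_le_integral hw.2
        ((continuousOn_const.mul hf).mono (Icc_subset_Icc_left hw.1)) hr
        fun z hz => hinc w z hw.1 hz.1.le hz.2.le).frequently)
      (by simp [hε.le]) hB (fun w _ hfw => ?_) ⟨hab, le_rfl⟩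
    rw [hfw]
    nlinarith [mul_pos hε (exp_pos ((K + 1) * (w - a)))]
  refine le_of_forall_pos_le_add fun δ hδ => ?_
  have := hbarrier (δ / exp ((K + 1) * (b - a))) (by positivity)
  rwa [div_mul_cancel₀ _ (exp_pos _).ne'] at this

theorem ciSup_apply_le_of_sub_le_integral {ι : Type*} [Fintype ι] [Nonempty ι]
    {f : ι → ℝ → ℝ} {C a b : ℝ} (hab : a ≤ b) (hf : ∀ i, ContinuousOn (f i) (Icc a b))
    (hinc : ∀ i w z, a ≤ w → w ≤ z → z ≤ b →
      f i z - f i w ≤ ∫ u in w..z, C * ((⨆ j, f j u) - f i u)) :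
    ⨆ i, f i b ≤ ⨆ i, f i a := by
  set S : ℝ → ℝ := fun t => ⨆ i, f i t with hS_def
  have hS : ContinuousOn S (Icc a b) := continuousOn_ciSup_apply hf
  have hle (t : ℝ) (i : ι) : f i t ≤ S t := le_ciSup (Finite.bddAbove_range (f · t)) i
  refine image_le_of_liminf_slope_right_le_deriv_boundary (B := fun _ => S a) (B' := fun _ => 0)
    hS le_rfl continuousOn_const (fun _ _ => hasDerivWithinAt_const _ _ _)
    (fun w hw r hr => Eventually.frequently ?_) ⟨hab, le_rfl⟩
  have hi : ∀ i, ∀ᶠ z in 𝓝[>] w, f i z < S w + r * (z - w) := by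
    intro i
    rcases (hle w i).lt_or_eq with hlt | heq
    · have hcont : ContinuousWithinAt (f i) (Ioi w) w := by
        refine (continuousWithinAt_Ioo_iff_Ioi hw.2).1 ?_
        exact (hf i w (Ico_subset_Icc_self hw)).mono (Ioo_subset_Icc_self.trans
          (Icc_subset_Icc_left hw.1))
      filter_upwards [hcont.eventually (Iio_mem_nhds hlt), self_mem_nhdsWithin]
        with z hz hwz
      nlinarith [mem_Ioi.1 hwz]
    · have hG : ContinuousOn (fun u => C * (S u - f i u)) (Icc w b) :=
        (continuousOn_const.mul (hS.sub (hf i))).mono (Icc_subset_Icc_left hw.1)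
      filter_upwards [eventually_slope_lt_of_sub_le_integral hw.2 hG (by simpa [heq] using hr)
        fun z hz => hinc i w z hw.1 hz.1.le hz.2.le, self_mem_nhdsWithin] with z hz hwz
      rw [slope_def_field, div_lt_iff₀ (sub_pos.2 hwz)] at hz
      linarith
  filter_upwards [eventually_all.2 hi, self_mem_nhdsWithin] with z hz hwz
  obtain ⟨i, hi⟩ := exists_eq_ciSup_of_finite (f := fun i => f i z)
  rw [slope_def_field, div_lt_iff₀ (sub_pos.2 hwz)]
  have := hz i
  simp only [hS_def, ← hi] at this ⊢
  linarith

theorem inv_mul_sum_le {N : ℕ} [NeZero N] {a : Fin N → ℝ} {c : ℝ} (ha : ∀ j, a j ≤ c) :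
    (N : ℝ)⁻¹ * ∑ j, a j ≤ c := by
  have hN : (0 : ℝ) < N := Nat.cast_pos.2 (NeZero.pos N)
  have hsum := Finset.sum_le_card_nsmul Finset.univ a c fun j _ => ha j
  rw [Finset.card_univ, Fintype.card_fin, nsmul_eq_mul] at hsum
  rw [inv_mul_le_iff₀ hN]
  exact hsum

theorem inv_mul_add_le_inv_mul_sum {N : ℕ} [NeZero N] {a : Fin N → ℝ} {c : ℝ} (hc : c ≤ 0)
    (ha : ∀ j, c ≤ a j) (k : Fin N) : (N : ℝ)⁻¹ * a k + c ≤ (N : ℝ)⁻¹ * ∑ j, a j := by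
  have hN : (0 : ℝ) < N := Nat.cast_pos.2 (NeZero.pos N)
  have hsum : a k - c ≤ ∑ j, (a j - c) :=
    Finset.single_le_sum (fun j _ => sub_nonneg.2 (ha j)) (Finset.mem_univ k)
  rw [Finset.sum_sub_distrib, Finset.sum_const, Finset.card_univ, Fintype.card_fin,
    nsmul_eq_mul] at hsum
  rw [← mul_le_mul_iff_of_pos_left hN, mul_add, ← mul_assoc, ← mul_assoc, mul_inv_cancel₀ hN.ne',
    one_mul, one_mul]
  linarith

theorem le_pow_mul_of_forall_le_mul {D : ℝ → ℝ} {c T : ℝ} (hT : 0 ≤ T) (hc : 0 ≤ c)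
    (hD : ∀ t, 0 ≤ t → D (t + T) ≤ c * D t) (n : ℕ) : D (n * T) ≤ c ^ n * D 0 := by
  induction n with
  | zero => simp
  | succ n ih =>
    calc D ((n + 1 : ℕ) * T) = D (n * T + T) := by push_cast; ring_nf
      _ ≤ c * D (n * T) := hD _ (by positivity)
      _ ≤ c * (c ^ n * D 0) := mul_le_mul_of_nonneg_left ih hc
      _ = c ^ (n + 1) * D 0 := by ring

theorem IsCompact.sInf_image_pos {f : ℝ → ℝ} {s : Set ℝ} (hs : IsCompact s) (hne : s.Nonempty)
    (hf : ContinuousOn f s) (hpos : ∀ r ∈ s, 0 < f r) : 0 < sInf (f '' s) := by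
  obtain ⟨r, hr, hfr⟩ := hs.exists_sInf_image_eq hne hf
  exact hfr ▸ hpos r hr

namespace CoopSystem

variable {N : ℕ}

noncomputable def velocity (φ : ℝ → ℝ) (M : Fin N → Fin N → ℝ → ℝ) (x : Fin N → ℝ → ℝ)
    (i : Fin N) (s : ℝ) : ℝ :=
  (N : ℝ)⁻¹ * ∑ j, M i j s * φ |x i s - x j s| * (x j s - x i s)

structure IsSolution (φ : ℝ → ℝ) (M : Fin N → Fin N → ℝ → ℝ) (x : Fin N → ℝ → ℝ) : Prop where
  φ_continuousOn : ContinuousOn φ (Ici 0)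
  φ_nonneg : ∀ r, 0 ≤ r → 0 ≤ φ r
  M_measurable : ∀ i j, Measurable (M i j)
  M_mem_Icc : ∀ i j t, 0 ≤ t → M i j t ∈ Icc (0 : ℝ) 1
  x_continuousOn : ∀ i, ContinuousOn (x i) (Ici 0)
  x_eq : ∀ i t, 0 ≤ t → x i t = x i 0 + ∫ s in (0 : ℝ)..t, velocity φ M x i s

noncomputable def maxState (x : Fin N → ℝ → ℝ) (t : ℝ) : ℝ := ⨆ i, x i t

noncomputable def minState (x : Fin N → ℝ → ℝ) (t : ℝ) : ℝ := ⨅ i, x i t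

noncomputable def contractionRate (N : ℕ) (μ T Kmin Kmax : ℝ) : ℝ :=
  exp (-(2 * Kmax * T)) * (μ * Kmin / (2 * (N * (1 + Kmax * T) + μ * Kmin)))

theorem contractionRate_le_one (N : ℕ) {μ T Kmin Kmax : ℝ} (hμ : 0 ≤ μ) (hT : 0 ≤ T)
    (hKmin : 0 ≤ Kmin) (hKmax : 0 ≤ Kmax) : contractionRate N μ T Kmin Kmax ≤ 1 := by
  have hexp : exp (-(2 * Kmax * T)) ≤ 1 := exp_le_one_iff.2 (by nlinarith)
  have hfrac : μ * Kmin / (2 * (N * (1 + Kmax * T) + μ * Kmin)) ≤ 1 :=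
    div_le_one_of_le₀ (by nlinarith [mul_nonneg hμ hKmin, mul_nonneg hKmax hT,
      (Nat.cast_nonneg N : (0 : ℝ) ≤ N)]) (by positivity)
  exact (mul_le_mul hexp hfrac (by positivity) zero_le_one).trans_eq (one_mul 1)

variable {φ : ℝ → ℝ} {M : Fin N → Fin N → ℝ → ℝ} {x : Fin N → ℝ → ℝ}

theorem le_maxState (i : Fin N) (t : ℝ) : x i t ≤ maxState x t :=
  le_ciSup (Finite.bddAbove_range (x · t)) i

theorem minState_le (i : Fin N) (t : ℝ) : minState x t ≤ x i t :=
  ciInf_le (Finite.bddBelow_range (x · t)) i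

theorem velocity_neg (i : Fin N) (s : ℝ) : velocity φ M (-x) i s = -velocity φ M x i s := by
  rw [velocity, velocity, ← mul_neg, ← Finset.sum_neg_distrib]
  congr 1
  refine Finset.sum_congr rfl fun j _ => ?_
  simp only [Pi.neg_apply, neg_sub_neg, abs_sub_comm (x j s)]
  ring

theorem IsSolution.neg (h : IsSolution φ M x) : IsSolution φ M (-x) where
  φ_continuousOn := h.φ_continuousOn
  φ_nonneg := h.φ_nonneg
  M_measurable := h.M_measurable
  M_mem_Icc := h.M_mem_Icc
  x_continuousOn i := (h.x_continuousOn i).neg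
  x_eq i t ht := by
    simp only [Pi.neg_apply, velocity_neg, intervalIntegral.integral_neg, h.x_eq i t ht]
    ring

theorem IsSolution.continuousOn_φ_abs_sub (h : IsSolution φ M x) (i j : Fin N) :
    ContinuousOn (fun s => φ |x i s - x j s|) (Ici 0) :=
  h.φ_continuousOn.comp ((h.x_continuousOn i).sub (h.x_continuousOn j)).abs
    fun _ _ => mem_Ici.2 (abs_nonneg _)

theorem IsSolution.intervalIntegrable_M (h : IsSolution φ M x) (i j : Fin N) {c d : ℝ}
    (hc : 0 ≤ c) (hd : 0 ≤ d) : IntervalIntegrable (M i j) volume c d := by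
  refine (intervalIntegrable_const (c := (1 : ℝ))).mono_fun'
    (h.M_measurable i j).aestronglyMeasurable (ae_restrict_of_forall_mem measurableSet_uIoc
      fun s hs => ?_)
  have hM := h.M_mem_Icc i j s ((le_min hc hd).trans (uIoc_subset_uIcc hs).1)
  show ‖M i j s‖ ≤ 1
  rw [Real.norm_eq_abs, abs_of_nonneg hM.1]
  exact hM.2

theorem IsSolution.intervalIntegrable_velocity (h : IsSolution φ M x) (i : Fin N) {c d : ℝ}
    (hc : 0 ≤ c) (hd : 0 ≤ d) : IntervalIntegrable (velocity φ M x i) volume c d := by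
  have hsub : uIcc c d ⊆ Ici 0 := fun s hs => (le_min hc hd).trans hs.1
  have hterm (j : Fin N) : IntervalIntegrable
      (fun s => M i j s * φ |x i s - x j s| * (x j s - x i s)) volume c d := by
    have hcont : ContinuousOn (fun s => φ |x i s - x j s| * (x j s - x i s)) (uIcc c d) :=
      ((h.continuousOn_φ_abs_sub i j).mul
        ((h.x_continuousOn j).sub (h.x_continuousOn i))).mono hsub
    simpa only [mul_assoc] using (h.intervalIntegrable_M i j hc hd).mul_continuousOn hcont
  have hsum := (IntervalIntegrable.sum Finset.univ fun j _ => hterm j).const_mul (N : ℝ)⁻¹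
  simp only [Finset.sum_apply] at hsum
  exact hsum

theorem IsSolution.sub_eq_integral (h : IsSolution φ M x) (i : Fin N) {c d : ℝ}
    (hc : 0 ≤ c) (hd : 0 ≤ d) : x i d - x i c = ∫ s in c..d, velocity φ M x i s := by
  rw [h.x_eq i d hd, h.x_eq i c hc, ← intervalIntegral.integral_interval_sub_left
    (h.intervalIntegrable_velocity i le_rfl hd) (h.intervalIntegrable_velocity i le_rfl hc)]
  ring

theorem IsSolution.weight_mem_Icc (h : IsSolution φ M x) {i j : Fin N} {s C : ℝ} (hs : 0 ≤ s)
    (hC : φ |x i s - x j s| ≤ C) : M i j s * φ |x i s - x j s| ∈ Icc 0 C :=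
  ⟨mul_nonneg (h.M_mem_Icc i j s hs).1 (h.φ_nonneg _ (abs_nonneg _)),
    (mul_le_of_le_one_left (h.φ_nonneg _ (abs_nonneg _)) (h.M_mem_Icc i j s hs).2).trans hC⟩

theorem IsSolution.exists_φ_le (h : IsSolution φ M x) {a b : ℝ} (ha : 0 ≤ a) :
    ∃ C, ∀ s ∈ Icc a b, ∀ i j, φ |x i s - x j s| ≤ C := by
  have hpair (p : Fin N × Fin N) : BddAbove ((fun s => φ |x p.1 s - x p.2 s|) '' Icc a b) :=
    (isCompact_Icc.image_of_continuousOn ((h.continuousOn_φ_abs_sub p.1 p.2).mono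
      fun s hs => ha.trans hs.1)).bddAbove
  choose C hC using hpair
  obtain ⟨C', hC'⟩ := Finite.bddAbove_range C
  exact ⟨C', fun s hs i j => (hC (i, j) ⟨s, hs, rfl⟩).trans (hC' ⟨(i, j), rfl⟩)⟩

section NeZero

variable [NeZero N]

theorem exists_maxState_eq (t : ℝ) : ∃ i, x i t = maxState x t := exists_eq_ciSup_of_finite

theorem exists_minState_eq (t : ℝ) : ∃ i, x i t = minState x t := exists_eq_ciInf_of_finite

theorem maxState_neg (t : ℝ) : maxState (-x) t = -minState x t := by
  obtain ⟨i, hi⟩ := exists_minState_eq (x := x) t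
  exact le_antisymm (ciSup_le fun j => neg_le_neg (minState_le j t))
    (hi ▸ le_maxState (x := -x) i t)

theorem minState_neg (t : ℝ) : minState (-x) t = -maxState x t := by
  have h := maxState_neg (x := -x) t
  rw [neg_neg] at h
  linarith

theorem IsSolution.velocity_le (h : IsSolution φ M x) {i : Fin N} {s C : ℝ} (hs : 0 ≤ s)
    (hC : ∀ j, φ |x i s - x j s| ≤ C) : velocity φ M x i s ≤ C * (maxState x s - x i s) := by
  refine inv_mul_sum_le fun j => ?_
  obtain ⟨hw, hwC⟩ := h.weight_mem_Icc hs (hC j)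
  calc M i j s * φ |x i s - x j s| * (x j s - x i s)
      ≤ M i j s * φ |x i s - x j s| * (maxState x s - x i s) :=
        mul_le_mul_of_nonneg_left (sub_le_sub_right (le_maxState j s) _) hw
    _ ≤ C * (maxState x s - x i s) :=
        mul_le_mul_of_nonneg_right hwC (sub_nonneg.2 (le_maxState i s))

theorem IsSolution.inv_mul_add_le_velocity (h : IsSolution φ M x) {i : Fin N} (k : Fin N)
    {s C : ℝ} (hs : 0 ≤ s) (hC : ∀ j, φ |x i s - x j s| ≤ C) :
    (N : ℝ)⁻¹ * (M i k s * φ |x i s - x k s| * (x k s - x i s)) + C * (minState x s - x i s)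
      ≤ velocity φ M x i s := by
  have hC0 : 0 ≤ C := (h.weight_mem_Icc hs (hC i)).1.trans (h.weight_mem_Icc hs (hC i)).2
  refine inv_mul_add_le_inv_mul_sum
    (a := fun j => M i j s * φ |x i s - x j s| * (x j s - x i s))
    (mul_nonpos_of_nonneg_of_nonpos hC0 (sub_nonpos.2 (minState_le i s))) (fun j => ?_) k
  obtain ⟨hw, hwC⟩ := h.weight_mem_Icc hs (hC j)
  calc C * (minState x s - x i s) ≤ M i j s * φ |x i s - x j s| * (minState x s - x i s) :=
        mul_le_mul_of_nonpos_right hwC (sub_nonpos.2 (minState_le i s))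
    _ ≤ M i j s * φ |x i s - x j s| * (x j s - x i s) :=
        mul_le_mul_of_nonneg_left (sub_le_sub_right (minState_le j s) _) hw

theorem IsSolution.le_velocity (h : IsSolution φ M x) {i : Fin N} {s C : ℝ} (hs : 0 ≤ s)
    (hC : ∀ j, φ |x i s - x j s| ≤ C) : C * (minState x s - x i s) ≤ velocity φ M x i s := by
  simpa using h.inv_mul_add_le_velocity i hs hC

theorem IsSolution.maxState_antitoneOn (h : IsSolution φ M x) :
    AntitoneOn (maxState x) (Ici 0) := by
  intro s hs t _ hst
  obtain ⟨C, hC⟩ := h.exists_φ_le (b := t) hs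
  have hcont (i : Fin N) : ContinuousOn (x i) (Icc s t) :=
    (h.x_continuousOn i).mono fun u hu => mem_Ici.2 (le_trans hs hu.1)
  refine ciSup_apply_le_of_sub_le_integral (C := C) hst hcont fun i w z hw hwz hz => ?_
  have hw0 : (0 : ℝ) ≤ w := le_trans hs hw
  rw [h.sub_eq_integral i hw0 (hw0.trans hwz)]
  refine intervalIntegral.integral_mono_on hwz
    (h.intervalIntegrable_velocity i hw0 (hw0.trans hwz))
    ((continuousOn_const.mul ((continuousOn_ciSup_apply hcont).sub (hcont i))).mono
      (Icc_subset_Icc hw hz) |>.intervalIntegrable_of_Icc hwz) fun u hu => ?_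
  exact h.velocity_le (hw0.trans hu.1) (hC u ⟨hw.trans hu.1, hu.2.trans hz⟩ i)

theorem IsSolution.minState_monotoneOn (h : IsSolution φ M x) :
    MonotoneOn (minState x) (Ici 0) := by
  intro s hs t ht hst
  have := h.neg.maxState_antitoneOn hs ht hst
  rw [maxState_neg, maxState_neg] at this
  linarith

theorem IsSolution.abs_sub_le (h : IsSolution φ M x) {t : ℝ} (ht : 0 ≤ t) (i j : Fin N) :
    |x i t - x j t| ≤ maxState x 0 - minState x 0 := by
  have hS := h.maxState_antitoneOn self_mem_Ici ht ht
  have hI := h.minState_monotoneOn self_mem_Ici ht ht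
  rw [abs_sub_le_iff]
  constructor <;> linarith [le_maxState (x := x) i t, le_maxState (x := x) j t,
    minState_le (x := x) i t, minState_le (x := x) j t]

theorem IsSolution.φ_mem_Icc (h : IsSolution φ M x) {t : ℝ} (ht : 0 ≤ t) (i j : Fin N) :
    φ |x i t - x j t| ∈ Icc (sInf (φ '' Icc 0 (maxState x 0 - minState x 0)))
      (sSup (φ '' Icc 0 (maxState x 0 - minState x 0))) := by
  have hK := isCompact_Icc.image_of_continuousOn
    (h.φ_continuousOn.mono (Icc_subset_Ici_self : Icc 0 (maxState x 0 - minState x 0) ⊆ _))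
  have hmem := mem_image_of_mem φ (show |x i t - x j t| ∈ Icc 0 (maxState x 0 - minState x 0)
    from ⟨abs_nonneg _, h.abs_sub_le ht i j⟩)
  exact ⟨csInf_le hK.bddBelow hmem, le_csSup hK.bddAbove hmem⟩

theorem IsSolution.exp_mul_le_sub_minState (h : IsSolution φ M x) {L t₀ s t : ℝ}
    (hL : ∀ u, 0 ≤ u → ∀ i j, φ |x i u - x j u| ≤ L) (ht₀ : 0 ≤ t₀) (hs : t₀ ≤ s) (hst : s ≤ t)
    (j : Fin N) :
    exp (-L * (t - s)) * (x j s - minState x t₀) ≤ x j t - minState x t₀ := by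
  set m := minState x t₀
  have hL0 : 0 ≤ L := (h.φ_nonneg _ (abs_nonneg _)).trans (hL 0 le_rfl j j)
  have hs0 : 0 ≤ s := ht₀.trans hs
  have hgron := le_exp_mul_of_sub_le_integral (f := fun u => m - x j u) (K := -L) hst
    (continuousOn_const.sub ((h.x_continuousOn j).mono fun u hu => mem_Ici.2 (hs0.trans hu.1)))
    fun w z hw hwz hz => ?_
  · linarith
  have hw0 : 0 ≤ w := hs0.trans hw
  have hmono : ∫ u in w..z, L * (m - x j u) ≤ ∫ u in w..z, velocity φ M x j u :=
    intervalIntegral.integral_mono_on hwz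
      ((continuousOn_const.mul (continuousOn_const.sub ((h.x_continuousOn j).mono
        fun u hu => mem_Ici.2 (hw0.trans hu.1)))).intervalIntegrable_of_Icc hwz)
      (h.intervalIntegrable_velocity j hw0 (hw0.trans hwz)) fun u hu =>
        (mul_le_mul_of_nonneg_left (sub_le_sub_right (h.minState_monotoneOn ht₀
          (hw0.trans hu.1) (hs.trans (hw.trans hu.1))) _) hL0).trans
        (h.le_velocity (hw0.trans hu.1) (hL u (hw0.trans hu.1) j))
  have hinc := h.sub_eq_integral j hw0 (hw0.trans hwz)
  simp only [neg_mul, intervalIntegral.integral_neg]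
  linarith

theorem IsSolution.mul_integral_sub_le_sub (h : IsSolution φ M x) {Kmin Kmax c e : ℝ}
    (hφ : ∀ u, 0 ≤ u → ∀ i j, φ |x i u - x j u| ∈ Icc Kmin Kmax) (hKmin : 0 ≤ Kmin) (hc : 0 ≤ c)
    {j k : Fin N} {t₀ t₁ : ℝ} (ht₀ : 0 ≤ t₀) (ht₀₁ : t₀ ≤ t₁)
    (hgap : ∀ s ∈ Icc t₀ t₁, x j s - minState x s ≤ e ∧ c ≤ x k s - x j s) :
    Kmin * c / N * (∫ s in t₀..t₁, M j k s) - Kmax * e * (t₁ - t₀) ≤ x j t₁ - x j t₀ := by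
  have hKmax : 0 ≤ Kmax := hKmin.trans ((hφ 0 le_rfl j j).1.trans (hφ 0 le_rfl j j).2)
  have hpt : ∀ s ∈ Icc t₀ t₁, Kmin * c / N * M j k s - Kmax * e ≤ velocity φ M x j s := by
    intro s hs
    have hs0 : 0 ≤ s := ht₀.trans hs.1
    have hM := h.M_mem_Icc j k s hs0
    have hpull : M j k s * Kmin * c ≤ M j k s * φ |x j s - x k s| * (x k s - x j s) :=
      mul_le_mul (mul_le_mul_of_nonneg_left (hφ s hs0 j k).1 hM.1) (hgap s hs).2 hc
        (h.weight_mem_Icc hs0 le_rfl).1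
    have hv := h.inv_mul_add_le_velocity k hs0 fun q => (hφ s hs0 j q).2
    have hlag : Kmax * -e ≤ Kmax * (minState x s - x j s) :=
      mul_le_mul_of_nonneg_left (by linarith [(hgap s hs).1]) hKmax
    calc Kmin * c / N * M j k s - Kmax * e = (N : ℝ)⁻¹ * (M j k s * Kmin * c) + Kmax * -e := by
          ring
      _ ≤ (N : ℝ)⁻¹ * (M j k s * φ |x j s - x k s| * (x k s - x j s))
            + Kmax * (minState x s - x j s) :=
          add_le_add (mul_le_mul_of_nonneg_left hpull (inv_nonneg.2 (Nat.cast_nonneg N))) hlag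
      _ ≤ velocity φ M x j s := hv
  have hMint := h.intervalIntegrable_M j k ht₀ (ht₀.trans ht₀₁)
  rw [h.sub_eq_integral j ht₀ (ht₀.trans ht₀₁)]
  calc Kmin * c / N * (∫ s in t₀..t₁, M j k s) - Kmax * e * (t₁ - t₀)
      = ∫ s in t₀..t₁, (Kmin * c / N * M j k s - Kmax * e) := by
        rw [intervalIntegral.integral_sub (hMint.const_mul _) intervalIntegrable_const,
          intervalIntegral.integral_const_mul, intervalIntegral.integral_const, smul_eq_mul]
        ring
    _ ≤ ∫ s in t₀..t₁, velocity φ M x j s :=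
      intervalIntegral.integral_mono_on ht₀₁ ((hMint.const_mul _).sub intervalIntegrable_const)
        (h.intervalIntegrable_velocity j ht₀ (ht₀.trans ht₀₁)) hpt

theorem IsSolution.minState_add_contractionRate_mul_le (h : IsSolution φ M x)
    {Kmin Kmax T μ : ℝ} (hφ : ∀ u, 0 ≤ u → ∀ i j, φ |x i u - x j u| ∈ Icc Kmin Kmax)
    (hKmin : 0 ≤ Kmin) (hT : 0 ≤ T) (hμ : 0 ≤ μ) {j k : Fin N} {t₀ : ℝ} (ht₀ : 0 ≤ t₀)
    (hjk : μ ≤ ∫ s in t₀..t₀ + T, M j k s) (hk : maxState x t₀ + minState x t₀ ≤ 2 * x k t₀) :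
    minState x t₀ + contractionRate N μ T Kmin Kmax * (maxState x t₀ - minState x t₀)
      ≤ x j (t₀ + T) := by
  set m := minState x t₀
  set Δ := maxState x t₀ - m
  have hΔ : 0 ≤ Δ := sub_nonneg.2 ((minState_le j t₀).trans (le_maxState j t₀))
  have hN : (0 : ℝ) < N := Nat.cast_pos.2 (NeZero.pos N)
  have hKmax : 0 ≤ Kmax := hKmin.trans ((hφ 0 le_rfl j j).1.trans (hφ 0 le_rfl j j).2)
  have hNT : 0 < N * (1 + Kmax * T) := mul_pos hN (by nlinarith)
  have hden : 0 < N * (1 + Kmax * T) + μ * Kmin :=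
    add_pos_of_pos_of_nonneg hNT (mul_nonneg hμ hKmin)
  set γ := μ * Kmin / (N * (1 + Kmax * T) + μ * Kmin)
  have hγ : γ ≤ 1 := div_le_one_of_le₀ (by linarith) hden.le
  set A := exp (-Kmax * T) * (Δ / 2)
  set θ := γ * A
  have hdecay (i : Fin N) {s t : ℝ} (hs : t₀ ≤ s) (hst : s ≤ t) (ht : t ≤ t₀ + T) :
      exp (-Kmax * T) * (x i s - m) ≤ x i t - m :=
    (mul_le_mul_of_nonneg_right (exp_le_exp.2 (by nlinarith)) (sub_nonneg.2
      ((h.minState_monotoneOn ht₀ (ht₀.trans hs) hs).trans (minState_le i s)))).trans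
      (h.exp_mul_le_sub_minState (fun u hu i j => (hφ u hu i j).2) ht₀ hs hst i)
  have hk_far : ∀ s ∈ Icc t₀ (t₀ + T), A ≤ x k s - m := fun s hs =>
    (mul_le_mul_of_nonneg_left (by linarith) (exp_pos _).le).trans (hdecay k le_rfl hs.1 hs.2)
  -- either `j` gets `θ` above the old minimum at some time, or `k` pulls it up by `θ`
  obtain ⟨t₁, ht₁, hθ⟩ : ∃ t₁ ∈ Icc t₀ (t₀ + T), θ ≤ x j t₁ - m := by
    by_contra! hnear
    have hθA : θ ≤ A := mul_le_of_le_one_left (by positivity) hγ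
    have hgain := h.mul_integral_sub_le_sub (j := j) (k := k) (c := A - θ) (e := θ) hφ hKmin
      (sub_nonneg.2 hθA) ht₀ (le_add_of_nonneg_right hT) fun s hs =>
        ⟨by linarith [hnear s hs, h.minState_monotoneOn ht₀ (ht₀.trans hs.1) hs.1],
          by linarith [hnear s hs, hk_far s hs]⟩
    have hid : Kmin * (A - θ) / N * μ - Kmax * θ * (t₀ + T - t₀) = θ := by
      simp only [θ, γ]
      field_simp
      ring
    have hμM := mul_le_mul_of_nonneg_left hjk
      (div_nonneg (mul_nonneg hKmin (sub_nonneg.2 hθA)) hN.le)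
    linarith [hnear (t₀ + T) ⟨le_add_of_nonneg_right hT, le_rfl⟩, minState_le (x := x) j t₀]
  have hrate : contractionRate N μ T Kmin Kmax * Δ = exp (-Kmax * T) * θ := by
    rw [contractionRate, show -(2 * Kmax * T) = -Kmax * T + -Kmax * T by ring, exp_add]
    simp only [θ, γ, A]
    field_simp
  calc m + contractionRate N μ T Kmin Kmax * Δ = m + exp (-Kmax * T) * θ := by rw [hrate]
    _ ≤ m + exp (-Kmax * T) * (x j t₁ - m) := by gcongr
    _ ≤ x j (t₀ + T) := by linarith [hdecay j ht₁.1 ht₁.2 le_rfl]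

theorem IsSolution.maxState_sub_minState_add_le (h : IsSolution φ M x) {Kmin Kmax T μ : ℝ}
    (hφ : ∀ u, 0 ≤ u → ∀ i j, φ |x i u - x j u| ∈ Icc Kmin Kmax)
    (hKmin : 0 ≤ Kmin) (hT : 0 ≤ T) (hμ : 0 ≤ μ) {t₀ : ℝ} (ht₀ : 0 ≤ t₀)
    (hISC : ∀ i j, ∃ k, μ ≤ min (∫ s in t₀..t₀ + T, M i k s) (∫ s in t₀..t₀ + T, M j k s)) :
    maxState x (t₀ + T) - minState x (t₀ + T)
      ≤ (1 - contractionRate N μ T Kmin Kmax) * (maxState x t₀ - minState x t₀) := by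
  have ht : 0 ≤ t₀ + T := add_nonneg ht₀ hT
  obtain ⟨i, hi⟩ := exists_maxState_eq (x := x) (t₀ + T)
  obtain ⟨j, hj⟩ := exists_minState_eq (x := x) (t₀ + T)
  obtain ⟨k, hk⟩ := hISC i j
  obtain ⟨hik, hjk⟩ := le_min_iff.1 hk
  have hS := h.maxState_antitoneOn ht₀ ht (le_add_of_nonneg_right hT)
  have hI := h.minState_monotoneOn ht₀ ht (le_add_of_nonneg_right hT)
  rw [← hi, ← hj]
  rcases le_total (maxState x t₀ + minState x t₀) (2 * x k t₀) with hup | hdown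
  · have := h.minState_add_contractionRate_mul_le hφ hKmin hT hμ ht₀ hjk hup
    linarith
  · -- the mirror image `-x` has `k` in its upper half, and `i` plays the role of `j`
    have hφ' : ∀ u, 0 ≤ u → ∀ p q, φ |(-x) p u - (-x) q u| ∈ Icc Kmin Kmax := fun u hu p q => by
      simpa only [Pi.neg_apply, neg_sub_neg, abs_sub_comm] using hφ u hu p q
    have := h.neg.minState_add_contractionRate_mul_le hφ' hKmin hT hμ ht₀ hik
      (by simp only [maxState_neg, minState_neg, Pi.neg_apply]; linarith)
    simp only [maxState_neg, minState_neg, Pi.neg_apply] at this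
    linarith

end NeZero

end CoopSystem

open CoopSystem in
/-- Explicit exponential decay of the diameter for a
solution of the first-order cooperative system with communication failures
(fixed scaling) on the real line, under the Integral Scrambling Coefficient
condition on the family of weights. -/
theorem diameter_decay_ISC
    (N : ℕ) (hN : 2 ≤ N)
    (φ : ℝ → ℝ)
    (hφ_lip : ∃ K : NNReal, LipschitzOnWith K φ (Ici 0))
    (hφ_pos : ∀ r : ℝ, 0 ≤ r → 0 < φ r)
    (M : Fin N → Fin N → ℝ → ℝ)
    (hM_meas : ∀ i j, Measurable (M i j))
    (hM_range : ∀ i j, ∀ t : ℝ, 0 ≤ t → M i j t ∈ Icc (0:ℝ) 1)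
    (x : Fin N → ℝ → ℝ)
    (hx_cont : ∀ i, ContinuousOn (x i) (Ici 0))
    (hx_sol : ∀ i, ∀ t : ℝ, 0 ≤ t → x i t = x i 0 +
      ∫ s in (0:ℝ)..t,
        (N : ℝ)⁻¹ * ∑ j, M i j s * φ |x i s - x j s| * (x j s - x i s))
    (T μ : ℝ) (hT : 0 < T) (hμ : 0 < μ)
    (hISC : ∀ i j, ∃ k, ∀ t : ℝ, 0 ≤ t →
      μ ≤ min (∫ s in t..(t + T), M i k s) (∫ s in t..(t + T), M j k s))
    (D : ℝ → ℝ) (hD : ∀ t, D t = ⨆ i, ⨆ j, |x i t - x j t|)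
    (φmin φmax : ℝ)
    (hφmin : φmin = sInf (φ '' Icc 0 (D 0)))
    (hφmax : φmax = sSup (φ '' Icc 0 (D 0)))
    (Kmin Kmax : ℝ) (hKmin : Kmin = φmin) (hKmax : Kmax = φmax)
    (γtilde : ℝ)
    (hγtilde : γtilde = μ * Kmin / (2 * ((N : ℝ) * (1 + Kmax * T) + μ * Kmin))) :
    ∀ n : ℕ, D ((n : ℝ) * T) ≤ (1 - Real.exp (-(2 * Kmax * T)) * γtilde) ^ n * D 0 := by
  have : NeZero N := ⟨by omega⟩
  have h : IsSolution φ M x := ⟨hφ_lip.elim fun _ hK => hK.continuousOn,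
    fun r hr => (hφ_pos r hr).le, hM_meas, hM_range, hx_cont, hx_sol⟩
  have hD' (t : ℝ) : D t = maxState x t - minState x t := (hD t).trans (ciSup_ciSup_abs_sub_eq _)
  have hφ : ∀ u, 0 ≤ u → ∀ i j, φ |x i u - x j u| ∈ Icc Kmin Kmax := by
    rw [hKmin, hKmax, hφmin, hφmax, hD' 0]
    exact fun u hu => h.φ_mem_Icc hu
  have hKmin_pos : 0 < Kmin := by
    rw [hKmin, hφmin]
    refine isCompact_Icc.sInf_image_pos (nonempty_Icc.2 ?_)
      (h.φ_continuousOn.mono Icc_subset_Ici_self) fun r hr => hφ_pos r hr.1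
    exact (hD' 0).symm ▸ sub_nonneg.2 ((minState_le 0 0).trans (le_maxState 0 0))
  have hKmax_nonneg : 0 ≤ Kmax :=
    hKmin_pos.le.trans ((hφ 0 le_rfl 0 0).1.trans (hφ 0 le_rfl 0 0).2)
  subst hγtilde
  refine le_pow_mul_of_forall_le_mul hT.le
    (sub_nonneg.2 (contractionRate_le_one N hμ.le hT.le hKmin_pos.le hKmax_nonneg)) fun t ht => ?_
  rw [hD', hD']
  exact h.maxState_sub_minState_add_le hφ hKmin_pos.le hT.le hμ.le ht
    fun i j => (hISC i j).imp fun k hk => hk t ht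
end
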